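/- arXiv:0802.0195 — 5 statements merged into one kernel-verified Lean document; each statement's English description precedes it below -/
import Mathlib

section
/- For every n ≥ 1, each index i, and fixed v_1,…,v_n ∈ ℂ with v_k − v_m ∉ Γ and v_k − v_m − ħ ∉ Γ for all k ≠ m, the explicit elliptic weight-function expression Z^(n), viewed as a function of the single variable u_i, is entire and satisfies Z^(n)|_{u_i → u_i+1} = (−1)^n Z^(n) and Z^(n)|_{u_i → u_i+τ} = (−1)^n e^{2πi(λ+Σ_{j=1}^n v_j)} e^{−2πin u_i − πin τ} Z^(n); that is, it is an elliptic polynomial of degree n with character χ(1) = (−1)^n, χ(τ) = (−1)^n exp(2πi(λ+Σ_{j=1}^n v_j)). -/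
open Complex BigOperators

noncomputable section

/-- The lattice Γ = ℤ + τℤ. -/
def latticeGamma (τ : ℂ) : Set ℂ := {x : ℂ | ∃ a b : ℤ, x = (a : ℂ) + (b : ℂ) * τ}

/-- The explicit (weight-function) expression `Z^(n)(u_n,…,u_1; v_n,…,v_1; λ)`;
`u i`, `v j` denote `u_{i+1}`, `v_{j+1}`, and `σ` ranges over permutations. -/
def Zexp (θ : ℂ → ℂ) (hbar lam : ℂ) (n : ℕ) (u v : Fin n → ℂ) : ℂ :=
  (∏ k : Fin n, ∏ m : Fin n, if m < k then θ (v k - v m - hbar) / θ (v k - v m) else 1) *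
  ∑ σ : Equiv.Perm (Fin n),
    (∏ l : Fin n, ∏ l' : Fin n,
        if l < l' ∧ σ l' < σ l then
          θ (v (σ l) - v (σ l') + hbar) / θ (v (σ l) - v (σ l') - hbar) else 1) *
    (∏ k : Fin n, ∏ m : Fin n, if k < m then θ (u k - v (σ m)) else 1) *
    (∏ k : Fin n, ∏ m : Fin n, if m < k then θ (u k - v (σ m) + hbar) else 1) *
    (∏ m : Fin n, θ (u m - v (σ m) - lam - ((m : ℕ) : ℂ) * hbar) * θ hbar /
        θ (-lam - ((m : ℕ) : ℂ) * hbar))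

/-- The shift in the `m`-th theta factor of the part of a `σ`-summand of `Zexp`
depending on the variable `u i`. -/
def shiftC (hbar lam : ℂ) (n : ℕ) (i : Fin n) (v : Fin n → ℂ) (σ : Equiv.Perm (Fin n))
    (m : Fin n) : ℂ :=
  if i < m then -v (σ m)
  else if m < i then -v (σ m) + hbar
  else -v (σ i) - lam - ((i : ℕ) : ℂ) * hbar

/-- The `u i`-dependent part of a `σ`-summand of `Zexp`, as a function of `x = u i`. -/
def Sfun (θ : ℂ → ℂ) (hbar lam : ℂ) (n : ℕ) (i : Fin n) (v : Fin n → ℂ)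
    (σ : Equiv.Perm (Fin n)) (x : ℂ) : ℂ :=
  ∏ m : Fin n, θ (x + shiftC hbar lam n i v σ m)

lemma prod_split {M : Type*} [CommMonoid M] {n : ℕ} (i : Fin n) (f : Fin n → M) :
    ∏ k, f k = f i * ∏ k, (if k = i then 1 else f k) := by
  have h : ∀ k : Fin n, f k = (if k = i then f i else 1) * (if k = i then 1 else f k) := by
    intro k
    rcases eq_or_ne k i with h | h
    · subst h; simp
    · simp [h]
  rw [Finset.prod_congr rfl (fun k _ => h k), Finset.prod_mul_distrib]
  simp

lemma sum_shiftC (hbar lam : ℂ) (n : ℕ) (i : Fin n) (v : Fin n → ℂ) (σ : Equiv.Perm (Fin n)) :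
    ∑ m : Fin n, shiftC hbar lam n i v σ m = -(lam + ∑ j, v j) := by
  have h : ∀ m : Fin n, shiftC hbar lam n i v σ m =
      -v (σ m) + ((if m < i then hbar else 0) +
        (if m = i then -lam - ((i : ℕ) : ℂ) * hbar else 0)) := by
    intro m
    rcases lt_trichotomy m i with h | h | h
    · simp [shiftC, h, not_lt_of_gt h, ne_of_lt h]
    · subst h; simp [shiftC]; ring
    · simp [shiftC, h, not_lt_of_gt h, (ne_of_gt h)]
  rw [Finset.sum_congr rfl (fun m _ => h m), Finset.sum_add_distrib, Finset.sum_add_distrib]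
  have h1 : ∑ m : Fin n, -v (σ m) = -∑ j, v j := by
    rw [Finset.sum_neg_distrib]
    exact congrArg Neg.neg (Equiv.sum_comp σ v)
  have h2 : ∑ m : Fin n, (if m < i then hbar else 0) = ((i : ℕ) : ℂ) * hbar := by
    rw [← Finset.sum_filter]
    have : Finset.univ.filter (fun m : Fin n => m < i) = Finset.Iio i := by
      ext m; simp
    rw [Finset.sum_const, this, Fin.card_Iio, nsmul_eq_mul]
  have h3 : ∑ m : Fin n, (if m = i then -lam - ((i : ℕ) : ℂ) * hbar else 0) =
      -lam - ((i : ℕ) : ℂ) * hbar := by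
    simp
  rw [h1, h2, h3]; ring

lemma Sfun_diff (θ : ℂ → ℂ) (hθdiff : Differentiable ℂ θ) (hbar lam : ℂ) (n : ℕ) (i : Fin n)
    (v : Fin n → ℂ) (σ : Equiv.Perm (Fin n)) :
    Differentiable ℂ (fun x => Sfun θ hbar lam n i v σ x) := by
  unfold Sfun
  exact Differentiable.fun_finset_prod fun m _ => hθdiff.comp (differentiable_id.add_const _)

lemma Sfun_add_one (θ : ℂ → ℂ) (hθ1 : ∀ x : ℂ, θ (x + 1) = -θ x) (hbar lam : ℂ) (n : ℕ)
    (i : Fin n) (v : Fin n → ℂ) (σ : Equiv.Perm (Fin n)) (x : ℂ) :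
    Sfun θ hbar lam n i v σ (x + 1) = (-1 : ℂ) ^ n * Sfun θ hbar lam n i v σ x := by
  unfold Sfun
  have h : ∀ m : Fin n, θ (x + 1 + shiftC hbar lam n i v σ m) =
      (-1) * θ (x + shiftC hbar lam n i v σ m) := by
    intro m
    rw [show x + 1 + shiftC hbar lam n i v σ m = (x + shiftC hbar lam n i v σ m) + 1 by ring,
      hθ1]
    ring
  rw [Finset.prod_congr rfl (fun m _ => h m), Finset.prod_mul_distrib, Finset.prod_const]
  simp

lemma Sfun_add_tau (τ : ℂ) (θ : ℂ → ℂ)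
    (hθτ : ∀ x : ℂ, θ (x + τ) =
      -Complex.exp (-(2 * (Real.pi : ℂ) * Complex.I * x) - (Real.pi : ℂ) * Complex.I * τ) * θ x)
    (hbar lam : ℂ) (n : ℕ) (i : Fin n) (v : Fin n → ℂ) (σ : Equiv.Perm (Fin n)) (x : ℂ) :
    Sfun θ hbar lam n i v σ (x + τ) =
      (-1 : ℂ) ^ n * Complex.exp (2 * (Real.pi : ℂ) * Complex.I * (lam + ∑ j, v j)) *
        Complex.exp (-(2 * (Real.pi : ℂ) * Complex.I * (n : ℂ) * x) -
          (Real.pi : ℂ) * Complex.I * (n : ℂ) * τ) *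
        Sfun θ hbar lam n i v σ x := by
  unfold Sfun
  set s : Fin n → ℂ := shiftC hbar lam n i v σ with hs
  have h : ∀ m : Fin n, θ (x + τ + s m) =
      (-1) * Complex.exp ((-(2 * (Real.pi : ℂ) * Complex.I * x) - (Real.pi : ℂ) * Complex.I * τ)
        + (-(2 * (Real.pi : ℂ) * Complex.I)) * s m) * θ (x + s m) := by
    intro m
    rw [show x + τ + s m = (x + s m) + τ by ring, hθτ (x + s m)]
    rw [show -(2 * (Real.pi : ℂ) * Complex.I * (x + s m)) - (Real.pi : ℂ) * Complex.I * τ =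
      (-(2 * (Real.pi : ℂ) * Complex.I * x) - (Real.pi : ℂ) * Complex.I * τ)
        + (-(2 * (Real.pi : ℂ) * Complex.I)) * s m by ring]
    ring
  rw [Finset.prod_congr rfl (fun m _ => h m), Finset.prod_mul_distrib, Finset.prod_mul_distrib,
    Finset.prod_const, ← Complex.exp_sum]
  have hsum : ∑ m : Fin n, ((-(2 * (Real.pi : ℂ) * Complex.I * x) -
      (Real.pi : ℂ) * Complex.I * τ) + (-(2 * (Real.pi : ℂ) * Complex.I)) * s m) =
      (n : ℂ) * (-(2 * (Real.pi : ℂ) * Complex.I * x) - (Real.pi : ℂ) * Complex.I * τ)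
        + (-(2 * (Real.pi : ℂ) * Complex.I)) * (-(lam + ∑ j, v j)) := by
    rw [Finset.sum_add_distrib, Finset.sum_const, ← Finset.mul_sum, hs,
      sum_shiftC hbar lam n i v σ]
    simp [nsmul_eq_mul]
  rw [hsum]
  have hexp : Complex.exp ((n : ℂ) * (-(2 * (Real.pi : ℂ) * Complex.I * x) -
      (Real.pi : ℂ) * Complex.I * τ) + (-(2 * (Real.pi : ℂ) * Complex.I)) * (-(lam + ∑ j, v j)))
      = Complex.exp (2 * (Real.pi : ℂ) * Complex.I * (lam + ∑ j, v j)) *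
        Complex.exp (-(2 * (Real.pi : ℂ) * Complex.I * (n : ℂ) * x) -
          (Real.pi : ℂ) * Complex.I * (n : ℂ) * τ) := by
    rw [← Complex.exp_add]
    congr 1
    ring
  rw [hexp]
  simp only [Finset.card_univ, Fintype.card_fin]
  ring

lemma Zexp_decomp (θ : ℂ → ℂ) (hbar lam : ℂ) (n : ℕ) (i : Fin n) (u v : Fin n → ℂ) :
    ∃ c : Equiv.Perm (Fin n) → ℂ, ∀ x : ℂ,
      Zexp θ hbar lam n (Function.update u i x) v =
        ∑ σ : Equiv.Perm (Fin n), c σ * Sfun θ hbar lam n i v σ x := by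
  refine ⟨fun σ =>
    (∏ k : Fin n, ∏ m : Fin n, if m < k then θ (v k - v m - hbar) / θ (v k - v m) else 1) *
    ((∏ l : Fin n, ∏ l' : Fin n, if l < l' ∧ σ l' < σ l then
        θ (v (σ l) - v (σ l') + hbar) / θ (v (σ l) - v (σ l') - hbar) else 1) *
     (∏ k : Fin n, if k = i then 1 else
        ∏ m : Fin n, if k < m then θ (u k - v (σ m)) else 1) *
     (∏ k : Fin n, if k = i then 1 else
        ∏ m : Fin n, if m < k then θ (u k - v (σ m) + hbar) else 1) *
     (∏ m : Fin n, if m = i then 1 else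
        θ (u m - v (σ m) - lam - ((m : ℕ) : ℂ) * hbar) * θ hbar /
          θ (-lam - ((m : ℕ) : ℂ) * hbar)) *
     (θ hbar / θ (-lam - ((i : ℕ) : ℂ) * hbar))), fun x => ?_⟩
  unfold Zexp
  rw [Finset.mul_sum]
  refine Finset.sum_congr rfl fun σ _ => ?_
  have hP : (∏ k : Fin n, ∏ m : Fin n,
        if k < m then θ (Function.update u i x k - v (σ m)) else 1) =
      (∏ m : Fin n, if i < m then θ (x - v (σ m)) else 1) *
      (∏ k : Fin n, if k = i then 1 else
        ∏ m : Fin n, if k < m then θ (u k - v (σ m)) else 1) := by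
    rw [prod_split i]
    congr 1
    · simp
    · refine Finset.prod_congr rfl fun k _ => ?_
      rcases eq_or_ne k i with h | h
      · simp [h]
      · simp [h, Function.update_of_ne h]
  have hQ : (∏ k : Fin n, ∏ m : Fin n,
        if m < k then θ (Function.update u i x k - v (σ m) + hbar) else 1) =
      (∏ m : Fin n, if m < i then θ (x - v (σ m) + hbar) else 1) *
      (∏ k : Fin n, if k = i then 1 else
        ∏ m : Fin n, if m < k then θ (u k - v (σ m) + hbar) else 1) := by
    rw [prod_split i]
    congr 1
    · simp
    · refine Finset.prod_congr rfl fun k _ => ?_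
      rcases eq_or_ne k i with h | h
      · simp [h]
      · simp [h, Function.update_of_ne h]
  have hR : (∏ m : Fin n, θ (Function.update u i x m - v (σ m) - lam - ((m : ℕ) : ℂ) * hbar) *
        θ hbar / θ (-lam - ((m : ℕ) : ℂ) * hbar)) =
      (θ (x - v (σ i) - lam - ((i : ℕ) : ℂ) * hbar) * θ hbar /
        θ (-lam - ((i : ℕ) : ℂ) * hbar)) *
      (∏ m : Fin n, if m = i then 1 else
        θ (u m - v (σ m) - lam - ((m : ℕ) : ℂ) * hbar) * θ hbar /
          θ (-lam - ((m : ℕ) : ℂ) * hbar)) := by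
    rw [prod_split i]
    congr 1
    · simp
    · refine Finset.prod_congr rfl fun m _ => ?_
      rcases eq_or_ne m i with h | h
      · simp [h]
      · simp [h, Function.update_of_ne h]
  have hS : Sfun θ hbar lam n i v σ x =
      θ (x - v (σ i) - lam - ((i : ℕ) : ℂ) * hbar) *
      ((∏ m : Fin n, if i < m then θ (x - v (σ m)) else 1) *
       (∏ m : Fin n, if m < i then θ (x - v (σ m) + hbar) else 1)) := by
    unfold Sfun
    rw [prod_split i]
    congr 1
    · congr 1
      simp [shiftC]
      ring
    · rw [← Finset.prod_mul_distrib]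
      refine Finset.prod_congr rfl fun m _ => ?_
      rcases lt_trichotomy i m with h | h | h
      · have h2 : ¬m < i := not_lt_of_gt h
        have h3 : m ≠ i := ne_of_gt h
        simp [shiftC, h, h2, h3, sub_eq_add_neg]
      · subst h
        simp [shiftC]
      · have h2 : ¬i < m := not_lt_of_gt h
        have h3 : m ≠ i := ne_of_lt h
        simp only [shiftC, h2, if_false, h, if_true, h3, lt_irrefl, not_lt_of_gt h]
        rw [show x + (-v (σ m) + hbar) = x - v (σ m) + hbar by ring]
        simp [h3, not_lt_of_gt h]
  rw [hP, hQ, hR, hS]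
  ring

/-- as a function of each single variable `u_i`, the explicit elliptic
weight-function expression `Z^(n)` is an elliptic polynomial of degree `n` with
character `χ(1) = (-1)^n`, `χ(τ) = (-1)^n e^{2πi(λ + Σ_j v_j)}`. -/
theorem Zexp_elliptic_polynomial_in_u
    (τ : ℂ) (hτ : 0 < τ.im)
    (θ : ℂ → ℂ) (hθdiff : Differentiable ℂ θ)
    (hθ1 : ∀ x : ℂ, θ (x + 1) = -θ x)
    (hθτ : ∀ x : ℂ, θ (x + τ) =
      -Complex.exp (-(2 * (Real.pi : ℂ) * Complex.I * x) - (Real.pi : ℂ) * Complex.I * τ) * θ x)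
    (hθ0 : deriv θ 0 = 1)
    (hθzero : ∀ x : ℂ, θ x = 0 ↔ x ∈ latticeGamma τ)
    (hθsimple : ∀ x ∈ latticeGamma τ, deriv θ x ≠ 0)
    (hbar lam : ℂ) (hbar_nl : hbar ∉ latticeGamma τ)
    (hlam : ∀ k : ℤ, lam + (k : ℂ) * hbar ∉ latticeGamma τ)
    (n : ℕ) (hn : 1 ≤ n) (i : Fin n) (u v : Fin n → ℂ)
    (hv : ∀ k m : Fin n, k ≠ m →
      v k - v m ∉ latticeGamma τ ∧ v k - v m - hbar ∉ latticeGamma τ) :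
    Differentiable ℂ (fun x : ℂ => Zexp θ hbar lam n (Function.update u i x) v) ∧
    (∀ x : ℂ, Zexp θ hbar lam n (Function.update u i (x + 1)) v =
      (-1 : ℂ) ^ n * Zexp θ hbar lam n (Function.update u i x) v) ∧
    (∀ x : ℂ, Zexp θ hbar lam n (Function.update u i (x + τ)) v =
      (-1 : ℂ) ^ n * Complex.exp (2 * (Real.pi : ℂ) * Complex.I * (lam + ∑ j, v j)) *
        Complex.exp (-(2 * (Real.pi : ℂ) * Complex.I * (n : ℂ) * x) -
          (Real.pi : ℂ) * Complex.I * (n : ℂ) * τ) *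
        Zexp θ hbar lam n (Function.update u i x) v) := by
  obtain ⟨c, hc⟩ := Zexp_decomp θ hbar lam n i u v
  refine ⟨?_, ?_, ?_⟩
  · simp only [hc]
    exact Differentiable.fun_sum fun σ _ =>
      (Sfun_diff θ hθdiff hbar lam n i v σ).const_mul (c σ)
  · intro x
    rw [hc, hc, Finset.mul_sum]
    exact Finset.sum_congr rfl fun σ _ => by
      rw [Sfun_add_one θ hθ1 hbar lam n i v σ x]; ring
  · intro x
    rw [hc, hc, Finset.mul_sum]
    refine Finset.sum_congr rfl fun σ _ => ?_
    rw [Sfun_add_tau τ θ hθτ hbar lam n i v σ x]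
    ring

end
end

section
/- The explicit elliptic weight-function expression satisfies Izergin-type recursion: for every n ≥ 2 and all u_1,…,u_{n−1}, v_1,…,v_n ∈ ℂ with v_i − v_j ∉ Γ and v_i − v_j − ħ ∉ Γ for all i ≠ j, Z^(n)(v_n−ħ, u_{n−1},…,u_1; v_n, v_{n−1},…,v_1; λ) = [θ(λ+nħ)θ(ħ)/θ(λ+(n−1)ħ)] · ∏_{m=1}^{n−1} θ(v_n−v_m−ħ)θ(u_m−v_n) · Z^(n−1)(u_{n−1},…,u_1; v_{n−1},…,v_1; λ). -/
open Complex BigOperators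

noncomputable section

namespace ZexpAux



lemma lattice_zero (τ : ℂ) : (0:ℂ) ∈ latticeGamma τ := ⟨0, 0, by norm_num⟩

lemma lattice_neg {τ x : ℂ} (h : x ∈ latticeGamma τ) : -x ∈ latticeGamma τ := by
  obtain ⟨a, b, rfl⟩ := h; exact ⟨-a, -b, by push_cast; ring⟩

lemma lattice_sub {τ x y : ℂ} (hx : x ∈ latticeGamma τ) (hy : y ∈ latticeGamma τ) :
    x - y ∈ latticeGamma τ := by
  obtain ⟨a, b, rfl⟩ := hx; obtain ⟨c, d, rfl⟩ := hy
  exact ⟨a - c, b - d, by push_cast; ring⟩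

lemma lattice_small {τ : ℂ} (hτ : 0 < τ.im) {x : ℂ} (hx : x ∈ latticeGamma τ)
    (h : ‖x‖ < min τ.im 1) : x = 0 := by
  obtain ⟨a, b, rfl⟩ := hx
  have him : ((a:ℂ) + (b:ℂ)*τ).im = (b:ℝ) * τ.im := by
    simp [Complex.add_im, Complex.mul_im]
  have hb : b = 0 := by
    by_contra hb
    have h1 : (1:ℝ) ≤ |(b:ℝ)| := by exact_mod_cast Int.one_le_abs hb
    have h2 : |(b:ℝ)| * τ.im ≤ ‖(a:ℂ)+(b:ℂ)*τ‖ := by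
      calc |(b:ℝ)| * τ.im = |((a:ℂ)+(b:ℂ)*τ).im| := by
            rw [him, abs_mul, abs_of_pos hτ]
        _ ≤ _ := Complex.abs_im_le_norm _
    have h3 : ‖(a:ℂ)+(b:ℂ)*τ‖ < τ.im := lt_of_lt_of_le h (min_le_left _ _)
    nlinarith
  subst hb
  have ha : a = 0 := by
    by_contra ha
    have h1 : (1:ℝ) ≤ |(a:ℝ)| := by exact_mod_cast Int.one_le_abs ha
    have h2 : ‖(a:ℂ) + (0:ℤ) * τ‖ = |(a:ℝ)| := by
      push_cast; simp [Complex.norm_real]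
    have h3 : ‖(a:ℂ)+((0:ℤ):ℂ)*τ‖ < 1 := lt_of_lt_of_le h (min_le_right _ _)
    rw [h2] at h3; linarith
  subst ha; push_cast; ring

/-- The multiplier in the τ-quasi-periodicity. -/
def mult (τ x : ℂ) : ℂ :=
  -Complex.exp (-(2 * (Real.pi : ℂ) * Complex.I * x) - (Real.pi : ℂ) * Complex.I * τ)

lemma mult_ne_zero (τ x : ℂ) : mult τ x ≠ 0 :=
  neg_ne_zero.mpr (Complex.exp_ne_zero _)

lemma mult_diff (τ : ℂ) : Differentiable ℂ (mult τ) := by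
  unfold mult; fun_prop

lemma mult_mul (τ x : ℂ) : mult τ x * mult τ (-(x+τ)) = 1 := by
  unfold mult
  rw [neg_mul_neg, ← Complex.exp_add, show
    -(2 * (Real.pi : ℂ) * Complex.I * x) - (Real.pi : ℂ) * Complex.I * τ +
      (-(2 * (Real.pi : ℂ) * Complex.I * (-(x+τ))) - (Real.pi : ℂ) * Complex.I * τ) = 0 by ring,
    Complex.exp_zero]

/-- `d x = θ x + θ (-x)`, the function we show to vanish identically. -/
def dfun (θ : ℂ → ℂ) : ℂ → ℂ := fun x => θ x + θ (-x)

theorem theta_odd (τ : ℂ) (hτ : 0 < τ.im)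
    (θ : ℂ → ℂ) (hθdiff : Differentiable ℂ θ)
    (hθ1 : ∀ x : ℂ, θ (x + 1) = -θ x)
    (hθτ : ∀ x : ℂ, θ (x + τ) = mult τ x * θ x)
    (hθzero : ∀ x : ℂ, θ x = 0 ↔ x ∈ latticeGamma τ)
    (hθsimple : ∀ x ∈ latticeGamma τ, deriv θ x ≠ 0) :
    ∀ x : ℂ, θ (-x) = -θ x := by
  have hddiff : Differentiable ℂ (dfun θ) := by
    unfold dfun
    exact hθdiff.add (hθdiff.comp differentiable_neg)
  -- quasi-periodicity of d
  have hd1 : ∀ x, dfun θ (x + 1) = -dfun θ x := by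
    intro x
    have h2 := hθ1 (-(x+1))
    rw [show -(x+1)+1 = -x by ring] at h2
    show θ (x+1) + θ (-(x+1)) = -(θ x + θ (-x))
    rw [hθ1 x, h2]; ring
  have hdτ : ∀ x, dfun θ (x + τ) = mult τ x * dfun θ x := by
    intro x
    have h2 := hθτ (-(x+τ))
    rw [show -(x+τ)+τ = -x by ring] at h2
    have h3 : θ (-(x+τ)) = mult τ x * θ (-x) := by
      rw [h2, ← mul_assoc, mult_mul, one_mul]
    show θ (x+τ) + θ (-(x+τ)) = mult τ x * (θ x + θ (-x))
    rw [hθτ x, h3]; ring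
  -- d vanishes on the lattice
  have hdlat : ∀ p ∈ latticeGamma τ, dfun θ p = 0 := by
    intro p hp
    show θ p + θ (-p) = 0
    rw [(hθzero p).mpr hp, (hθzero (-p)).mpr (lattice_neg hp), add_zero]
  -- derivative relations
  have hd1' : ∀ x, deriv (dfun θ) (x + 1) = -deriv (dfun θ) x := by
    intro x
    have hfe : (fun y => dfun θ (y+1)) = fun y => -(dfun θ y) := funext hd1
    rw [← deriv_comp_add_const (dfun θ) 1 x, hfe, deriv.fun_neg]
  have hdτ' : ∀ x, dfun θ x = 0 →
      deriv (dfun θ) (x + τ) = mult τ x * deriv (dfun θ) x := by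
    intro x hx0
    have hfe : (fun y => dfun θ (y+τ)) = fun y => mult τ y * dfun θ y := funext hdτ
    have h1 : deriv (fun y => dfun θ (y+τ)) x = deriv (dfun θ) (x+τ) :=
      deriv_comp_add_const _ _ _
    have h2 : deriv (fun y => mult τ y * dfun θ y) x =
        deriv (mult τ) x * dfun θ x + mult τ x * deriv (dfun θ) x :=
      deriv_mul ((mult_diff τ).differentiableAt) (hddiff.differentiableAt)
    rw [← h1, hfe, h2, hx0, mul_zero, zero_add]
  have hd0' : deriv (dfun θ) 0 = 0 := by
    have hneg : DifferentiableAt ℂ (fun x : ℂ => θ (-x)) 0 :=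
      (hθdiff.differentiableAt).comp 0 (differentiable_neg.differentiableAt)
    have : deriv (dfun θ) 0 = deriv θ 0 + deriv (fun x : ℂ => θ (-x)) 0 := by
      unfold dfun
      exact deriv_add (hθdiff.differentiableAt) hneg
    rw [this, deriv_comp_neg (f := θ), neg_zero]
    ring
  -- derivative of d vanishes on the lattice
  have hstep1 : ∀ (a : ℤ) (x : ℂ), deriv (dfun θ) x = 0 → deriv (dfun θ) (x + a) = 0 := by
    intro a
    induction a using Int.induction_on with
    | zero => intro x h; simpa using h
    | succ k ih =>
        intro x h
        have h2 := ih x h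
        push_cast at h2 ⊢
        have h3 := hd1' (x + (k:ℂ))
        rw [h2, neg_zero] at h3
        rw [show x + ((k:ℂ) + 1) = x + (k:ℂ) + 1 by ring]
        exact h3
    | pred k ih =>
        intro x h
        have h2 := ih x h
        push_cast at h2 ⊢
        have h3 := hd1' (x + (-(k:ℂ)-1))
        rw [show x + (-(k:ℂ)-1) + 1 = x + -(k:ℂ) by ring] at h3
        rw [h2] at h3
        rw [show x + (-(k:ℂ)-1) = x + (-(k:ℂ)-1) by ring]
        exact neg_eq_zero.mp h3.symm
  have hbase : ∀ b : ℤ, deriv (dfun θ) ((b:ℂ)*τ) = 0 := by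
    intro b
    induction b using Int.induction_on with
    | zero => simpa using hd0'
    | succ k ih =>
        push_cast at ih ⊢
        have hl : ((k:ℂ)*τ) ∈ latticeGamma τ := ⟨0, k, by push_cast; ring⟩
        have h3 := hdτ' ((k:ℂ)*τ) (hdlat _ hl)
        rw [ih, mul_zero] at h3
        rw [show ((k:ℂ)+1)*τ = (k:ℂ)*τ + τ by ring]
        exact h3
    | pred k ih =>
        push_cast at ih ⊢
        have hl : ((-(k:ℂ)-1)*τ) ∈ latticeGamma τ := ⟨0, -(k:ℤ)-1, by push_cast; ring⟩
        have h3 := hdτ' ((-(k:ℂ)-1)*τ) (hdlat _ hl)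
        rw [show (-(k:ℂ)-1)*τ + τ = -(k:ℂ)*τ by ring] at h3
        rw [show -(k:ℂ)*τ = (-(k:ℂ))*τ by ring, ih] at h3
        exact (mul_eq_zero.mp h3.symm).resolve_left (mult_ne_zero τ _)
  have hdlat' : ∀ p ∈ latticeGamma τ, deriv (dfun θ) p = 0 := by
    rintro p ⟨a, b, rfl⟩
    have h := hstep1 a ((b:ℂ)*τ) (hbase b)
    rwa [show (b:ℂ)*τ + (a:ℂ) = (a:ℂ) + (b:ℂ)*τ by ring] at h
  -- the quotient g = d / θ
  set g : ℂ → ℂ := fun x => dfun θ x / θ x with hg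
  have hglat : ∀ p ∈ latticeGamma τ, g p = 0 := by
    intro p hp; simp only [hg]; rw [hdlat p hp, zero_div]
  have hgdiff : Differentiable ℂ g := by
    intro p
    by_cases hp : p ∈ latticeGamma τ
    · -- removable singularity at a lattice point
      have hε : (0:ℝ) < min τ.im 1 := lt_min hτ one_pos
      have honly : ∀ x ∈ Metric.ball p (min τ.im 1), x ≠ p → x ∉ latticeGamma τ := by
        intro x hx hxp hxl
        exact hxp (sub_eq_zero.mp
          (lattice_small hτ (lattice_sub hxl hp) (by rwa [← Complex.dist_eq])))
      have hD2 : DifferentiableAt ℂ (dslope (dslope (dfun θ) p) p) p := by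
        obtain ⟨q, hq⟩ := hddiff.analyticAt p
        exact hq.has_fpower_series_dslope_fslope.has_fpower_series_dslope_fslope.differentiableAt
      have hT : DifferentiableAt ℂ (dslope θ p) p := by
        obtain ⟨q, hq⟩ := (hθdiff.analyticAt p)
        exact hq.has_fpower_series_dslope_fslope.differentiableAt
      have hTne : dslope θ p p ≠ 0 := by
        rw [dslope_same]; exact hθsimple p hp
      have hRdiff : DifferentiableAt ℂ
          (fun x => (x - p) * dslope (dslope (dfun θ) p) p x / dslope θ p x) p := by
        exact ((differentiableAt_id.sub_const p).mul hD2).div hT hTne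
      have hEq : Set.EqOn g
          (fun x => (x - p) * dslope (dslope (dfun θ) p) p x / dslope θ p x)
          (Metric.ball p (min τ.im 1)) := by
        intro x hx
        by_cases hxp : x = p
        · subst hxp
          simp only [hg, sub_self, zero_mul, zero_div, hdlat x hp]
        · have hxl : x ∉ latticeGamma τ := honly x hx hxp
          have hθx : θ x ≠ 0 := fun h => hxl ((hθzero x).mp h)
          have hxps : x - p ≠ 0 := sub_ne_zero.mpr hxp
          have hTx : dslope θ p x = θ x / (x - p) := by
            rw [dslope_of_ne _ hxp, slope_def_field, (hθzero p).mpr hp, sub_zero]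
          have hD1x : dslope (dfun θ) p x = dfun θ x / (x - p) := by
            rw [dslope_of_ne _ hxp, slope_def_field, hdlat p hp, sub_zero]
          have hD2x : dslope (dslope (dfun θ) p) p x = dfun θ x / (x - p) ^ 2 := by
            rw [dslope_of_ne _ hxp, slope_def_field, hD1x, dslope_same, hdlat' p hp, sub_zero]
            rw [div_div, ← pow_two]
          simp only [hg, hTx, hD2x]
          field_simp [hxps, hθx]
        -- end
      exact hRdiff.congr_of_eventuallyEq
        (Filter.eventuallyEq_of_mem (Metric.ball_mem_nhds p hε) hEq)
    · have hθp : θ p ≠ 0 := fun h => hp ((hθzero p).mp h)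
      exact (hddiff.differentiableAt).div (hθdiff.differentiableAt) hθp
  -- periodicity of g
  have hg1 : ∀ x, g (x + 1) = g x := by
    intro x
    simp only [hg]
    rw [hd1 x, hθ1 x, neg_div_neg_eq]
  have hgτ : ∀ x, g (x + τ) = g x := by
    intro x
    simp only [hg]
    rw [hdτ x, hθτ x, mul_div_mul_left _ _ (mult_ne_zero τ x)]
  have hga : ∀ (a : ℤ) (x : ℂ), g (x + (a:ℂ)) = g x := by
    intro a
    induction a using Int.induction_on with
    | zero => intro x; simp
    | succ k ih =>
        intro x
        push_cast
        rw [show x + ((k:ℂ)+1) = (x + (k:ℂ)) + 1 by ring, hg1]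
        have := ih x; push_cast at this; exact this
    | pred k ih =>
        intro x
        push_cast
        have h1 := hg1 (x + (-(k:ℂ)-1))
        rw [show x + (-(k:ℂ)-1) + 1 = x + -(k:ℂ) by ring] at h1
        have h2 := ih x; push_cast at h2
        exact h1.symm.trans h2
  have hgb : ∀ (b : ℤ) (x : ℂ), g (x + (b:ℂ)*τ) = g x := by
    intro b
    induction b using Int.induction_on with
    | zero => intro x; simp
    | succ k ih =>
        intro x
        push_cast
        rw [show x + ((k:ℂ)+1)*τ = (x + (k:ℂ)*τ) + τ by ring, hgτ]
        have := ih x; push_cast at this; exact this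
    | pred k ih =>
        intro x
        push_cast
        have h1 := hgτ (x + (-(k:ℂ)-1)*τ)
        rw [show x + (-(k:ℂ)-1)*τ + τ = x + -(k:ℂ)*τ by ring] at h1
        have h2 := ih x; push_cast at h2
        exact h1.symm.trans h2
  -- boundedness of g via the fundamental domain
  have hK : IsCompact ((fun st : ℝ × ℝ => (st.1 : ℂ) + (st.2 : ℂ) * τ) ''
      (Set.Icc (0:ℝ) 1 ×ˢ Set.Icc (0:ℝ) 1)) := by
    apply (isCompact_Icc.prod isCompact_Icc).image
    exact (Complex.continuous_ofReal.comp continuous_fst).add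
      ((Complex.continuous_ofReal.comp continuous_snd).mul continuous_const)
  have hrange : Set.range g ⊆ g '' ((fun st : ℝ × ℝ => (st.1 : ℂ) + (st.2 : ℂ) * τ) ''
      (Set.Icc (0:ℝ) 1 ×ˢ Set.Icc (0:ℝ) 1)) := by
    rintro _ ⟨z, rfl⟩
    set t : ℝ := z.im / τ.im with ht
    set s : ℝ := z.re - t * τ.re with hs
    have hz : z = (s:ℂ) + (t:ℂ)*τ := by
      apply Complex.ext
      · simp [hs, Complex.add_re, Complex.mul_re, Complex.ofReal_re, Complex.ofReal_im]
      · simp only [Complex.add_im, Complex.mul_im, Complex.ofReal_re, Complex.ofReal_im,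
          Complex.ofReal_im]
        rw [ht, div_mul_cancel₀ _ hτ.ne']; ring
    refine ⟨((Int.fract s : ℝ) : ℂ) + ((Int.fract t : ℝ) : ℂ)*τ,
      ⟨(Int.fract s, Int.fract t),
        ⟨⟨Int.fract_nonneg s, (Int.fract_lt_one s).le⟩,
          ⟨Int.fract_nonneg t, (Int.fract_lt_one t).le⟩⟩, rfl⟩, ?_⟩
    have h1 := hga ⌊s⌋ (((Int.fract s : ℝ) : ℂ) + ((Int.fract t : ℝ) : ℂ)*τ + (⌊t⌋:ℂ)*τ)
    have h2 := hgb ⌊t⌋ (((Int.fract s : ℝ) : ℂ) + ((Int.fract t : ℝ) : ℂ)*τ)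
    have harg : ((Int.fract s : ℝ) : ℂ) + ((Int.fract t : ℝ) : ℂ)*τ + (⌊t⌋:ℂ)*τ + (⌊s⌋:ℂ) = z := by
      rw [hz]
      have hfs : ((Int.fract s : ℝ) : ℂ) = (s:ℂ) - (⌊s⌋:ℂ) := by
        rw [Int.fract]; push_cast; ring
      have hft : ((Int.fract t : ℝ) : ℂ) = (t:ℂ) - (⌊t⌋:ℂ) := by
        rw [Int.fract]; push_cast; ring
      rw [hfs, hft]; ring
    rw [harg] at h1
    rw [h2] at h1
    exact h1.symm
  have hbdd : Bornology.IsBounded (Set.range g) :=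
    ((hK.image hgdiff.continuous).isBounded).subset hrange
  have hg0 : g 0 = 0 := hglat 0 (lattice_zero τ)
  have hgall : ∀ z, g z = 0 := fun z => by
    rw [hgdiff.apply_eq_apply_of_bounded hbdd z 0, hg0]
  -- conclude
  intro x
  have hdx : dfun θ x = 0 := by
    by_cases hx : x ∈ latticeGamma τ
    · exact hdlat x hx
    · have hθx : θ x ≠ 0 := fun h => hx ((hθzero x).mp h)
      have := hgall x
      simp only [hg] at this
      exact (div_eq_zero_iff.mp this).resolve_right hθx
  have : θ x + θ (-x) = 0 := hdx
  linear_combination this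



def extLast {n : ℕ} (π : Equiv.Perm (Fin n)) : Equiv.Perm (Fin (n+1)) :=
  (finSuccEquivLast.symm.permCongr) π.optionCongr

@[simp] lemma extLast_castSucc {n : ℕ} (π : Equiv.Perm (Fin n)) (i : Fin n) :
    extLast π i.castSucc = (π i).castSucc := by
  simp [extLast, Equiv.permCongr_apply]

@[simp] lemma extLast_last {n : ℕ} (π : Equiv.Perm (Fin n)) :
    extLast π (Fin.last n) = Fin.last n := by
  simp [extLast, Equiv.permCongr_apply]

lemma extLast_eq {n : ℕ} (σ : Equiv.Perm (Fin (n+1))) (hσ : σ (Fin.last n) = Fin.last n) :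
    extLast (Equiv.removeNone (finSuccEquivLast.permCongr σ)) = σ := by
  apply Equiv.ext
  intro x
  refine Fin.lastCases ?_ ?_ x
  · rw [extLast_last, hσ]
  · intro i
    rw [extLast_castSucc]
    have hne : σ i.castSucc ≠ Fin.last n := by
      intro h
      exact (Fin.castSucc_lt_last i).ne (σ.injective (h.trans hσ.symm))
    obtain ⟨j, hj⟩ := Fin.exists_castSucc_eq.mpr hne
    have hes : (finSuccEquivLast.permCongr σ) (some i) = some j := by
      simp only [Equiv.permCongr_apply, Equiv.symm_symm, finSuccEquivLast_symm_some]
      rw [← hj, finSuccEquivLast_castSucc]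
    have h2 := Equiv.removeNone_some (e := finSuccEquivLast.permCongr σ) ⟨j, hes⟩
    rw [hes] at h2
    rw [Option.some_inj.mp h2, hj]

lemma removeNone_extLast {n : ℕ} (π : Equiv.Perm (Fin n)) :
    Equiv.removeNone (finSuccEquivLast.permCongr (extLast π)) = π := by
  apply Equiv.ext
  intro i
  have hes : (finSuccEquivLast.permCongr (extLast π)) (some i) = some (π i) := by
    simp only [Equiv.permCongr_apply, Equiv.symm_symm, finSuccEquivLast_symm_some,
      extLast_castSucc, finSuccEquivLast_castSucc]
  have h2 := Equiv.removeNone_some (e := finSuccEquivLast.permCongr (extLast π)) ⟨π i, hes⟩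
  rw [hes] at h2
  exact (Option.some_inj.mp h2)

lemma perm_sum {n : ℕ} (F : Equiv.Perm (Fin (n+1)) → ℂ)
    (h0 : ∀ σ : Equiv.Perm (Fin (n+1)), σ (Fin.last n) ≠ Fin.last n → F σ = 0) :
    ∑ σ : Equiv.Perm (Fin (n+1)), F σ = ∑ π : Equiv.Perm (Fin n), F (extLast π) := by
  classical
  rw [← Finset.sum_filter_of_ne (p := fun σ : Equiv.Perm (Fin (n+1)) =>
    σ (Fin.last n) = Fin.last n) (fun σ _ h => by by_contra hc; exact h (h0 σ hc))]
  refine (Finset.sum_bij' (i := fun (π : Equiv.Perm (Fin n)) (_ : π ∈ Finset.univ) => extLast π)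
    (j := fun σ _ => Equiv.removeNone (finSuccEquivLast.permCongr σ))
    ?_ ?_ ?_ ?_ ?_).symm
  · intro π _
    simp [Finset.mem_filter]
  · intro σ _
    exact Finset.mem_univ _
  · intro π _
    exact removeNone_extLast π
  · intro σ hσ
    exact extLast_eq σ (Finset.mem_filter.mp hσ).2
  · intro π _
    rfl

lemma prod_split {n : ℕ} (f : Fin (n+1) → Fin (n+1) → ℂ) :
    (∏ k : Fin (n+1), ∏ m : Fin (n+1), f k m) =
    (∏ k : Fin n, ∏ m : Fin n, f k.castSucc m.castSucc) *
      ((∏ m : Fin n, f (Fin.last n) m.castSucc) *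
        ((∏ k : Fin n, f k.castSucc (Fin.last n)) * f (Fin.last n) (Fin.last n))) := by
  rw [Fin.prod_univ_castSucc (f := fun k => ∏ m, f k m),
    Fin.prod_univ_castSucc (f := fun m => f (Fin.last n) m)]
  have h : ∀ k : Fin n, (∏ m : Fin (n+1), f k.castSucc m) =
      (∏ m : Fin n, f k.castSucc m.castSucc) * f k.castSucc (Fin.last n) :=
    fun k => Fin.prod_univ_castSucc _
  rw [Finset.prod_congr rfl (fun k _ => h k), Finset.prod_mul_distrib]
  ring


/-- The summand of `Zexp` for a fixed permutation. -/
def Zterm (θ : ℂ → ℂ) (hbar lam : ℂ) (n : ℕ) (u v : Fin n → ℂ)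
    (σ : Equiv.Perm (Fin n)) : ℂ :=
  (∏ l : Fin n, ∏ l' : Fin n,
      if l < l' ∧ σ l' < σ l then
        θ (v (σ l) - v (σ l') + hbar) / θ (v (σ l) - v (σ l') - hbar) else 1) *
  (∏ k : Fin n, ∏ m : Fin n, if k < m then θ (u k - v (σ m)) else 1) *
  (∏ k : Fin n, ∏ m : Fin n, if m < k then θ (u k - v (σ m) + hbar) else 1) *
  (∏ m : Fin n, θ (u m - v (σ m) - lam - ((m : ℕ) : ℂ) * hbar) * θ hbar /
      θ (-lam - ((m : ℕ) : ℂ) * hbar))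

lemma Zterm_ext {n : ℕ} (θ : ℂ → ℂ) (hbar lam : ℂ) (u : Fin n → ℂ)
    (v : Fin (n+1) → ℂ) (π : Equiv.Perm (Fin n)) :
    Zterm θ hbar lam (n+1) (Fin.snoc u (v (Fin.last n) - hbar)) v (extLast π) =
      (∏ a : Fin n, θ (u a - v (Fin.last n))) *
        (∏ b : Fin n, θ (v (Fin.last n) - v (Fin.castSucc b))) *
        (θ (v (Fin.last n) - hbar - v (Fin.last n) - lam - (n : ℂ) * hbar) * θ hbar /
          θ (-lam - (n : ℂ) * hbar)) *
        Zterm θ hbar lam n u (fun i => v i.castSucc) π := by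
  have hnl : ∀ x : Fin (n+1), ¬ (Fin.last n < x) := fun x => not_lt.mpr (Fin.le_last x)
  simp only [Zterm]
  have e1 : (∏ l : Fin (n+1), ∏ l' : Fin (n+1),
      if l < l' ∧ extLast π l' < extLast π l then
        θ (v (extLast π l) - v (extLast π l') + hbar) /
          θ (v (extLast π l) - v (extLast π l') - hbar) else 1) =
      ∏ l : Fin n, ∏ l' : Fin n,
        if l < l' ∧ π l' < π l then
          θ (v (Fin.castSucc (π l)) - v (Fin.castSucc (π l')) + hbar) /
            θ (v (Fin.castSucc (π l)) - v (Fin.castSucc (π l')) - hbar) else 1 := by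
    rw [prod_split]
    simp [hnl, Fin.castSucc_lt_castSucc_iff]
  have e2 : (∏ k : Fin (n+1), ∏ m : Fin (n+1),
      if k < m then θ ((Fin.snoc u (v (Fin.last n) - hbar) : Fin (n+1) → ℂ) k - v (extLast π m)) else 1) =
      (∏ k : Fin n, ∏ m : Fin n,
        if k < m then θ (u k - v (Fin.castSucc (π m))) else 1) *
        ∏ a : Fin n, θ (u a - v (Fin.last n)) := by
    rw [prod_split]
    simp [hnl, Fin.castSucc_lt_castSucc_iff, Fin.castSucc_lt_last]
  have e3 : (∏ k : Fin (n+1), ∏ m : Fin (n+1),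
      if m < k then θ ((Fin.snoc u (v (Fin.last n) - hbar) : Fin (n+1) → ℂ) k - v (extLast π m) + hbar) else 1) =
      (∏ k : Fin n, ∏ m : Fin n,
        if m < k then θ (u k - v (Fin.castSucc (π m)) + hbar) else 1) *
        ∏ b : Fin n, θ (v (Fin.last n) - v (Fin.castSucc b)) := by
    rw [prod_split]
    simp only [hnl, Fin.castSucc_lt_castSucc_iff, Fin.castSucc_lt_last, extLast_castSucc,
      extLast_last, Fin.snoc_castSucc, Fin.snoc_last, if_true, lt_irrefl, if_false,
      and_false, false_and, Finset.prod_const_one, mul_one, one_mul, lt_self_iff_false]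
    have h4 : (∏ b : Fin n, θ (v (Fin.last n) - hbar - v (Fin.castSucc (π b)) + hbar)) =
        ∏ b : Fin n, θ (v (Fin.last n) - v (Fin.castSucc b)) := by
      rw [Finset.prod_congr rfl (fun b _ => by
        rw [show v (Fin.last n) - hbar - v (Fin.castSucc (π b)) + hbar =
          v (Fin.last n) - v (Fin.castSucc (π b)) by ring])]
      exact Equiv.prod_comp π (fun j => θ (v (Fin.last n) - v (Fin.castSucc j)))
    rw [h4]
  have e4 : (∏ m : Fin (n+1),
      θ ((Fin.snoc u (v (Fin.last n) - hbar) : Fin (n+1) → ℂ) m - v (extLast π m) - lam -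
          ((m : ℕ) : ℂ) * hbar) * θ hbar / θ (-lam - ((m : ℕ) : ℂ) * hbar)) =
      (∏ m : Fin n, θ (u m - v (Fin.castSucc (π m)) - lam - ((m : ℕ) : ℂ) * hbar) *
          θ hbar / θ (-lam - ((m : ℕ) : ℂ) * hbar)) *
        (θ (v (Fin.last n) - hbar - v (Fin.last n) - lam - (n : ℂ) * hbar) * θ hbar /
          θ (-lam - (n : ℂ) * hbar)) := by
    rw [Fin.prod_univ_castSucc]
    simp
  rw [e1, e2, e3, e4]
  ring

end ZexpAux

/-- the explicit elliptic weight-function expression satisfies the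
Izergin-type recursion.  Here the larger size is `n + 1` (with `n ≥ 1`), and the
topmost `u`-variable `u_{n+1}` is set equal to `v_{n+1} - ħ`. -/
theorem Zexp_recursion
    (τ : ℂ) (hτ : 0 < τ.im)
    (θ : ℂ → ℂ) (hθdiff : Differentiable ℂ θ)
    (hθ1 : ∀ x : ℂ, θ (x + 1) = -θ x)
    (hθτ : ∀ x : ℂ, θ (x + τ) =
      -Complex.exp (-(2 * (Real.pi : ℂ) * Complex.I * x) - (Real.pi : ℂ) * Complex.I * τ) * θ x)
    (hθ0 : deriv θ 0 = 1)
    (hθzero : ∀ x : ℂ, θ x = 0 ↔ x ∈ latticeGamma τ)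
    (hθsimple : ∀ x ∈ latticeGamma τ, deriv θ x ≠ 0)
    (hbar lam : ℂ) (hbar_nl : hbar ∉ latticeGamma τ)
    (hlam : ∀ k : ℤ, lam + (k : ℂ) * hbar ∉ latticeGamma τ)
    (n : ℕ) (hn : 1 ≤ n) (u : Fin n → ℂ) (v : Fin (n + 1) → ℂ)
    (hv : ∀ i j : Fin (n + 1), i ≠ j →
      v i - v j ∉ latticeGamma τ ∧ v i - v j - hbar ∉ latticeGamma τ) :
    Zexp θ hbar lam (n + 1) (Fin.snoc u (v (Fin.last n) - hbar)) v =
      θ (lam + ((n : ℂ) + 1) * hbar) * θ hbar / θ (lam + (n : ℂ) * hbar) *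
        (∏ m : Fin n, θ (v (Fin.last n) - v m.castSucc - hbar) * θ (u m - v (Fin.last n))) *
        Zexp θ hbar lam n u (fun i => v i.castSucc) := by
  classical
  have h0 : θ (0:ℂ) = 0 := (hθzero 0).mpr (ZexpAux.lattice_zero τ)
  have hodd : ∀ x, θ (-x) = -θ x :=
    ZexpAux.theta_odd τ hτ θ hθdiff hθ1 (fun x => by rw [hθτ x]; rfl) hθzero hθsimple
  have hvne : ∀ b : Fin n, θ (v (Fin.last n) - v (Fin.castSucc b)) ≠ 0 := by
    intro b hbz
    exact (hv (Fin.last n) (Fin.castSucc b) (Fin.castSucc_lt_last b).ne').1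
      ((hθzero _).mp hbz)
  have hnl : ∀ x : Fin (n+1), ¬ (Fin.last n < x) := fun x => not_lt.mpr (Fin.le_last x)
  have hvan : ∀ σ : Equiv.Perm (Fin (n+1)), σ (Fin.last n) ≠ Fin.last n →
      ZexpAux.Zterm θ hbar lam (n+1) (Fin.snoc u (v (Fin.last n) - hbar)) v σ = 0 := by
    intro σ hσ
    have hm : σ⁻¹ (Fin.last n) < Fin.last n := by
      rw [Fin.lt_last_iff_ne_last]
      intro h
      exact hσ (σ.apply_eq_iff_eq_symm_apply.mpr h.symm)
    have h3 : (∏ k : Fin (n+1), ∏ m : Fin (n+1),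
        if m < k then
          θ ((Fin.snoc u (v (Fin.last n) - hbar) : Fin (n+1) → ℂ) k - v (σ m) + hbar)
        else 1) = 0 := by
      apply Finset.prod_eq_zero (Finset.mem_univ (Fin.last n))
      apply Finset.prod_eq_zero (Finset.mem_univ (σ⁻¹ (Fin.last n)))
      rw [if_pos hm, Fin.snoc_last, Equiv.Perm.inv_def, Equiv.apply_symm_apply,
        show v (Fin.last n) - hbar - v (Fin.last n) + hbar = 0 by ring]
      exact h0
    simp only [ZexpAux.Zterm, h3, mul_zero, zero_mul]
  have hCB : (∏ b : Fin n, θ (v (Fin.last n) - v (Fin.castSucc b) - hbar) / θ (v (Fin.last n) - v (Fin.castSucc b))) * (∏ b : Fin n, θ (v (Fin.last n) - v (Fin.castSucc b))) = (∏ b : Fin n, θ (v (Fin.last n) - v (Fin.castSucc b) - hbar)) := by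
    rw [← Finset.prod_mul_distrib]
    exact Finset.prod_congr rfl (fun b _ => div_mul_cancel₀ _ (hvne b))
  have hPI : (∏ b : Fin n, θ (v (Fin.last n) - v (Fin.castSucc b) - hbar) / θ (v (Fin.last n) - v (Fin.castSucc b))) * ((∏ a : Fin n, θ (u a - v (Fin.last n))) * (∏ b : Fin n, θ (v (Fin.last n) - v (Fin.castSucc b)))) = (∏ m : Fin n, θ (v (Fin.last n) - v m.castSucc - hbar) * θ (u m - v (Fin.last n))) := by
    rw [show (∏ b : Fin n, θ (v (Fin.last n) - v (Fin.castSucc b) - hbar) / θ (v (Fin.last n) - v (Fin.castSucc b))) * ((∏ a : Fin n, θ (u a - v (Fin.last n))) * (∏ b : Fin n, θ (v (Fin.last n) - v (Fin.castSucc b)))) = ((∏ b : Fin n, θ (v (Fin.last n) - v (Fin.castSucc b) - hbar) / θ (v (Fin.last n) - v (Fin.castSucc b))) * (∏ b : Fin n, θ (v (Fin.last n) - v (Fin.castSucc b)))) * (∏ a : Fin n, θ (u a - v (Fin.last n))) by ring, hCB,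
      ← Finset.prod_mul_distrib]
  have hD : (θ (v (Fin.last n) - hbar - v (Fin.last n) - lam - (n : ℂ) * hbar) * θ hbar / θ (-lam - (n : ℂ) * hbar)) = (θ (lam + ((n : ℂ) + 1) * hbar) * θ hbar / θ (lam + (n : ℂ) * hbar)) := by
    rw [show v (Fin.last n) - hbar - v (Fin.last n) - lam - (n : ℂ) * hbar
        = -(lam + ((n : ℂ) + 1) * hbar) by ring,
      show -lam - (n : ℂ) * hbar = -(lam + (n : ℂ) * hbar) by ring,
      hodd, hodd, neg_mul, neg_div_neg_eq]
  calc Zexp θ hbar lam (n + 1) (Fin.snoc u (v (Fin.last n) - hbar)) v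
      = (∏ k : Fin (n+1), ∏ m : Fin (n+1), if m < k then θ (v k - v m - hbar) / θ (v k - v m) else 1) * (∑ σ : Equiv.Perm (Fin (n+1)), ZexpAux.Zterm θ hbar lam (n+1) (Fin.snoc u (v (Fin.last n) - hbar)) v σ) := rfl
    _ = (∏ k : Fin (n+1), ∏ m : Fin (n+1), if m < k then θ (v k - v m - hbar) / θ (v k - v m) else 1) * (∑ π : Equiv.Perm (Fin n), ZexpAux.Zterm θ hbar lam (n+1) (Fin.snoc u (v (Fin.last n) - hbar)) v (ZexpAux.extLast π)) := by rw [ZexpAux.perm_sum _ hvan]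
    _ = (∏ k : Fin (n+1), ∏ m : Fin (n+1), if m < k then θ (v k - v m - hbar) / θ (v k - v m) else 1) * (((∏ a : Fin n, θ (u a - v (Fin.last n))) * (∏ b : Fin n, θ (v (Fin.last n) - v (Fin.castSucc b))) * (θ (v (Fin.last n) - hbar - v (Fin.last n) - lam - (n : ℂ) * hbar) * θ hbar / θ (-lam - (n : ℂ) * hbar))) * (∑ π : Equiv.Perm (Fin n), ZexpAux.Zterm θ hbar lam n u (fun i => v i.castSucc) π)) := by
        congr 1
        rw [Finset.mul_sum]
        exact Finset.sum_congr rfl (fun π _ => ZexpAux.Zterm_ext θ hbar lam u v π)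
    _ = ((∏ k : Fin n, ∏ m : Fin n, if m < k then θ (v (Fin.castSucc k) - v (Fin.castSucc m) - hbar) / θ (v (Fin.castSucc k) - v (Fin.castSucc m)) else 1) * (∏ b : Fin n, θ (v (Fin.last n) - v (Fin.castSucc b) - hbar) / θ (v (Fin.last n) - v (Fin.castSucc b)))) * (((∏ a : Fin n, θ (u a - v (Fin.last n))) * (∏ b : Fin n, θ (v (Fin.last n) - v (Fin.castSucc b))) * (θ (v (Fin.last n) - hbar - v (Fin.last n) - lam - (n : ℂ) * hbar) * θ hbar / θ (-lam - (n : ℂ) * hbar))) * (∑ π : Equiv.Perm (Fin n), ZexpAux.Zterm θ hbar lam n u (fun i => v i.castSucc) π)) := by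
        congr 1
        rw [ZexpAux.prod_split]
        simp [hnl, Fin.castSucc_lt_castSucc_iff, Fin.castSucc_lt_last]
    _ = (θ (v (Fin.last n) - hbar - v (Fin.last n) - lam - (n : ℂ) * hbar) * θ hbar / θ (-lam - (n : ℂ) * hbar)) * ((∏ b : Fin n, θ (v (Fin.last n) - v (Fin.castSucc b) - hbar) / θ (v (Fin.last n) - v (Fin.castSucc b))) * ((∏ a : Fin n, θ (u a - v (Fin.last n))) * (∏ b : Fin n, θ (v (Fin.last n) - v (Fin.castSucc b))))) * ((∏ k : Fin n, ∏ m : Fin n, if m < k then θ (v (Fin.castSucc k) - v (Fin.castSucc m) - hbar) / θ (v (Fin.castSucc k) - v (Fin.castSucc m)) else 1) * (∑ π : Equiv.Perm (Fin n), ZexpAux.Zterm θ hbar lam n u (fun i => v i.castSucc) π)) := by ring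
    _ = (θ (lam + ((n : ℂ) + 1) * hbar) * θ hbar / θ (lam + (n : ℂ) * hbar)) * (∏ m : Fin n, θ (v (Fin.last n) - v m.castSucc - hbar) * θ (u m - v (Fin.last n))) * ((∏ k : Fin n, ∏ m : Fin n, if m < k then θ (v (Fin.castSucc k) - v (Fin.castSucc m) - hbar) / θ (v (Fin.castSucc k) - v (Fin.castSucc m)) else 1) * (∑ π : Equiv.Perm (Fin n), ZexpAux.Zterm θ hbar lam n u (fun i => v i.castSucc) π)) := by rw [hD, hPI]
    _ = θ (lam + ((n : ℂ) + 1) * hbar) * θ hbar / θ (lam + (n : ℂ) * hbar) *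
        (∏ m : Fin n, θ (v (Fin.last n) - v m.castSucc - hbar) * θ (u m - v (Fin.last n))) *
        Zexp θ hbar lam n u (fun i => v i.castSucc) := rfl

end
end

section
/- Coincidence lemma for elliptic polynomials: let n ≥ 1, α ∈ ℂ, and let P_1, P_2 : ℂ → ℂ be entire functions each satisfying P_a(u+1) = (−1)^n P_a(u) and P_a(u+τ) = (−1)^n e^{2πiα} e^{−2πinu−πinτ} P_a(u). Let u_1,…,u_n ∈ ℂ be points with u_i − u_j ∉ Γ for all i ≠ j and Σ_{k=1}^n u_k − α ∉ Γ. If P_1(u_i) = P_2(u_i) for i = 1,…,n, then P_1(u) = P_2(u) for all u ∈ ℂ. -/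
open Complex BigOperators

noncomputable section

namespace EllAux

variable {τ : ℂ}

lemma gamma_neg {x : ℂ} (hx : x ∈ latticeGamma τ) : -x ∈ latticeGamma τ := by
  obtain ⟨a, b, rfl⟩ := hx
  exact ⟨-a, -b, by push_cast; ring⟩

lemma gamma_add {x y : ℂ} (hx : x ∈ latticeGamma τ) (hy : y ∈ latticeGamma τ) :
    x + y ∈ latticeGamma τ := by
  obtain ⟨a, b, rfl⟩ := hx
  obtain ⟨c, d, rfl⟩ := hy
  exact ⟨a + c, b + d, by push_cast; ring⟩

lemma gamma_tau : τ ∈ latticeGamma τ := ⟨0, 1, by push_cast; ring⟩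

lemma gamma_countable : (latticeGamma τ).Countable := by
  have : latticeGamma τ = Set.range (fun p : ℤ × ℤ => ((p.1 : ℂ) + (p.2 : ℂ) * τ)) := by
    ext x
    simp [latticeGamma, Set.mem_range, Prod.exists, eq_comm]
  rw [this]
  exact Set.countable_range _

/-- extension off a countable set -/
lemma ext_off_countable {T : Set ℂ} (hT : T.Countable) {f g : ℂ → ℂ}
    (hf : Continuous f) (hg : Continuous g) (h : ∀ z ∉ T, f z = g z) : ∀ z, f z = g z := by
  have hd : Dense Tᶜ := hT.dense_compl ℂ
  have := Continuous.ext_on hd hf hg (fun z hz => h z hz)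
  exact fun z => congrFun this z

/-- generic lattice induction for predicates -/
lemma lattice_induct {P : ℂ → Prop}
    (h1 : ∀ z, P z → P (z + 1)) (h1' : ∀ z, P z → P (z - 1))
    (h2 : ∀ z, P z → P (z + τ)) (h2' : ∀ z, P z → P (z - τ))
    {z : ℂ} (hz : P z) : ∀ a b : ℤ, P (z + ((a : ℂ) + (b : ℂ) * τ)) := by
  have key : ∀ (ω : ℂ), (∀ w, P w → P (w + ω)) → (∀ w, P w → P (w - ω)) →
      ∀ (n : ℕ) (w : ℂ), P w → P (w + n * ω) ∧ P (w - n * ω) := by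
    intro ω hp hm n
    induction n with
    | zero =>
      intro w hw
      simp only [Nat.cast_zero, zero_mul, add_zero, sub_zero]
      exact ⟨hw, hw⟩
    | succ n ih =>
      intro w hw
      constructor
      · have := hp _ (ih w hw).1
        rw [show w + (n : ℂ) * ω + ω = w + ((n : ℕ) + 1 : ℕ) * ω by push_cast; ring] at this
        exact this
      · have := hm _ (ih w hw).2
        rw [show w - (n : ℂ) * ω - ω = w - ((n : ℕ) + 1 : ℕ) * ω by push_cast; ring] at this
        exact this
  have keyInt : ∀ (ω : ℂ), (∀ w, P w → P (w + ω)) → (∀ w, P w → P (w - ω)) →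
      ∀ (a : ℤ) (w : ℂ), P w → P (w + a * ω) := by
    intro ω hp hm a w hw
    rcases le_or_gt 0 a with ha | ha
    · obtain ⟨n, rfl⟩ : ∃ n : ℕ, a = (n : ℤ) := ⟨a.toNat, by omega⟩
      have := (key ω hp hm n w hw).1
      rw [show w + ((n:ℕ):ℂ) * ω = w + ((n : ℤ) : ℂ) * ω by push_cast; ring] at this
      exact this
    · obtain ⟨n, rfl⟩ : ∃ n : ℕ, a = -(n : ℤ) := ⟨(-a).toNat, by omega⟩
      have := (key ω hp hm n w hw).2
      rw [show w - ((n:ℕ):ℂ) * ω = w + ((-(n:ℤ) : ℤ) : ℂ) * ω by push_cast; ring] at this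
      exact this
  intro a b
  have step1 : P (z + a * 1) := keyInt 1 h1 h1' a z hz
  have step2 : P (z + a * 1 + b * τ) := keyInt τ h2 h2' b _ step1
  rw [show z + (a * 1 : ℂ) + b * τ = z + ((a : ℂ) + (b : ℂ) * τ) by ring] at step2
  exact step2

/-- Liouville for doubly periodic entire functions -/
lemma const_of_doubly_periodic (hτ : 0 < τ.im) {F : ℂ → ℂ} (hF : Differentiable ℂ F)
    (h1 : ∀ z, F (z + 1) = F z) (h2 : ∀ z, F (z + τ) = F z) : ∀ z w, F z = F w := by
  have per : ∀ (z : ℂ) (a b : ℤ), F (z + ((a : ℂ) + (b : ℂ) * τ)) = F z := by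
    intro z a b
    have h1' : ∀ w, F w = F z → F (w + 1) = F z := fun w hw => by rw [h1, hw]
    have h1'' : ∀ w, F w = F z → F (w - 1) = F z := fun w hw => by
      have := h1 (w - 1); rw [show w - 1 + 1 = w by ring] at this; rw [← this]; exact hw
    have h2' : ∀ w, F w = F z → F (w + τ) = F z := fun w hw => by rw [h2, hw]
    have h2'' : ∀ w, F w = F z → F (w - τ) = F z := fun w hw => by
      have := h2 (w - τ); rw [show w - τ + τ = w by ring] at this; rw [← this]; exact hw
    exact lattice_induct h1' h1'' h2' h2'' rfl a b
  set K : Set ℂ := (fun p : ℝ × ℝ => ((p.1 : ℂ) + (p.2 : ℂ) * I)) '' (Set.Icc 0 1 ×ˢ Set.Icc 0 τ.im) with hK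
  have hKc : IsCompact K := by
    apply IsCompact.image (isCompact_Icc.prod isCompact_Icc)
    fun_prop
  have hsub : Set.range F ⊆ F '' K := by
    rintro - ⟨z, rfl⟩
    set t : ℝ := z.im / τ.im with ht
    set b : ℤ := ⌊t⌋ with hb
    set s : ℝ := z.re - b * τ.re with hs
    set a : ℤ := ⌊s⌋ with ha
    set w : ℂ := z - (a + b * τ) with hw
    have hFzw : F z = F w := by
      have := per w a b
      rw [show w + ((a:ℂ) + (b:ℂ) * τ) = z by rw [hw]; ring] at this
      exact this
    have hwim : w.im = z.im - b * τ.im := by simp [hw]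
    have hwre : w.re = z.re - b * τ.re - a := by simp [hw]; ring
    have htb0 : (0:ℝ) ≤ t - b := sub_nonneg.2 (Int.floor_le t)
    have htb1 : t - b ≤ 1 := by
      have := (Int.lt_floor_add_one t).le
      linarith
    have him0 : 0 ≤ w.im := by
      rw [hwim]
      have hzim : z.im = t * τ.im := by rw [ht]; field_simp
      nlinarith
    have him1 : w.im ≤ τ.im := by
      rw [hwim]
      have hzim : z.im = t * τ.im := by rw [ht]; field_simp
      nlinarith
    have hre0 : 0 ≤ w.re := by
      rw [hwre, ha, hs]
      have h := Int.floor_le (z.re - (b:ℝ) * τ.re)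
      linarith
    have hre1 : w.re ≤ 1 := by
      rw [hwre, ha, hs]
      have h := (Int.lt_floor_add_one (z.re - (b:ℝ) * τ.re)).le
      linarith
    refine ⟨w, ⟨(w.re, w.im), ⟨⟨hre0, hre1⟩, ⟨him0, him1⟩⟩, ?_⟩, hFzw.symm⟩
    simp [Complex.ext_iff]
  have hbdd : Bornology.IsBounded (Set.range F) :=
    ((hKc.image hF.continuous).isBounded).subset hsub
  exact fun z w => hF.apply_eq_apply_of_bounded hbdd z w

/-- base case: a 1-periodic entire function with nontrivial τ-multiplier is zero -/
lemma base_case (hτ : 0 < τ.im) {γ : ℂ} {S : ℂ → ℂ} (hS : Differentiable ℂ S)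
    (h1 : ∀ z, S (z + 1) = S z)
    (h2 : ∀ z, S (z + τ) = cexp (2 * (Real.pi : ℂ) * I * γ) * S z)
    (hγ : γ ∉ latticeGamma τ) : ∀ z, S z = 0 := by
  set lam : ℂ := cexp (2 * (Real.pi : ℂ) * I * γ) with hlam
  have hlam0 : lam ≠ 0 := Complex.exp_ne_zero _
  have key0 : ∀ w z : ℂ, S z * S (w - z) = S 0 * S w := by
    intro w
    have hG : Differentiable ℂ (fun z => S z * S (w - z)) := by
      apply hS.mul
      exact hS.comp (differentiable_const _ |>.sub differentiable_id)
    have hG1 : ∀ z, S (z+1) * S (w - (z+1)) = S z * S (w - z) := by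
      intro z
      have e1 : S (w - (z+1)) = S (w - z) := by
        have := h1 (w - (z+1))
        rw [show w - (z+1) + 1 = w - z by ring] at this
        exact this.symm
      rw [h1, e1]
    have hG2 : ∀ z, S (z+τ) * S (w - (z+τ)) = S z * S (w - z) := by
      intro z
      have e1 : S (w - z) = lam * S (w - (z + τ)) := by
        have := h2 (w - (z + τ))
        rw [show w - (z+τ) + τ = w - z by ring] at this
        exact this
      rw [h2 z, e1]
      ring
    have := const_of_doubly_periodic hτ hG hG1 hG2
    intro z
    have h := this z 0
    simpa using h
  have key : ∀ z w : ℂ, S z * S w = S 0 * S (z + w) := by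
    intro z w
    have := key0 (z + w) z
    rw [show z + w - z = w by ring] at this
    exact this
  by_cases hS0 : S 0 = 0
  · intro z
    have := key z z
    rw [hS0, zero_mul] at this
    exact mul_self_eq_zero.mp this
  · exfalso
    set E : ℂ → ℂ := fun z => S z / S 0 with hE
    have hEd : Differentiable ℂ E := hS.div_const _
    have hE0 : E 0 = 1 := by simp [hE, div_self hS0]
    have hEmul : ∀ z w, E (z + w) = E z * E w := by
      intro z w
      simp only [hE]
      rw [div_mul_div_comm, div_eq_div_iff hS0 (mul_ne_zero hS0 hS0)]
      linear_combination (-(S 0)) * key z w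
    set a : ℂ := deriv E 0 with ha
    have hderiv : ∀ z, deriv E z = E z * a := by
      intro z
      have e1 : (fun w => E (z + w)) = fun w => E z * E w := funext fun w => hEmul z w
      have d1 : deriv (fun w => E (z + w)) 0 = deriv E z := by
        rw [deriv_comp_const_add]
        simp
      have d2 : deriv (fun w => E z * E w) 0 = E z * a := by
        rw [deriv_const_mul _ (hEd 0)]
      rw [← d1, e1, d2]
    have hexp : ∀ z, E z = cexp (a * z) := by
      have hD : ∀ z, deriv (fun z => E z * cexp (-a * z)) z = 0 := by
        intro z
        have h1' : HasDerivAt E (E z * a) z := by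
          have := (hEd z).hasDerivAt
          rwa [hderiv z] at this
        have h2' : HasDerivAt (fun z => cexp (-a * z)) (cexp (-a * z) * (-a)) z := by
          have : HasDerivAt (fun z : ℂ => -a * z) (-a) z := by
            simpa using (hasDerivAt_id z).const_mul (-a)
          exact this.cexp
        have : HasDerivAt (fun z => E z * cexp (-a * z)) _ z := h1'.mul h2'
        rw [this.deriv]
        ring
      have hfun : Differentiable ℂ (fun z : ℂ => E z * cexp (-a * z)) :=
        hEd.mul (Differentiable.cexp (by fun_prop))
      have hconst := is_const_of_deriv_eq_zero (𝕜 := ℂ) hfun hD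
      intro z
      have h3 := hconst z 0
      simp only [hE0, mul_zero, Complex.exp_zero, one_mul] at h3
      have h4 : cexp (-a * z) * cexp (a * z) = 1 := by
        rw [← Complex.exp_add]; simp
      calc E z = E z * (cexp (-a*z) * cexp (a*z)) := by rw [h4, mul_one]
        _ = (E z * cexp (-a*z)) * cexp (a*z) := by ring
        _ = cexp (a * z) := by rw [h3, one_mul]
    have hE1 : E 1 = 1 := by
      have h10 := h1 0
      rw [zero_add] at h10
      simp only [hE]
      rw [h10]
      exact div_self hS0
    have hEτ : E τ = lam := by
      have h20 := h2 0
      rw [zero_add] at h20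
      simp only [hE]
      rw [h20]
      field_simp
    obtain ⟨m, hm⟩ : ∃ m : ℤ, a = m * (2 * (Real.pi:ℂ) * I) := by
      rw [← Complex.exp_eq_one_iff]
      rw [← mul_one a, ← hexp]
      exact hE1
    have hee : cexp (a * τ) = cexp (2 * (Real.pi:ℂ) * I * γ) := by
      rw [← hexp, hEτ, hlam]
    rw [Complex.exp_eq_exp_iff_exists_int] at hee
    obtain ⟨k, hk⟩ := hee
    apply hγ
    have hne : (2 * (Real.pi:ℂ) * I) ≠ 0 := by
      simp [Real.pi_ne_zero, Complex.I_ne_zero]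
    have h5 : (2 * (Real.pi:ℂ) * I) * ((m:ℂ) * τ - k - γ) = 0 := by
      rw [hm] at hk
      linear_combination hk
    have h6 := (mul_eq_zero.mp h5).resolve_left hne
    exact ⟨-k, m, by push_cast; linear_combination -h6⟩


/-! ### The basic theta-like product -/

lemma two_pi_I_ne : (2 * (Real.pi : ℂ) * I) ≠ 0 := by
  simp [Real.pi_ne_zero, Complex.I_ne_zero]

def ee (z : ℂ) : ℂ := cexp (2 * (Real.pi : ℂ) * I * z)

def qq (τ : ℂ) : ℂ := ee τ

def FF (τ : ℂ) (w : ℂ) : ℂ := ∏' m : ℕ, (1 - (qq τ)^m * w)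

def hh (τ : ℂ) (z : ℂ) : ℂ :=
  cexp ((Real.pi : ℂ) * I * z) * FF τ (ee z) * FF τ (qq τ * ee (-z))

lemma ee_ne (z : ℂ) : ee z ≠ 0 := Complex.exp_ne_zero _

lemma ee_add (z w : ℂ) : ee (z + w) = ee z * ee w := by
  rw [ee, ee, ee, ← Complex.exp_add]
  congr 1
  ring

lemma ee_neg (z : ℂ) : ee (-z) = (ee z)⁻¹ := by
  rw [ee, ee, ← Complex.exp_neg]
  congr 1
  ring

lemma ee_zero : ee 0 = 1 := by simp [ee]

lemma ee_one : ee 1 = 1 := by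
  rw [ee, mul_one, Complex.exp_two_pi_mul_I]

lemma ee_int (k : ℤ) : ee (k : ℂ) = 1 := by
  rw [ee, show 2 * (Real.pi:ℂ) * I * (k:ℂ) = (k:ℂ) * (2 * (Real.pi:ℂ) * I) by ring]
  exact Complex.exp_int_mul_two_pi_mul_I k

lemma ee_eq_one_iff (z : ℂ) : ee z = 1 ↔ ∃ k : ℤ, z = (k : ℂ) := by
  constructor
  · intro h
    rw [ee, Complex.exp_eq_one_iff] at h
    obtain ⟨n, hn⟩ := h
    refine ⟨n, ?_⟩
    have h2 : (2 * (Real.pi:ℂ) * I) * z = (2 * (Real.pi:ℂ) * I) * n := by linear_combination hn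
    exact mul_left_cancel₀ two_pi_I_ne h2
  · rintro ⟨k, rfl⟩
    exact ee_int k

lemma norm_ee (z : ℂ) : ‖ee z‖ = Real.exp (-(2 * Real.pi * z.im)) := by
  rw [ee, Complex.norm_exp]
  congr 1
  simp [Complex.mul_re, Complex.mul_im, Complex.I_re, Complex.I_im]

lemma norm_qq_lt_one {τ : ℂ} (hτ : 0 < τ.im) : ‖qq τ‖ < 1 := by
  rw [qq, norm_ee]
  rw [show (1:ℝ) = Real.exp 0 by simp]
  apply Real.exp_lt_exp.2
  have := Real.pi_pos
  nlinarith

lemma qq_pow_mul_ee (τ : ℂ) (m : ℕ) (z : ℂ) : (qq τ)^m * ee z = ee ((m:ℂ) * τ + z) := by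
  rw [qq, ee, ee, ← Complex.exp_nat_mul, ← Complex.exp_add]
  congr 1
  ring

lemma log_summable {τ : ℂ} (hτ : 0 < τ.im) (w : ℂ) :
    Summable (fun m : ℕ => Complex.log (1 - (qq τ)^m * w)) := by
  have hq0 : (0:ℝ) ≤ ‖qq τ‖ := norm_nonneg _
  have hq1 := norm_qq_lt_one hτ
  have hgeo : Summable (fun m : ℕ => 3/2 * (‖qq τ‖^m * ‖w‖)) :=
    (((summable_geometric_of_lt_one hq0 hq1).mul_right ‖w‖).mul_left _)
  apply Summable.of_norm_bounded_eventually_nat hgeo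
  have htend : Filter.Tendsto (fun m : ℕ => ‖qq τ‖^m * ‖w‖) Filter.atTop (nhds 0) := by
    simpa using (tendsto_pow_atTop_nhds_zero_of_lt_one hq0 hq1).mul_const ‖w‖
  have hev : ∀ᶠ m in Filter.atTop, ‖qq τ‖^m * ‖w‖ ≤ 1/2 :=
    htend.eventually_le_const (by norm_num)
  filter_upwards [hev] with m hm
  have hnorm : ‖-((qq τ)^m * w)‖ ≤ 1/2 := by
    rw [norm_neg, norm_mul, norm_pow]
    exact hm
  have := Complex.norm_log_one_add_half_le_self hnorm
  rw [show (1:ℂ) + -((qq τ)^m * w) = 1 - (qq τ)^m * w by ring] at this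
  calc ‖Complex.log (1 - (qq τ)^m * w)‖ ≤ 3/2 * ‖-((qq τ)^m * w)‖ := this
    _ = 3/2 * (‖qq τ‖^m * ‖w‖) := by rw [norm_neg, norm_mul, norm_pow]

lemma hasProd_zero_of_factor_zero {f : ℕ → ℂ} {m₀ : ℕ} (h : f m₀ = 0) : HasProd f 0 := by
  have hev : ∀ᶠ s : Finset ℕ in Filter.atTop, (0:ℂ) = ∏ i ∈ s, f i := by
    filter_upwards [Filter.eventually_ge_atTop {m₀}] with s hs
    exact (Finset.prod_eq_zero (hs (Finset.mem_singleton_self m₀)) h).symm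
  exact Filter.Tendsto.congr' hev tendsto_const_nhds

lemma FF_multipliable {τ : ℂ} (hτ : 0 < τ.im) (w : ℂ) :
    Multipliable (fun m : ℕ => 1 - (qq τ)^m * w) := by
  by_cases hz : ∀ m, 1 - (qq τ)^m * w ≠ 0
  · exact Complex.multipliable_of_summable_log (log_summable hτ w)
  · push_neg at hz
    obtain ⟨m₀, h0⟩ := hz
    exact ⟨0, hasProd_zero_of_factor_zero h0⟩

lemma FF_eq_zero {τ : ℂ} {w : ℂ} {m₀ : ℕ} (h : 1 - (qq τ)^m₀ * w = 0) : FF τ w = 0 :=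
  (hasProd_zero_of_factor_zero h).tprod_eq

lemma FF_eq_exp {τ : ℂ} (hτ : 0 < τ.im) {w : ℂ} (h : ∀ m, 1 - (qq τ)^m * w ≠ 0) :
    FF τ w = cexp (∑' m : ℕ, Complex.log (1 - (qq τ)^m * w)) := by
  have := Complex.cexp_tsum_eq_tprod (f := fun m : ℕ => 1 - (qq τ)^m * w) h (log_summable hτ w)
  exact this.symm

lemma FF_ne_zero {τ : ℂ} (hτ : 0 < τ.im) {w : ℂ} (h : ∀ m, 1 - (qq τ)^m * w ≠ 0) :
    FF τ w ≠ 0 := by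
  rw [FF_eq_exp hτ h]
  exact Complex.exp_ne_zero _

lemma FF_peel {τ : ℂ} (hτ : 0 < τ.im) (w : ℂ) : FF τ w = (1 - w) * FF τ (qq τ * w) := by
  have hm : Multipliable (fun n : ℕ => 1 - (qq τ)^(n+1) * w) :=
    (FF_multipliable hτ (qq τ * w)).congr (fun b => by rw [pow_succ]; ring)
  have h1 := tprod_eq_zero_mul' (f := fun n : ℕ => 1 - (qq τ)^n * w) hm
  simp only [pow_zero, one_mul] at h1
  have h2 : (∏' (b : ℕ), (1 - (qq τ)^(b+1) * w)) = FF τ (qq τ * w) := by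
    rw [FF]
    apply tprod_congr
    intro b
    rw [pow_succ]
    ring
  rw [FF, h1, h2]

lemma FF_split {τ : ℂ} (hτ : 0 < τ.im) (N : ℕ) (w : ℂ) :
    FF τ w = (∏ m ∈ Finset.range N, (1 - (qq τ)^m * w)) * FF τ ((qq τ)^N * w) := by
  induction N with
  | zero => simp
  | succ N ih =>
    rw [ih, Finset.prod_range_succ, FF_peel hτ ((qq τ)^N * w),
      show qq τ * ((qq τ)^N * w) = (qq τ)^(N+1) * w by rw [pow_succ]; ring]
    ring

lemma finprod_diff (τ : ℂ) (s : Finset ℕ) :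
    Differentiable ℂ (fun z : ℂ => ∏ m ∈ s, (1 - (qq τ)^m * z)) := by
  classical
  induction s using Finset.induction_on with
  | empty => simpa using differentiable_const (1:ℂ)
  | @insert a s' hm ih =>
    have : (fun z : ℂ => ∏ m ∈ insert a s', (1 - (qq τ)^m * z))
        = fun z => (1 - (qq τ)^a * z) * ∏ m ∈ s', (1 - (qq τ)^m * z) := by
      funext z
      rw [Finset.prod_insert hm]
    rw [this]
    exact ((differentiable_const _).sub ((differentiable_const _).mul differentiable_id)).mul ih

lemma FF_differentiable {τ : ℂ} (hτ : 0 < τ.im) : Differentiable ℂ (FF τ) := by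
  intro w₀
  have hq0 : (0:ℝ) ≤ ‖qq τ‖ := norm_nonneg _
  have hq1 := norm_qq_lt_one hτ
  set R : ℝ := ‖w₀‖ + 1 with hR
  have hRpos : 0 < R := by positivity
  obtain ⟨N, hN⟩ : ∃ N : ℕ, ‖qq τ‖^N * R ≤ 1/2 := by
    have htend : Filter.Tendsto (fun n : ℕ => ‖qq τ‖^n * R) Filter.atTop (nhds 0) := by
      simpa using (tendsto_pow_atTop_nhds_zero_of_lt_one hq0 hq1).mul_const R
    exact (htend.eventually_le_const (by norm_num)).exists
  set U : Set ℂ := Metric.ball (0:ℂ) R with hU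
  have hw₀U : w₀ ∈ U := by
    rw [hU, mem_ball_zero_iff]
    simp [hR]
  have hUopen : IsOpen U := Metric.isOpen_ball
  have hsmall : ∀ (m : ℕ), ∀ z ∈ U, ‖(qq τ)^m * ((qq τ)^N * z)‖ ≤ 1/2 * ‖qq τ‖^m := by
    intro m z hz
    have hz' : ‖z‖ < R := by rwa [hU, mem_ball_zero_iff] at hz
    have : ‖(qq τ)^m * ((qq τ)^N * z)‖ = ‖qq τ‖^m * (‖qq τ‖^N * ‖z‖) := by
      rw [norm_mul, norm_mul, norm_pow, norm_pow]
    rw [this]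
    have h1 : ‖qq τ‖^N * ‖z‖ ≤ ‖qq τ‖^N * R := by
      apply mul_le_mul_of_nonneg_left hz'.le (pow_nonneg hq0 N)
    have h2 : ‖qq τ‖^m * (‖qq τ‖^N * ‖z‖) ≤ ‖qq τ‖^m * (1/2) := by
      apply mul_le_mul_of_nonneg_left (le_trans h1 hN) (pow_nonneg hq0 m)
    linarith
  have hhalf : ∀ (m : ℕ), ∀ z ∈ U, ‖(qq τ)^m * ((qq τ)^N * z)‖ ≤ 1/2 := by
    intro m z hz
    have := hsmall m z hz
    have hpow : ‖qq τ‖^m ≤ 1 := pow_le_one₀ hq0 hq1.le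
    nlinarith
  have hslit : ∀ (m : ℕ), ∀ z ∈ U, (1 - (qq τ)^m * ((qq τ)^N * z)) ∈ Complex.slitPlane := by
    intro m z hz
    rw [Complex.mem_slitPlane_iff]
    left
    have h1 : |((qq τ)^m * ((qq τ)^N * z)).re| ≤ 1/2 := by
      calc |((qq τ)^m * ((qq τ)^N * z)).re| ≤ ‖(qq τ)^m * ((qq τ)^N * z)‖ :=
            Complex.abs_re_le_norm _
        _ = ‖(qq τ)^m * ((qq τ)^N * z)‖ := rfl
        _ ≤ 1/2 := hhalf m z hz
    have : (1 - (qq τ)^m * ((qq τ)^N * z)).re = 1 - ((qq τ)^m * ((qq τ)^N * z)).re := by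
      simp [Complex.sub_re]
    rw [this]
    have := abs_le.mp h1
    linarith [this.2]
  have hfac_ne : ∀ (m : ℕ), ∀ z ∈ U, (1 - (qq τ)^m * ((qq τ)^N * z)) ≠ 0 := by
    intro m z hz h0
    have := hhalf m z hz
    have h1 : (qq τ)^m * ((qq τ)^N * z) = 1 := by linear_combination -h0
    rw [h1] at this
    norm_num at this
  -- the log-sum is differentiable on U
  have hL : DifferentiableOn ℂ
      (fun z : ℂ => ∑' m : ℕ, Complex.log (1 - (qq τ)^m * ((qq τ)^N * z))) U := by
    apply differentiableOn_tsum_of_summable_norm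
      (u := fun m : ℕ => 3/2 * (1/2 * ‖qq τ‖^m))
    · exact ((summable_geometric_of_lt_one hq0 hq1).mul_left _).mul_left _
    · intro m
      apply DifferentiableOn.clog
      · apply DifferentiableOn.const_sub
        apply DifferentiableOn.const_mul
        exact (differentiable_id.const_mul _).differentiableOn
      · intro z hz
        exact hslit m z hz
    · exact hUopen
    · intro m z hz
      have hnorm : ‖-((qq τ)^m * ((qq τ)^N * z))‖ ≤ 1/2 := by
        rw [norm_neg]; exact hhalf m z hz
      have := Complex.norm_log_one_add_half_le_self hnorm
      rw [show (1:ℂ) + -((qq τ)^m * ((qq τ)^N * z)) = 1 - (qq τ)^m * ((qq τ)^N * z) by ring]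
        at this
      calc ‖Complex.log (1 - (qq τ)^m * ((qq τ)^N * z))‖
          ≤ 3/2 * ‖-((qq τ)^m * ((qq τ)^N * z))‖ := this
        _ ≤ 3/2 * (1/2 * ‖qq τ‖^m) := by
            rw [norm_neg]
            have := hsmall m z hz
            linarith
  have hRHS : DifferentiableOn ℂ
      (fun z : ℂ => (∏ m ∈ Finset.range N, (1 - (qq τ)^m * z)) *
        cexp (∑' m : ℕ, Complex.log (1 - (qq τ)^m * ((qq τ)^N * z)))) U :=
    ((finprod_diff τ (Finset.range N)).differentiableOn).mul hL.cexp
  have heq : ∀ z ∈ U, FF τ z = (∏ m ∈ Finset.range N, (1 - (qq τ)^m * z)) *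
      cexp (∑' m : ℕ, Complex.log (1 - (qq τ)^m * ((qq τ)^N * z))) := by
    intro z hz
    rw [FF_split hτ N z]
    congr 1
    exact FF_eq_exp hτ (fun m => hfac_ne m z hz)
  have hFFon : DifferentiableOn ℂ (FF τ) U := hRHS.congr heq
  exact (hFFon.differentiableAt (hUopen.mem_nhds hw₀U))

lemma ee_differentiable : Differentiable ℂ ee := by
  unfold ee
  fun_prop

lemma hh_differentiable {τ : ℂ} (hτ : 0 < τ.im) : Differentiable ℂ (hh τ) := by
  unfold hh
  apply Differentiable.mul
  · apply Differentiable.mul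
    · fun_prop
    · exact (FF_differentiable hτ).comp ee_differentiable
  · apply (FF_differentiable hτ).comp
    apply Differentiable.const_mul
    exact ee_differentiable.comp differentiable_neg

lemma hh_add_one (τ : ℂ) (z : ℂ) : hh τ (z + 1) = - hh τ z := by
  unfold hh
  rw [ee_add, ee_one, mul_one, show -(z+1) = -z + (-1) by ring, ee_add,
    show ((-1 : ℂ)) = ((-1 : ℤ) : ℂ) by norm_num, ee_int, mul_one]
  rw [show (Real.pi:ℂ) * I * (z + 1) = (Real.pi:ℂ) * I * z + (Real.pi:ℂ) * I by ring,
    Complex.exp_add, Complex.exp_pi_mul_I]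
  ring

lemma hh_add_tau {τ : ℂ} (hτ : 0 < τ.im) (z : ℂ) :
    hh τ (z + τ) = -(cexp ((Real.pi:ℂ) * I * τ) * ee (-z)) * hh τ z := by
  have key : ∀ w : ℂ, (1 - ee w) * hh τ (w + τ)
      = (1 - ee w) * (-(cexp ((Real.pi:ℂ) * I * τ) * ee (-w)) * hh τ w) := by
    intro w
    unfold hh
    have e1 : ee (w + τ) = qq τ * ee w := by rw [ee_add, qq]; ring
    have e2 : qq τ * ee (-(w + τ)) = ee (-w) := by
      rw [qq, ← ee_add]
      congr 1
      ring
    have e3 : cexp ((Real.pi:ℂ) * I * (w + τ))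
        = cexp ((Real.pi:ℂ) * I * w) * cexp ((Real.pi:ℂ) * I * τ) := by
      rw [← Complex.exp_add]; congr 1; ring
    rw [e1, e2, e3]
    rw [FF_peel hτ (ee w), FF_peel hτ (ee (-w))]
    have hnegw : ee (-w) = (ee w)⁻¹ := ee_neg w
    rw [hnegw]
    have hw0 : ee w ≠ 0 := ee_ne w
    field_simp
    ring
  -- extend by continuity
  have hcont1 : Continuous (fun z => hh τ (z + τ)) :=
    (hh_differentiable hτ).continuous.comp (by continuity)
  have hcont2 : Continuous (fun z => -(cexp ((Real.pi:ℂ) * I * τ) * ee (-z)) * hh τ z) := by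
    apply Continuous.mul
    · apply Continuous.neg
      apply Continuous.mul continuous_const
      exact ee_differentiable.continuous.comp continuous_neg
    · exact (hh_differentiable hτ).continuous
  have hcount : ({z : ℂ | ∃ k : ℤ, z = (k:ℂ)}).Countable := by
    have : {z : ℂ | ∃ k : ℤ, z = (k:ℂ)} = Set.range (fun k : ℤ => (k:ℂ)) := by
      ext x; simp [eq_comm]
    rw [this]
    exact Set.countable_range _
  refine ext_off_countable hcount hcont1 hcont2 ?_ z
  intro w hw
  have hne : (1 : ℂ) - ee w ≠ 0 := by
    intro h0
    apply hw
    show ∃ k : ℤ, w = (k:ℂ)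
    rw [← ee_eq_one_iff]
    linear_combination -h0
  exact mul_left_cancel₀ hne (key w)

/-! ### zero set of hh -/

lemma hh_eq_zero_iff {τ : ℂ} (hτ : 0 < τ.im) (z : ℂ) :
    hh τ z = 0 ↔ z ∈ latticeGamma τ := by
  constructor
  · intro h0
    rw [hh] at h0
    rcases mul_eq_zero.mp h0 with h1 | h2
    · rcases mul_eq_zero.mp h1 with h3 | h4
      · exact absurd h3 (Complex.exp_ne_zero _)
      · have hex : ¬ (∀ m, 1 - (qq τ)^m * ee z ≠ 0) := fun hc => FF_ne_zero hτ hc h4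
        push_neg at hex
        obtain ⟨m, hm⟩ := hex
        have h5 : (qq τ)^m * ee z = 1 := by linear_combination -hm
        rw [qq_pow_mul_ee] at h5
        obtain ⟨k, hk⟩ := (ee_eq_one_iff _).mp h5
        exact ⟨k, -m, by push_cast; linear_combination hk⟩
    · have hex : ¬ (∀ m, 1 - (qq τ)^m * (qq τ * ee (-z)) ≠ 0) := fun hc => FF_ne_zero hτ hc h2
      push_neg at hex
      obtain ⟨m, hm⟩ := hex
      have h5 : (qq τ)^(m+1) * ee (-z) = 1 := by rw [pow_succ]; linear_combination -hm
      rw [qq_pow_mul_ee] at h5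
      obtain ⟨k, hk⟩ := (ee_eq_one_iff _).mp h5
      refine ⟨-k, m+1, ?_⟩
      push_cast at hk ⊢
      linear_combination -hk
  · rintro ⟨a, b, rfl⟩
    rcases le_or_gt b 0 with hb | hb
    · set m : ℕ := (-b).toNat with hmdef
      have hmb : (m : ℤ) = -b := Int.toNat_of_nonneg (by linarith)
      have hmbC : (m : ℂ) = -(b : ℂ) := by exact_mod_cast congrArg (fun x : ℤ => (x : ℂ)) hmb
      have hz : 1 - (qq τ)^m * ee ((a:ℂ) + (b:ℂ)*τ) = 0 := by
        rw [qq_pow_mul_ee]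
        rw [show (m:ℂ) * τ + ((a:ℂ) + (b:ℂ)*τ) = (a:ℂ) + ((m:ℂ) + (b:ℂ)) * τ by ring]
        rw [hmbC]
        rw [show (a:ℂ) + (-(b:ℂ) + (b:ℂ)) * τ = ((a:ℤ):ℂ) by push_cast; ring]
        rw [ee_int]
        ring
      rw [hh, FF_eq_zero hz, mul_zero, zero_mul]
    · set m : ℕ := (b-1).toNat with hmdef
      have hmb : (m : ℤ) = b - 1 := Int.toNat_of_nonneg (by linarith)
      have hmbC : (m : ℂ) = (b : ℂ) - 1 := by exact_mod_cast congrArg (fun x : ℤ => (x : ℂ)) hmb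
      have hz : 1 - (qq τ)^m * (qq τ * ee (-((a:ℂ) + (b:ℂ)*τ))) = 0 := by
        rw [show (qq τ)^m * (qq τ * ee (-((a:ℂ) + (b:ℂ)*τ)))
            = (qq τ)^(m+1) * ee (-((a:ℂ) + (b:ℂ)*τ)) by rw [pow_succ]; ring]
        rw [qq_pow_mul_ee]
        rw [show ((m+1 : ℕ):ℂ) * τ + (-((a:ℂ) + (b:ℂ)*τ)) = -(a:ℂ) + (((m:ℂ)+1) - (b:ℂ)) * τ
          by push_cast; ring]
        rw [hmbC]
        rw [show -(a:ℂ) + (((b:ℂ) - 1 + 1) - (b:ℂ)) * τ = ((-a:ℤ):ℂ) by push_cast; ring]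
        rw [ee_int]
        ring
      rw [hh, FF_eq_zero hz, mul_zero]

/-! ### derivative of hh at lattice points -/

lemma hh_lattice {τ : ℂ} (hτ : 0 < τ.im) :
    ∀ z ∈ latticeGamma τ, hh τ z = 0 ∧ deriv (hh τ) z ≠ 0 := by
  have hq0 : (0:ℝ) ≤ ‖qq τ‖ := norm_nonneg _
  have hq1 := norm_qq_lt_one hτ
  have hdiff := hh_differentiable hτ
  have hfact : hh τ = fun z => (cexp ((Real.pi:ℂ)*I*z) * (1 - ee z)) *
      (FF τ (qq τ * ee z) * FF τ (qq τ * ee (-z))) := by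
    funext z
    rw [hh, FF_peel hτ (ee z)]
    ring
  have hFFq_ne : FF τ (qq τ) ≠ 0 := by
    apply FF_ne_zero hτ
    intro m h0
    have h1 : (qq τ)^(m+1) = 1 := by rw [pow_succ]; linear_combination -h0
    have h2 := congrArg norm h1
    rw [norm_pow, norm_one] at h2
    have hlt : ‖qq τ‖^(m+1) < 1 := pow_lt_one₀ hq0 hq1 (Nat.succ_ne_zero m)
    rw [h2] at hlt
    exact lt_irrefl _ hlt
  have hBdiff : Differentiable ℂ (fun z => FF τ (qq τ * ee z) * FF τ (qq τ * ee (-z))) := by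
    apply Differentiable.mul
    · exact (FF_differentiable hτ).comp (ee_differentiable.const_mul _)
    · exact (FF_differentiable hτ).comp ((ee_differentiable.comp differentiable_neg).const_mul _)
  have hA : HasDerivAt (fun z : ℂ => cexp ((Real.pi:ℂ)*I*z) * (1 - ee z)) (-(2*(Real.pi:ℂ)*I)) 0 := by
    have l1 : HasDerivAt (fun z : ℂ => (Real.pi:ℂ)*I*z) ((Real.pi:ℂ)*I) 0 := by
      simpa using (hasDerivAt_id (0:ℂ)).const_mul ((Real.pi:ℂ)*I)
    have l2 := l1.cexp
    have l3 : HasDerivAt (fun z : ℂ => 2*(Real.pi:ℂ)*I*z) (2*(Real.pi:ℂ)*I) 0 := by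
      simpa using (hasDerivAt_id (0:ℂ)).const_mul (2*(Real.pi:ℂ)*I)
    have l4 : HasDerivAt (fun z : ℂ => 1 - ee z) (-(cexp (2*(Real.pi:ℂ)*I*(0:ℂ)) * (2*(Real.pi:ℂ)*I))) 0 := by
      exact (l3.cexp).const_sub 1
    have l5 : HasDerivAt (fun z : ℂ => cexp ((Real.pi:ℂ)*I*z) * (1 - ee z)) _ 0 := l2.mul l4
    convert l5 using 1
    simp [ee, Complex.exp_zero]
  have hd0 : deriv (hh τ) 0 ≠ 0 := by
    have hBd : HasDerivAt (fun z => FF τ (qq τ * ee z) * FF τ (qq τ * ee (-z)))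
        (deriv (fun z => FF τ (qq τ * ee z) * FF τ (qq τ * ee (-z))) 0) 0 :=
      (hBdiff 0).hasDerivAt
    have hder : HasDerivAt (hh τ)
        ((-(2*(Real.pi:ℂ)*I)) * ((fun z => FF τ (qq τ * ee z) * FF τ (qq τ * ee (-z))) 0)
          + ((fun z : ℂ => cexp ((Real.pi:ℂ)*I*z) * (1 - ee z)) 0)
            * deriv (fun z => FF τ (qq τ * ee z) * FF τ (qq τ * ee (-z))) 0) 0 := by
      rw [hfact]
      exact hA.mul hBd
    rw [hder.deriv]
    simp only [ee_zero, neg_zero, sub_self, mul_zero, zero_mul, add_zero, mul_one]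
    exact mul_ne_zero (neg_ne_zero.2 two_pi_I_ne) (mul_ne_zero hFFq_ne hFFq_ne)
  have d1 : ∀ z, deriv (hh τ) (z+1) = -deriv (hh τ) z := by
    intro z
    have e : (fun x => hh τ (x+1)) = fun x => -hh τ x := funext (hh_add_one τ)
    calc deriv (hh τ) (z+1) = deriv (fun x => hh τ (x+1)) z := (deriv_comp_add_const _ _ _).symm
      _ = deriv (fun x => -hh τ x) z := by rw [e]
      _ = -deriv (hh τ) z := deriv.neg
  have cne : ∀ z : ℂ, -(cexp ((Real.pi:ℂ)*I*τ) * ee (-z)) ≠ 0 :=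
    fun z => neg_ne_zero.2 (mul_ne_zero (Complex.exp_ne_zero _) (ee_ne _))
  have dτ : ∀ z, hh τ z = 0 →
      deriv (hh τ) (z+τ) = (-(cexp ((Real.pi:ℂ)*I*τ) * ee (-z))) * deriv (hh τ) z := by
    intro z hz
    have e : (fun x => hh τ (x+τ)) = fun x => -(cexp ((Real.pi:ℂ)*I*τ) * ee (-x)) * hh τ x :=
      funext (hh_add_tau hτ)
    have hcdiff : Differentiable ℂ (fun x : ℂ => -(cexp ((Real.pi:ℂ)*I*τ) * ee (-x))) :=
      ((ee_differentiable.comp differentiable_neg).const_mul _).neg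
    have hc : HasDerivAt (fun x : ℂ => -(cexp ((Real.pi:ℂ)*I*τ) * ee (-x)))
        (deriv (fun x : ℂ => -(cexp ((Real.pi:ℂ)*I*τ) * ee (-x))) z) z := (hcdiff z).hasDerivAt
    have hh' : HasDerivAt (hh τ) (deriv (hh τ) z) z := (hdiff z).hasDerivAt
    have hm : HasDerivAt (fun x => -(cexp ((Real.pi:ℂ)*I*τ) * ee (-x)) * hh τ x) _ z := hc.mul hh'
    calc deriv (hh τ) (z+τ) = deriv (fun x => hh τ (x+τ)) z := (deriv_comp_add_const _ _ _).symm
      _ = deriv (fun x => -(cexp ((Real.pi:ℂ)*I*τ) * ee (-x)) * hh τ x) z := by rw [e]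
      _ = _ := by rw [hm.deriv, hz]; ring
  have s1 : ∀ z, (hh τ z = 0 ∧ deriv (hh τ) z ≠ 0) → (hh τ (z+1) = 0 ∧ deriv (hh τ) (z+1) ≠ 0) := by
    intro z hzP
    exact ⟨by rw [hh_add_one, hzP.1, neg_zero], by rw [d1]; exact neg_ne_zero.2 hzP.2⟩
  have s1' : ∀ z, (hh τ z = 0 ∧ deriv (hh τ) z ≠ 0) → (hh τ (z-1) = 0 ∧ deriv (hh τ) (z-1) ≠ 0) := by
    intro z hzP
    have e0 := hh_add_one τ (z-1)
    rw [show z-1+1 = z by ring] at e0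
    have hz0 : hh τ (z-1) = 0 := by
      rw [hzP.1] at e0
      exact neg_eq_zero.mp e0.symm
    have ed := d1 (z-1)
    rw [show z-1+1 = z by ring] at ed
    refine ⟨hz0, ?_⟩
    intro hcon
    rw [hcon, neg_zero] at ed
    exact hzP.2 ed
  have s2 : ∀ z, (hh τ z = 0 ∧ deriv (hh τ) z ≠ 0) → (hh τ (z+τ) = 0 ∧ deriv (hh τ) (z+τ) ≠ 0) := by
    intro z hzP
    exact ⟨by rw [hh_add_tau hτ, hzP.1, mul_zero],
      by rw [dτ z hzP.1]; exact mul_ne_zero (cne z) hzP.2⟩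
  have s2' : ∀ z, (hh τ z = 0 ∧ deriv (hh τ) z ≠ 0) → (hh τ (z-τ) = 0 ∧ deriv (hh τ) (z-τ) ≠ 0) := by
    intro z hzP
    have e0 := hh_add_tau hτ (z-τ)
    rw [show z-τ+τ = z by ring] at e0
    have hz0 : hh τ (z-τ) = 0 := by
      rw [hzP.1] at e0
      rcases mul_eq_zero.mp e0.symm with h | h
      · exact absurd h (cne _)
      · exact h
    refine ⟨hz0, ?_⟩
    have ed := dτ (z-τ) hz0
    rw [show z-τ+τ = z by ring] at ed
    intro hcon
    rw [hcon, mul_zero] at ed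
    exact hzP.2 ed
  have base : hh τ 0 = 0 ∧ deriv (hh τ) 0 ≠ 0 :=
    ⟨(hh_eq_zero_iff hτ 0).mpr ⟨0, 0, by simp⟩, hd0⟩
  rintro z ⟨a, b, rfl⟩
  have := lattice_induct (P := fun z => hh τ z = 0 ∧ deriv (hh τ) z ≠ 0) s1 s1' s2 s2' base a b
  rwa [zero_add] at this

/-! ### dividing off a simple zero -/

lemma quotient_exists {Q c : ℂ → ℂ} (hQ : Differentiable ℂ Q) (hc : Differentiable ℂ c)
    (hz : ∀ z, c z = 0 → Q z = 0 ∧ deriv c z ≠ 0) :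
    ∃ R : ℂ → ℂ, Differentiable ℂ R ∧ ∀ z, Q z = c z * R z := by
  classical
  set R : ℂ → ℂ := fun z => if c z = 0 then deriv Q z / deriv c z else Q z / c z with hR
  refine ⟨R, ?_, ?_⟩
  · intro z₀
    by_cases hcz : c z₀ = 0
    · obtain ⟨hQ0, hd0⟩ := hz z₀ hcz
      obtain ⟨p, hp⟩ := hQ.analyticAt z₀
      obtain ⟨p', hp'⟩ := hc.analyticAt z₀
      have hD₁ : DifferentiableAt ℂ (dslope Q z₀) z₀ :=
        hp.has_fpower_series_dslope_fslope.analyticAt.differentiableAt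
      have hD₂ : DifferentiableAt ℂ (dslope c z₀) z₀ :=
        hp'.has_fpower_series_dslope_fslope.analyticAt.differentiableAt
      have hD₂0 : dslope c z₀ z₀ ≠ 0 := by rw [dslope_same]; exact hd0
      have hne : ∀ᶠ w in nhds z₀, dslope c z₀ w ≠ 0 := hD₂.continuousAt.eventually_ne hD₂0
      have heq : R =ᶠ[nhds z₀] fun w => dslope Q z₀ w / dslope c z₀ w := by
        filter_upwards [hne] with w hw
        by_cases hwz : w = z₀
        · subst hwz
          simp only [hR, if_pos hcz, dslope_same]
        · have hsub : w - z₀ ≠ 0 := sub_ne_zero.2 hwz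
          have hcw : c w = (w - z₀) * dslope c z₀ w := by
            have h := sub_smul_dslope c z₀ w
            rw [smul_eq_mul] at h
            rw [hcz] at h
            linear_combination -h
          have hQw : Q w = (w - z₀) * dslope Q z₀ w := by
            have h := sub_smul_dslope Q z₀ w
            rw [smul_eq_mul] at h
            rw [hQ0] at h
            linear_combination -h
          have hcw0 : c w ≠ 0 := by rw [hcw]; exact mul_ne_zero hsub hw
          simp only [hR, if_neg hcw0]
          rw [hQw, hcw, mul_div_mul_left _ _ hsub]
      exact (hD₁.div hD₂ hD₂0).congr_of_eventuallyEq heq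
    · have hne : ∀ᶠ w in nhds z₀, c w ≠ 0 := (hc z₀).continuousAt.eventually_ne hcz
      have heq : R =ᶠ[nhds z₀] fun w => Q w / c w := by
        filter_upwards [hne] with w hw
        simp only [hR, if_neg hw]
      exact ((hQ z₀).div (hc z₀) hcz).congr_of_eventuallyEq heq
  · intro z
    by_cases hcz : c z = 0
    · rw [hcz, zero_mul, (hz z hcz).1]
    · simp only [hR, if_neg hcz]
      field_simp

/-! ### the main induction -/

set_option maxHeartbeats 1000000 in
lemma main_induction {τ : ℂ} (hτ : 0 < τ.im) :
    ∀ (n : ℕ) (α : ℂ) (Q : ℂ → ℂ), Differentiable ℂ Q →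
    (∀ x : ℂ, Q (x + 1) = (-1:ℂ)^n * Q x) →
    (∀ x : ℂ, Q (x + τ) = (-1:ℂ)^n * cexp (2*(Real.pi:ℂ)*I*α) *
      cexp (-(2*(Real.pi:ℂ)*I*(n:ℂ)*x) - (Real.pi:ℂ)*I*(n:ℂ)*τ) * Q x) →
    ∀ (u : Fin n → ℂ), (∀ i j, i ≠ j → u i - u j ∉ latticeGamma τ) →
    ((∑ k, u k) - α ∉ latticeGamma τ) → (∀ i, Q (u i) = 0) → ∀ x, Q x = 0 := by
  intro n
  induction n with
  | zero =>
    intro α Q hQd hQ1 hQτ u hu hsum hval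
    have h1 : ∀ z, Q (z+1) = Q z := by
      intro z
      have := hQ1 z
      simpa using this
    have h2 : ∀ z, Q (z+τ) = cexp (2*(Real.pi:ℂ)*I*α) * Q z := by
      intro z
      have := hQτ z
      simpa using this
    have hα : α ∉ latticeGamma τ := by
      intro hmem
      apply hsum
      have h0 : (∑ k : Fin 0, u k) - α = -α := by simp
      rw [h0]
      exact gamma_neg hmem
    exact base_case hτ hQd h1 h2 hα
  | succ n IH =>
    intro α Q hQd hQ1 hQτ u hu hsum hval
    set v : ℂ := u (Fin.last n) with hv
    set c : ℂ → ℂ := fun z => hh τ (z - v) with hc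
    have hcd : Differentiable ℂ c := (hh_differentiable hτ).comp (differentiable_id.sub_const v)
    have hmul1 : ((-1:ℂ)^(n+1)) ≠ 0 := pow_ne_zero _ (by norm_num)
    have hiff1 : ∀ z, Q z = 0 ↔ Q (z+1) = 0 := by
      intro z
      rw [hQ1 z]
      constructor
      · intro h; rw [h, mul_zero]
      · intro h
        rcases mul_eq_zero.mp h with h' | h'
        · exact absurd h' hmul1
        · exact h'
    have hiffτ : ∀ z, Q z = 0 ↔ Q (z+τ) = 0 := by
      intro z
      rw [hQτ z]
      constructor
      · intro h; rw [h, mul_zero]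
      · intro h
        rcases mul_eq_zero.mp h with h' | h'
        · rcases mul_eq_zero.mp h' with h'' | h''
          · rcases mul_eq_zero.mp h'' with h3 | h3
            · exact absurd h3 hmul1
            · exact absurd h3 (Complex.exp_ne_zero _)
          · exact absurd h'' (Complex.exp_ne_zero _)
        · exact h'
    have hQlattice : ∀ z, c z = 0 → Q z = 0 := by
      intro z hz
      have hzΓ : z - v ∈ latticeGamma τ := (hh_eq_zero_iff hτ _).mp hz
      obtain ⟨a, b, hab⟩ := hzΓ
      have hQv : Q v = 0 := hval (Fin.last n)
      have steps1 : ∀ w, Q w = 0 → Q (w+1) = 0 := fun w hw => (hiff1 w).mp hw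
      have steps1' : ∀ w, Q w = 0 → Q (w-1) = 0 := by
        intro w hw
        have h := hiff1 (w-1)
        rw [show w-1+1 = w by ring] at h
        exact h.mpr hw
      have stepsτ : ∀ w, Q w = 0 → Q (w+τ) = 0 := fun w hw => (hiffτ w).mp hw
      have stepsτ' : ∀ w, Q w = 0 → Q (w-τ) = 0 := by
        intro w hw
        have h := hiffτ (w-τ)
        rw [show w-τ+τ = w by ring] at h
        exact h.mpr hw
      have := lattice_induct (P := fun w => Q w = 0) steps1 steps1' stepsτ stepsτ' hQv a b
      rw [show v + ((a:ℂ) + (b:ℂ)*τ) = z by rw [← hab]; ring] at this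
      exact this
    have hcz_prop : ∀ z, c z = 0 → Q z = 0 ∧ deriv c z ≠ 0 := by
      intro z hz
      refine ⟨hQlattice z hz, ?_⟩
      have hzΓ : z - v ∈ latticeGamma τ := (hh_eq_zero_iff hτ _).mp hz
      have hder : deriv c z = deriv (hh τ) (z - v) := by
        simp only [hc]
        exact deriv_comp_sub_const (hh τ) v z
      rw [hder]
      exact (hh_lattice hτ _ hzΓ).2
    obtain ⟨R, hRd, hQR⟩ := quotient_exists hQd hcd hcz_prop
    have hc1 : ∀ z, c (z+1) = -c z := by
      intro z
      simp only [hc]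
      rw [show z+1-v = (z-v)+1 by ring, hh_add_one]
    have hcτ : ∀ z, c (z+τ) = -(cexp ((Real.pi:ℂ)*I*τ) * ee (-(z-v))) * c z := by
      intro z
      simp only [hc]
      rw [show z+τ-v = (z-v)+τ by ring, hh_add_tau hτ]
    have hAne : ∀ z : ℂ, -(cexp ((Real.pi:ℂ)*I*τ) * ee (-(z-v))) ≠ 0 :=
      fun z => neg_ne_zero.2 (mul_ne_zero (Complex.exp_ne_zero _) (ee_ne _))
    -- the countable bad set
    set T : Set ℂ := {z : ℂ | z - v ∈ latticeGamma τ} with hT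
    have hTcount : T.Countable := by
      have hTeq : T = (fun w => v + w) '' latticeGamma τ := by
        ext x
        simp only [hT, Set.mem_setOf_eq, Set.mem_image]
        constructor
        · intro h; exact ⟨x - v, h, by ring⟩
        · rintro ⟨y, hy, rfl⟩
          simpa using hy
      rw [hTeq]
      exact gamma_countable.image _
    have hcnz : ∀ z, z ∉ T → c z ≠ 0 := by
      intro z hzT h0
      exact hzT ((hh_eq_zero_iff hτ _).mp h0)
    have hR1 : ∀ z, R (z+1) = (-1:ℂ)^n * R z := by
      apply ext_off_countable hTcount (f := fun z => R (z+1)) (g := fun z => (-1:ℂ)^n * R z)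
        (hRd.continuous.comp (continuous_id.add continuous_const)) (continuous_const.mul hRd.continuous)
      intro z hzT
      have hcz : c z ≠ 0 := hcnz z hzT
      have e1 : c (z+1) * R (z+1) = (-1:ℂ)^(n+1) * (c z * R z) := by
        rw [← hQR, ← hQR]
        exact hQ1 z
      rw [hc1] at e1
      have h2 : c z * R (z+1) = c z * ((-1:ℂ)^n * R z) := by
        have hps : (-1:ℂ)^(n+1) = -((-1:ℂ)^n) := by rw [pow_succ]; ring
        rw [hps] at e1
        linear_combination -e1
      exact mul_left_cancel₀ hcz h2
    have hRτ : ∀ z, R (z+τ) = (-1:ℂ)^n * cexp (2*(Real.pi:ℂ)*I*(α - v - τ)) *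
        cexp (-(2*(Real.pi:ℂ)*I*(n:ℂ)*z) - (Real.pi:ℂ)*I*(n:ℂ)*τ) * R z := by
      have hf1 : Continuous (fun z : ℂ => R (z+τ)) :=
        hRd.continuous.comp (continuous_id.add continuous_const)
      have hg1 : Continuous (fun z : ℂ => (-1:ℂ)^n * cexp (2*(Real.pi:ℂ)*I*(α - v - τ)) *
          cexp (-(2*(Real.pi:ℂ)*I*(n:ℂ)*z) - (Real.pi:ℂ)*I*(n:ℂ)*τ) * R z) := by
        apply Continuous.mul _ hRd.continuous
        apply Continuous.mul continuous_const
        apply Complex.continuous_exp.comp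
        exact ((continuous_const.mul continuous_id).neg).sub continuous_const
      apply ext_off_countable hTcount (f := fun z => R (z+τ))
        (g := fun z => (-1:ℂ)^n * cexp (2*(Real.pi:ℂ)*I*(α - v - τ)) *
          cexp (-(2*(Real.pi:ℂ)*I*(n:ℂ)*z) - (Real.pi:ℂ)*I*(n:ℂ)*τ) * R z) hf1 hg1
      intro z hzT
      have hcz : c z ≠ 0 := hcnz z hzT
      have e1 : c (z+τ) * R (z+τ) = (-1:ℂ)^(n+1) * cexp (2*(Real.pi:ℂ)*I*α) *
          cexp (-(2*(Real.pi:ℂ)*I*((n+1:ℕ):ℂ)*z) - (Real.pi:ℂ)*I*((n+1:ℕ):ℂ)*τ) * (Q z) := by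
        rw [← hQR]
        exact hQτ z
      rw [hQR z, hcτ] at e1
      have key : cexp (2*(Real.pi:ℂ)*I*α) *
          cexp (-(2*(Real.pi:ℂ)*I*((n:ℂ)+1)*z) - (Real.pi:ℂ)*I*((n:ℂ)+1)*τ)
          = (cexp ((Real.pi:ℂ)*I*τ) * cexp (2*(Real.pi:ℂ)*I*(-(z-v)))) *
            (cexp (2*(Real.pi:ℂ)*I*(α - v - τ)) *
              cexp (-(2*(Real.pi:ℂ)*I*(n:ℂ)*z) - (Real.pi:ℂ)*I*(n:ℂ)*τ)) := by
        rw [← Complex.exp_add, ← Complex.exp_add, ← Complex.exp_add, ← Complex.exp_add]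
        congr 1
        ring
      have hexpid : (-1:ℂ)^(n+1) * cexp (2*(Real.pi:ℂ)*I*α) *
          cexp (-(2*(Real.pi:ℂ)*I*((n+1:ℕ):ℂ)*z) - (Real.pi:ℂ)*I*((n+1:ℕ):ℂ)*τ)
          = (-(cexp ((Real.pi:ℂ)*I*τ) * ee (-(z-v)))) *
            ((-1:ℂ)^n * cexp (2*(Real.pi:ℂ)*I*(α - v - τ)) *
              cexp (-(2*(Real.pi:ℂ)*I*(n:ℂ)*z) - (Real.pi:ℂ)*I*(n:ℂ)*τ)) := by
        rw [ee]
        push_cast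
        linear_combination ((-1:ℂ)^(n+1)) * key
      rw [hexpid] at e1
      have hAc : (-(cexp ((Real.pi:ℂ)*I*τ) * ee (-(z-v)))) * c z ≠ 0 := mul_ne_zero (hAne z) hcz
      apply mul_left_cancel₀ hAc
      calc (-(cexp ((Real.pi:ℂ)*I*τ) * ee (-(z-v)))) * c z * R (z+τ) = _ := e1
        _ = (-(cexp ((Real.pi:ℂ)*I*τ) * ee (-(z-v)))) * c z *
            ((-1:ℂ)^n * cexp (2*(Real.pi:ℂ)*I*(α - v - τ)) *
              cexp (-(2*(Real.pi:ℂ)*I*(n:ℂ)*z) - (Real.pi:ℂ)*I*(n:ℂ)*τ) * R z) := by ring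
    -- new data for IH
    set α' : ℂ := α - v - τ with hα'
    set u' : Fin n → ℂ := fun i => u i.castSucc with hu'
    have hu'd : ∀ i j, i ≠ j → u' i - u' j ∉ latticeGamma τ := by
      intro i j hij
      simp only [hu']
      exact hu _ _ (fun h => hij (Fin.castSucc_inj.mp h))
    have hsum' : (∑ k, u' k) - α' ∉ latticeGamma τ := by
      intro hmem
      apply hsum
      have hsplit : (∑ k : Fin (n+1), u k) = (∑ k : Fin n, u' k) + v := by
        rw [Fin.sum_univ_castSucc]
      have hrw : (∑ k : Fin (n+1), u k) - α = ((∑ k, u' k) - α') + (-τ) := by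
        rw [hsplit, hα']
        ring
      rw [hrw]
      exact gamma_add hmem (gamma_neg gamma_tau)
    have hval' : ∀ i, R (u' i) = 0 := by
      intro i
      have hQu : Q (u' i) = 0 := hval i.castSucc
      have hcu : c (u' i) ≠ 0 := by
        intro h0
        have hmem := (hh_eq_zero_iff hτ _).mp h0
        simp only [hu', hv] at hmem
        exact hu i.castSucc (Fin.last n) (Fin.castSucc_lt_last i).ne hmem
      have h := hQR (u' i)
      rw [hQu] at h
      rcases mul_eq_zero.mp h.symm with h' | h'
      · exact absurd h' hcu
      · exact h'
    have hR0 := IH α' R hRd hR1 (by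
      intro x
      have := hRτ x
      rw [hα']
      exact this) u' hu'd hsum' hval'
    intro x
    rw [hQR x, hR0 x, mul_zero]

end EllAux

/-- coincidence lemma for elliptic polynomials.  Two elliptic polynomials
of degree `n` with the same character that agree at `n` suitably generic points agree
everywhere. -/
theorem elliptic_polynomial_coincidence
    (τ : ℂ) (hτ : 0 < τ.im)
    (n : ℕ) (hn : 1 ≤ n) (α : ℂ) (P₁ P₂ : ℂ → ℂ)
    (hd₁ : Differentiable ℂ P₁) (hd₂ : Differentiable ℂ P₂)
    (h₁1 : ∀ x : ℂ, P₁ (x + 1) = (-1 : ℂ) ^ n * P₁ x)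
    (h₂1 : ∀ x : ℂ, P₂ (x + 1) = (-1 : ℂ) ^ n * P₂ x)
    (h₁τ : ∀ x : ℂ, P₁ (x + τ) =
      (-1 : ℂ) ^ n * Complex.exp (2 * (Real.pi : ℂ) * Complex.I * α) *
        Complex.exp (-(2 * (Real.pi : ℂ) * Complex.I * (n : ℂ) * x) -
          (Real.pi : ℂ) * Complex.I * (n : ℂ) * τ) * P₁ x)
    (h₂τ : ∀ x : ℂ, P₂ (x + τ) =
      (-1 : ℂ) ^ n * Complex.exp (2 * (Real.pi : ℂ) * Complex.I * α) *
        Complex.exp (-(2 * (Real.pi : ℂ) * Complex.I * (n : ℂ) * x) -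
          (Real.pi : ℂ) * Complex.I * (n : ℂ) * τ) * P₂ x)
    (u : Fin n → ℂ)
    (hu : ∀ i j : Fin n, i ≠ j → u i - u j ∉ latticeGamma τ)
    (hsum : (∑ k, u k) - α ∉ latticeGamma τ)
    (hval : ∀ i, P₁ (u i) = P₂ (u i)) :
    ∀ x : ℂ, P₁ x = P₂ x := by
  intro x
  have hQd : Differentiable ℂ (fun z => P₁ z - P₂ z) := hd₁.sub hd₂
  have hQ1 : ∀ z : ℂ, (fun z => P₁ z - P₂ z) (z + 1) = (-1:ℂ)^n * (fun z => P₁ z - P₂ z) z := by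
    intro z
    simp only
    rw [h₁1, h₂1]
    ring
  have hQτ : ∀ z : ℂ, (fun z => P₁ z - P₂ z) (z + τ) =
      (-1:ℂ)^n * Complex.exp (2*(Real.pi:ℂ)*Complex.I*α) *
        Complex.exp (-(2*(Real.pi:ℂ)*Complex.I*(n:ℂ)*z) - (Real.pi:ℂ)*Complex.I*(n:ℂ)*τ) *
        (fun z => P₁ z - P₂ z) z := by
    intro z
    simp only
    rw [h₁τ, h₂τ]
    ring
  have hvals : ∀ i, (fun z => P₁ z - P₂ z) (u i) = 0 := by
    intro i
    simp only
    rw [hval i]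
    ring
  have hres := EllAux.main_induction hτ n α (fun z => P₁ z - P₂ z) hQd hQ1 hQτ u hu hsum hvals x
  exact sub_eq_zero.mp hres

end
end

section
/- Interpolation formula for elliptic polynomials: let n ≥ 1, α ∈ ℂ, and let P : ℂ → ℂ be an entire function satisfying P(u+1) = (−1)^n P(u) and P(u+τ) = (−1)^n e^{2πiα} e^{−2πinu−πinτ} P(u). Let u_1,…,u_n ∈ ℂ be points with u_i − u_j ∉ Γ for all i ≠ j and Σ_{k=1}^n u_k − α ∉ Γ. Then for all u ∈ ℂ, P(u) = Σ_{i=1}^n P(u_i) · [θ(u_i − u + α − Σ_{m=1}^n u_m) / θ(α − Σ_{m=1}^n u_m)] · ∏_{k≠i} [θ(u_k − u) / θ(u_k − u_i)]. -/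
open Complex BigOperators

noncomputable section

namespace EllipticInterpAux

open Set Filter Topology

variable {τ : ℂ}

lemma lg_mem (a b : ℤ) : ((a : ℂ) + (b : ℂ) * τ) ∈ latticeGamma τ := ⟨a, b, rfl⟩

lemma lg_zero : (0 : ℂ) ∈ latticeGamma τ := ⟨0, 0, by simp⟩

lemma lg_neg {x : ℂ} (h : x ∈ latticeGamma τ) : -x ∈ latticeGamma τ := by
  obtain ⟨a, b, rfl⟩ := h; exact ⟨-a, -b, by push_cast; ring⟩

lemma lg_sub {x y : ℂ} (hx : x ∈ latticeGamma τ) (hy : y ∈ latticeGamma τ) :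
    x - y ∈ latticeGamma τ := by
  obtain ⟨a, b, rfl⟩ := hx; obtain ⟨a', b', rfl⟩ := hy
  exact ⟨a - a', b - b', by push_cast; ring⟩

lemma lg_countable : (latticeGamma τ).Countable := by
  have : latticeGamma τ = Set.range (fun p : ℤ × ℤ => (p.1 : ℂ) + (p.2 : ℂ) * τ) := by
    ext x; constructor
    · rintro ⟨a, b, rfl⟩; exact ⟨(a, b), rfl⟩
    · rintro ⟨⟨a, b⟩, rfl⟩; exact ⟨a, b, rfl⟩
  rw [this]; exact Set.countable_range _

/-- integer shifts preserve vanishing, given a one-step iff -/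
lemma zshift (f : ℂ → ℂ) (p : ℂ) (h : ∀ x, (f (x + p) = 0 ↔ f x = 0)) :
    ∀ (b : ℤ) (x : ℂ), f (x + b * p) = 0 ↔ f x = 0 := by
  intro b
  induction b using Int.induction_on with
  | zero => simp
  | succ k ih =>
    intro x
    have : x + ((k : ℤ) + 1 : ℤ) * p = (x + k * p) + p := by push_cast; ring
    rw [this, h]; exact_mod_cast ih x
  | pred k ih =>
    intro x
    have : x + ((-(k : ℤ) - 1 : ℤ)) * p + p = x + (-(k : ℤ) : ℤ) * p := by push_cast; ring
    have h2 := h (x + ((-(k : ℤ) - 1 : ℤ)) * p)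
    rw [this] at h2
    rw [← h2]; exact ih x

lemma pshift (f : ℂ → ℂ) (p : ℂ) (h : ∀ x, f (x + p) = f x) :
    ∀ (b : ℤ) (x : ℂ), f (x + b * p) = f x := by
  intro b
  induction b using Int.induction_on with
  | zero => simp
  | succ k ih =>
    intro x
    have : x + ((k : ℤ) + 1 : ℤ) * p = (x + k * p) + p := by push_cast; ring
    rw [this, h]; exact_mod_cast ih x
  | pred k ih =>
    intro x
    have h2 := h (x + ((-(k : ℤ) - 1 : ℤ)) * p)
    have : x + ((-(k : ℤ) - 1 : ℤ)) * p + p = x + (-(k : ℤ) : ℤ) * p := by push_cast; ring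
    rw [this] at h2
    rw [← h2]; exact ih x

/-- entire doubly periodic functions are constant -/
lemma elliptic_const (hτ : 0 < τ.im) {f : ℂ → ℂ} (hf : Differentiable ℂ f)
    (h1 : ∀ x, f (x + 1) = f x) (h2 : ∀ x, f (x + τ) = f x) : ∀ x y, f x = f y := by
  have key : ∀ z : ℂ, ∃ s t : ℝ, s ∈ Icc (0:ℝ) 1 ∧ t ∈ Icc (0:ℝ) 1 ∧
      f z = f ((s : ℂ) + (t : ℂ) * τ) := by
    intro z
    set t0 : ℝ := z.im / τ.im with ht0
    set s0 : ℝ := z.re - t0 * τ.re with hs0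
    have hz : z = (s0 : ℂ) + (t0 : ℂ) * τ := by
      apply Complex.ext
      · simp [hs0]
      · simp [ht0]
        field_simp
    refine ⟨s0 - ⌊s0⌋, t0 - ⌊t0⌋, ⟨by simp [Int.sub_floor_div_mul_nonneg, Int.fract_nonneg],
      (Int.fract_lt_one s0).le⟩, ⟨Int.fract_nonneg t0, (Int.fract_lt_one t0).le⟩, ?_⟩
    have hrw : z = (((s0 - ⌊s0⌋ : ℝ) : ℂ) + ((t0 - ⌊t0⌋ : ℝ) : ℂ) * τ) + (⌊s0⌋ : ℤ) * 1
        + (⌊t0⌋ : ℤ) * τ := by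
      rw [hz]; push_cast; ring
    rw [hrw]
    rw [pshift f τ h2, pshift f 1 (by simpa using h1)]
  have hK : IsCompact ((fun p : ℝ × ℝ => ((p.1 : ℂ) + (p.2 : ℂ) * τ)) '' (Icc 0 1 ×ˢ Icc 0 1)) := by
    apply IsCompact.image (IsCompact.prod isCompact_Icc isCompact_Icc)
    continuity
  have hb : Bornology.IsBounded (Set.range f) := by
    have : Set.range f ⊆ f '' ((fun p : ℝ × ℝ => ((p.1 : ℂ) + (p.2 : ℂ) * τ)) ''
        (Icc 0 1 ×ˢ Icc 0 1)) := by
      rintro - ⟨z, rfl⟩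
      obtain ⟨s, t, hs, ht, hft⟩ := key z
      exact ⟨_, ⟨(s, t), ⟨hs, ht⟩, rfl⟩, hft.symm⟩
    exact ((hK.image hf.continuous).isBounded).subset this
  intro x y
  exact hf.apply_eq_apply_of_bounded hb x y

lemma dslope_diffAt {f : ℂ → ℂ} (hf : Differentiable ℂ f) (a : ℂ) :
    DifferentiableAt ℂ (dslope f a) a := by
  obtain ⟨p, hp⟩ := hf.analyticAt a
  exact hp.has_fpower_series_dslope_fslope.analyticAt.differentiableAt

/-- dividing an entire function by an entire function with simple zeros contained in
the zero set of the numerator -/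
lemma div_entire {f g : ℂ → ℂ} (hf : Differentiable ℂ f) (hg : Differentiable ℂ g)
    (h0 : ∀ z, g z = 0 → f z = 0) (h1 : ∀ z, g z = 0 → deriv g z ≠ 0) :
    ∃ h : ℂ → ℂ, Differentiable ℂ h ∧ ∀ z, f z = g z * h z := by
  classical
  refine ⟨fun z => if g z = 0 then deriv f z / deriv g z else f z / g z, ?_, ?_⟩
  · intro z₀
    by_cases hz : g z₀ = 0
    · have hφ : DifferentiableAt ℂ (dslope f z₀) z₀ := dslope_diffAt hf z₀
      have hψ : DifferentiableAt ℂ (dslope g z₀) z₀ := dslope_diffAt hg z₀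
      have hψ0 : dslope g z₀ z₀ ≠ 0 := by rw [dslope_same]; exact h1 z₀ hz
      have hev : ∀ᶠ z in 𝓝 z₀, dslope g z₀ z ≠ 0 :=
        hψ.continuousAt.eventually_ne hψ0
      have heq : (fun z => if g z = 0 then deriv f z / deriv g z else f z / g z)
          =ᶠ[𝓝 z₀] fun z => dslope f z₀ z / dslope g z₀ z := by
        filter_upwards [hev] with z hzψ
        by_cases hzz : z = z₀
        · subst hzz
          simp [hz, dslope_same]
        · have hgz : g z = (z - z₀) * dslope g z₀ z := by
            have h' := sub_smul_dslope g z₀ z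
            rw [hz, sub_zero, smul_eq_mul] at h'
            exact h'.symm
          have hfz : f z = (z - z₀) * dslope f z₀ z := by
            have h' := sub_smul_dslope f z₀ z
            rw [h0 z₀ hz, sub_zero, smul_eq_mul] at h'
            exact h'.symm
          have hgne : g z ≠ 0 := by
            rw [hgz]
            exact mul_ne_zero (sub_ne_zero.2 hzz) hzψ
          rw [if_neg hgne, hgz, hfz, mul_div_mul_left _ _ (sub_ne_zero.2 hzz)]
      exact (DifferentiableAt.div hφ hψ hψ0).congr_of_eventuallyEq heq
    · have hev : ∀ᶠ z in 𝓝 z₀, g z ≠ 0 := (hg.continuous.continuousAt).eventually_ne hz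
      have heq : (fun z => if g z = 0 then deriv f z / deriv g z else f z / g z)
          =ᶠ[𝓝 z₀] fun z => f z / g z := by
        filter_upwards [hev] with z hzg
        rw [if_neg hzg]
      exact ((hf.differentiableAt).div (hg.differentiableAt) hz).congr_of_eventuallyEq heq
  · intro z
    by_cases hz : g z = 0
    · simp [hz, h0 z hz]
    · simp only [if_neg hz]
      rw [mul_div_cancel₀ _ hz]

lemma diff_finset_prod {ι : Type*} (s : Finset ι) (f : ι → ℂ → ℂ)
    (hf : ∀ i ∈ s, Differentiable ℂ (f i)) :
    Differentiable ℂ (fun x => ∏ i ∈ s, f i x) := by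
  classical
  induction s using Finset.induction_on with
  | empty => simpa using differentiable_const (1 : ℂ)
  | @insert a s ha ih =>
    have : (fun x => ∏ i ∈ insert a s, f i x) = fun x => f a x * ∏ i ∈ s, f i x :=
      funext fun x => Finset.prod_insert ha
    rw [this]
    exact (hf a (Finset.mem_insert_self a s)).mul
      (ih fun i hi => hf i (Finset.mem_insert_of_mem hi))

lemma div_entire_finset {ι : Type*} (s : Finset ι) (g : ι → ℂ → ℂ) (f : ℂ → ℂ)
    (hf : Differentiable ℂ f) (hg : ∀ i, Differentiable ℂ (g i))
    (hsimple : ∀ i ∈ s, ∀ z, g i z = 0 → deriv (g i) z ≠ 0)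
    (hvan : ∀ i ∈ s, ∀ z, g i z = 0 → f z = 0)
    (hdisj : ∀ i ∈ s, ∀ j ∈ s, i ≠ j → ∀ z, g i z = 0 → g j z ≠ 0) :
    ∃ h : ℂ → ℂ, Differentiable ℂ h ∧ ∀ z, f z = (∏ i ∈ s, g i z) * h z := by
  classical
  induction s using Finset.induction_on generalizing f with
  | empty => exact ⟨f, hf, fun z => by simp⟩
  | @insert a s ha ih =>
    obtain ⟨h₁, hh₁d, hh₁⟩ := div_entire hf (hg a)
      (fun z hz => hvan a (Finset.mem_insert_self a s) z hz)
      (fun z hz => hsimple a (Finset.mem_insert_self a s) z hz)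
    obtain ⟨h₂, hh₂d, hh₂⟩ := ih h₁ hh₁d
      (fun i hi z hz => hsimple i (Finset.mem_insert_of_mem hi) z hz)
      (fun i hi => by
        intro z hz
        have hfz : f z = 0 := hvan i (Finset.mem_insert_of_mem hi) z hz
        have hgaz : g a z ≠ 0 := by
          apply hdisj i (Finset.mem_insert_of_mem hi) a (Finset.mem_insert_self a s)
          · rintro rfl; exact ha hi
          · exact hz
        have := hh₁ z
        rw [hfz] at this
        exact (mul_eq_zero.mp this.symm).resolve_left hgaz)
      (fun i hi j hj hij => hdisj i (Finset.mem_insert_of_mem hi) j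
        (Finset.mem_insert_of_mem hj) hij)
    refine ⟨h₂, hh₂d, fun z => ?_⟩
    rw [Finset.prod_insert ha, hh₁ z, hh₂ z, mul_assoc]

end EllipticInterpAux

/-- interpolation formula for elliptic polynomials of degree `n` with
character `χ(1) = (-1)^n`, `χ(τ) = (-1)^n e^{2πiα}`. -/
theorem elliptic_interpolation
    (τ : ℂ) (hτ : 0 < τ.im)
    (θ : ℂ → ℂ) (hθdiff : Differentiable ℂ θ)
    (hθ1 : ∀ x : ℂ, θ (x + 1) = -θ x)
    (hθτ : ∀ x : ℂ, θ (x + τ) =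
      -Complex.exp (-(2 * (Real.pi : ℂ) * Complex.I * x) - (Real.pi : ℂ) * Complex.I * τ) * θ x)
    (hθ0 : deriv θ 0 = 1)
    (hθzero : ∀ x : ℂ, θ x = 0 ↔ x ∈ latticeGamma τ)
    (hθsimple : ∀ x ∈ latticeGamma τ, deriv θ x ≠ 0)
    (n : ℕ) (hn : 1 ≤ n) (α : ℂ) (P : ℂ → ℂ)
    (hPd : Differentiable ℂ P)
    (hP1 : ∀ x : ℂ, P (x + 1) = (-1 : ℂ) ^ n * P x)
    (hPτ : ∀ x : ℂ, P (x + τ) =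
      (-1 : ℂ) ^ n * Complex.exp (2 * (Real.pi : ℂ) * Complex.I * α) *
        Complex.exp (-(2 * (Real.pi : ℂ) * Complex.I * (n : ℂ) * x) -
          (Real.pi : ℂ) * Complex.I * (n : ℂ) * τ) * P x)
    (u : Fin n → ℂ)
    (hu : ∀ i j : Fin n, i ≠ j → u i - u j ∉ latticeGamma τ)
    (hsum : (∑ k, u k) - α ∉ latticeGamma τ) :
    ∀ x : ℂ, P x = ∑ i : Fin n, P (u i) *
      (θ (u i - x + α - ∑ m, u m) / θ (α - ∑ m, u m)) *
      ∏ k ∈ Finset.univ.erase i, θ (u k - x) / θ (u k - u i) := by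
  classical
  open EllipticInterpAux in
  set π' : ℂ := (Real.pi : ℂ) with hπ'
  set S : ℂ := ∑ m, u m with hS
  -- basic theta facts
  have hθm1 : ∀ y : ℂ, θ (y - 1) = -θ y := by
    intro y
    have h := hθ1 (y - 1)
    rw [sub_add_cancel] at h
    linear_combination h
  have hθmτ : ∀ y : ℂ, θ (y - τ) = -Complex.exp (2 * π' * I * y - π' * I * τ) * θ y := by
    intro y
    have h := hθτ (y - τ)
    rw [sub_add_cancel] at h
    rw [h, ← mul_assoc, neg_mul_neg, ← Complex.exp_add]
    have : 2 * π' * I * y - π' * I * τ + (-(2 * π' * I * (y - τ)) - π' * I * τ) = 0 := by ring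
    rw [this, Complex.exp_zero, one_mul]
  have hθ0' : θ 0 = 0 := (hθzero 0).mpr EllipticInterpAux.lg_zero
  have hβ : α - S ∉ latticeGamma τ := by
    intro h
    exact hsum (by simpa using EllipticInterpAux.lg_neg h)
  have hθβ : θ (α - S) ≠ 0 := fun h => hβ ((hθzero _).mp h)
  have huij : ∀ i k : Fin n, k ≠ i → θ (u k - u i) ≠ 0 := by
    intro i k hki h
    exact hu k i hki ((hθzero _).mp h)
  -- cardinality of erased sets
  have hcardE : ∀ i : Fin n, (Finset.univ.erase i).card = n - 1 := by
    intro i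
    rw [Finset.card_erase_of_mem (Finset.mem_univ i), Finset.card_univ, Fintype.card_fin]
  have hpow : (-1 : ℂ) * (-1 : ℂ) ^ (n - 1) = (-1 : ℂ) ^ n := by
    have hn' : n - 1 + 1 = n := Nat.succ_pred_eq_of_pos hn
    conv_rhs => rw [← hn', pow_succ]
    ring
  have hsumE : ∀ i : Fin n, ∑ k ∈ Finset.univ.erase i, u k = S - u i := by
    intro i
    have h := Finset.sum_erase_add Finset.univ u (Finset.mem_univ i)
    rw [← hS] at h
    linear_combination h
  -- the interpolation sum
  set R : ℂ → ℂ := fun x => ∑ i : Fin n, P (u i) *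
      (θ (u i - x + α - S) / θ (α - S)) *
      ∏ k ∈ Finset.univ.erase i, θ (u k - x) / θ (u k - u i) with hR
  suffices hPR : ∀ x, P x = R x by
    intro x; rw [hPR x]
  have hRd : Differentiable ℂ R := by
    rw [hR]
    apply Differentiable.fun_sum
    intro i _
    apply Differentiable.mul
    · apply Differentiable.mul (differentiable_const _)
      exact (hθdiff.comp (by fun_prop)).div_const _
    · exact EllipticInterpAux.diff_finset_prod _ _
        (fun k _ => (hθdiff.comp (by fun_prop)).div_const _)
  set D : ℂ → ℂ := fun x => ∏ k : Fin n, θ (u k - x) with hD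
  have hDd : Differentiable ℂ D :=
    EllipticInterpAux.diff_finset_prod _ _ (fun k _ => hθdiff.comp (by fun_prop))
  set F : ℂ → ℂ := fun x => P x - R x with hF
  have hFd : Differentiable ℂ F := hPd.sub hRd
  -- quasi-periodicity of R
  have hR1 : ∀ x : ℂ, R (x + 1) = (-1 : ℂ) ^ n * R x := by
    intro x
    rw [hR]
    simp only
    rw [Finset.mul_sum]
    refine Finset.sum_congr rfl ?_
    intro i _
    have e1 : u i - (x + 1) + α - S = (u i - x + α - S) - 1 := by ring
    have hprod : (∏ k ∈ Finset.univ.erase i, θ (u k - (x + 1)) / θ (u k - u i))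
        = (-1 : ℂ) ^ (n - 1) * ∏ k ∈ Finset.univ.erase i, θ (u k - x) / θ (u k - u i) := by
      calc (∏ k ∈ Finset.univ.erase i, θ (u k - (x + 1)) / θ (u k - u i))
          = ∏ k ∈ Finset.univ.erase i, ((-1 : ℂ) * (θ (u k - x) / θ (u k - u i))) := by
            refine Finset.prod_congr rfl ?_
            intro k _
            have e2 : u k - (x + 1) = (u k - x) - 1 := by ring
            rw [e2, hθm1, neg_div, neg_one_mul]
        _ = (-1 : ℂ) ^ (n - 1) * ∏ k ∈ Finset.univ.erase i, θ (u k - x) / θ (u k - u i) := by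
            rw [Finset.prod_mul_distrib, Finset.prod_const, hcardE i]
    rw [e1, hθm1, hprod, ← hpow]
    ring
  have hEi : ∀ (i : Fin n) (x : ℂ), ∑ k ∈ Finset.univ.erase i,
      (2 * π' * I * (u k - x) - π' * I * τ)
      = 2 * π' * I * (S - u i) - 2 * π' * I * ((n : ℂ) - 1) * x - π' * I * ((n : ℂ) - 1) * τ := by
    intro i x
    rw [Finset.sum_sub_distrib, ← Finset.mul_sum, Finset.sum_sub_distrib, hsumE i,
      Finset.sum_const, Finset.sum_const, hcardE i, nsmul_eq_mul, nsmul_eq_mul]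
    have : ((n - 1 : ℕ) : ℂ) = (n : ℂ) - 1 := by
      push_cast [Nat.cast_sub hn]
      ring
    rw [this]
    ring
  have hRτ : ∀ x : ℂ, R (x + τ) = (-1 : ℂ) ^ n * Complex.exp (2 * π' * I * α) *
      Complex.exp (-(2 * π' * I * (n : ℂ) * x) - π' * I * (n : ℂ) * τ) * R x := by
    intro x
    rw [hR]
    simp only
    rw [Finset.mul_sum]
    refine Finset.sum_congr rfl ?_
    intro i _
    have e1 : u i - (x + τ) + α - S = (u i - x + α - S) - τ := by ring
    have hprod : (∏ k ∈ Finset.univ.erase i, θ (u k - (x + τ)) / θ (u k - u i))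
        = ((-1 : ℂ) ^ (n - 1) * Complex.exp (∑ k ∈ Finset.univ.erase i,
            (2 * π' * I * (u k - x) - π' * I * τ))) *
          ∏ k ∈ Finset.univ.erase i, θ (u k - x) / θ (u k - u i) := by
      calc (∏ k ∈ Finset.univ.erase i, θ (u k - (x + τ)) / θ (u k - u i))
          = ∏ k ∈ Finset.univ.erase i, (((-1 : ℂ) * Complex.exp (2 * π' * I * (u k - x) - π' * I * τ)) *
              (θ (u k - x) / θ (u k - u i))) := by
            refine Finset.prod_congr rfl ?_
            intro k _
            have e2 : u k - (x + τ) = (u k - x) - τ := by ring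
            rw [e2, hθmτ]
            ring
        _ = ((-1 : ℂ) ^ (n - 1) * Complex.exp (∑ k ∈ Finset.univ.erase i,
              (2 * π' * I * (u k - x) - π' * I * τ))) *
            ∏ k ∈ Finset.univ.erase i, θ (u k - x) / θ (u k - u i) := by
            rw [Finset.prod_mul_distrib, Finset.prod_mul_distrib, Finset.prod_const, hcardE i,
              Complex.exp_sum]
    rw [e1, hθmτ, hprod, hEi i x]
    have hexp : Complex.exp (2 * π' * I * (u i - x + α - S) - π' * I * τ) *
        Complex.exp (2 * π' * I * (S - u i) - 2 * π' * I * ((n : ℂ) - 1) * x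
          - π' * I * ((n : ℂ) - 1) * τ)
        = Complex.exp (2 * π' * I * α) *
          Complex.exp (-(2 * π' * I * (n : ℂ) * x) - π' * I * (n : ℂ) * τ) := by
      rw [← Complex.exp_add, ← Complex.exp_add]
      congr 1
      ring
    calc P (u i) * (-Complex.exp (2 * π' * I * (u i - x + α - S) - π' * I * τ) * θ (u i - x + α - S) / θ (α - S)) *
          (((-1 : ℂ) ^ (n - 1) * Complex.exp (2 * π' * I * (S - u i) - 2 * π' * I * ((n : ℂ) - 1) * x
            - π' * I * ((n : ℂ) - 1) * τ)) *
            ∏ k ∈ Finset.univ.erase i, θ (u k - x) / θ (u k - u i))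
        = ((-1 : ℂ) * (-1 : ℂ) ^ (n - 1)) *
            (Complex.exp (2 * π' * I * (u i - x + α - S) - π' * I * τ) *
              Complex.exp (2 * π' * I * (S - u i) - 2 * π' * I * ((n : ℂ) - 1) * x
                - π' * I * ((n : ℂ) - 1) * τ)) *
            (P (u i) * (θ (u i - x + α - S) / θ (α - S)) *
              ∏ k ∈ Finset.univ.erase i, θ (u k - x) / θ (u k - u i)) := by ring
      _ = _ := by
          rw [hpow, hexp]
          ring
  -- quasi-periodicity of D
  have hD1 : ∀ x : ℂ, D (x + 1) = (-1 : ℂ) ^ n * D x := by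
    intro x
    rw [hD]
    simp only
    calc (∏ k : Fin n, θ (u k - (x + 1))) = ∏ k : Fin n, ((-1 : ℂ) * θ (u k - x)) := by
          refine Finset.prod_congr rfl ?_
          intro k _
          have e2 : u k - (x + 1) = (u k - x) - 1 := by ring
          rw [e2, hθm1, neg_one_mul]
      _ = (-1 : ℂ) ^ n * ∏ k : Fin n, θ (u k - x) := by
          rw [Finset.prod_mul_distrib, Finset.prod_const, Finset.card_univ, Fintype.card_fin]
  have hEuniv : ∀ x : ℂ, ∑ k : Fin n, (2 * π' * I * (u k - x) - π' * I * τ)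
      = 2 * π' * I * S - 2 * π' * I * (n : ℂ) * x - π' * I * (n : ℂ) * τ := by
    intro x
    rw [Finset.sum_sub_distrib, ← Finset.mul_sum, Finset.sum_sub_distrib, ← hS,
      Finset.sum_const, Finset.card_univ, Fintype.card_fin, Finset.sum_const,
      Finset.card_univ, Fintype.card_fin, nsmul_eq_mul, nsmul_eq_mul]
    ring
  have hDτ : ∀ x : ℂ, D (x + τ) = (-1 : ℂ) ^ n *
      Complex.exp (2 * π' * I * S - 2 * π' * I * (n : ℂ) * x - π' * I * (n : ℂ) * τ) * D x := by
    intro x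
    rw [hD]
    simp only
    calc (∏ k : Fin n, θ (u k - (x + τ)))
        = ∏ k : Fin n, (((-1 : ℂ) * Complex.exp (2 * π' * I * (u k - x) - π' * I * τ)) *
            θ (u k - x)) := by
          refine Finset.prod_congr rfl ?_
          intro k _
          have e2 : u k - (x + τ) = (u k - x) - τ := by ring
          rw [e2, hθmτ]
          ring
      _ = ((-1 : ℂ) ^ n * Complex.exp (∑ k : Fin n, (2 * π' * I * (u k - x) - π' * I * τ))) *
            ∏ k : Fin n, θ (u k - x) := by
          rw [Finset.prod_mul_distrib, Finset.prod_mul_distrib, Finset.prod_const,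
            Finset.card_univ, Fintype.card_fin, Complex.exp_sum]
      _ = (-1 : ℂ) ^ n *
          Complex.exp (2 * π' * I * S - 2 * π' * I * (n : ℂ) * x - π' * I * (n : ℂ) * τ) *
            ∏ k : Fin n, θ (u k - x) := by
          rw [hEuniv x]
  -- quasi-periodicity of F and vanishing
  have hF1 : ∀ x : ℂ, F (x + 1) = (-1 : ℂ) ^ n * F x := by
    intro x
    rw [hF]
    simp only
    rw [hP1, hR1]
    ring
  have hFτ : ∀ x : ℂ, F (x + τ) = (-1 : ℂ) ^ n * Complex.exp (2 * π' * I * α) *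
      Complex.exp (-(2 * π' * I * (n : ℂ) * x) - π' * I * (n : ℂ) * τ) * F x := by
    intro x
    rw [hF]
    simp only
    rw [hPτ, hRτ]
    ring
  have hF0 : ∀ j : Fin n, F (u j) = 0 := by
    intro j
    rw [hF]
    simp only
    rw [sub_eq_zero]
    rw [hR]
    simp only
    rw [Finset.sum_eq_single_of_mem j (Finset.mem_univ j)]
    · have e1 : u j - u j + α - S = α - S := by ring
      rw [e1, div_self hθβ]
      have hprod1 : (∏ k ∈ Finset.univ.erase j, θ (u k - u j) / θ (u k - u j)) = 1 := by
        refine Finset.prod_eq_one ?_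
        intro k hk
        exact div_self (huij j k (Finset.mem_erase.mp hk).1)
      rw [hprod1]
      ring
    · intro i _ hij
      have hjmem : j ∈ Finset.univ.erase i := Finset.mem_erase.mpr ⟨hij.symm, Finset.mem_univ j⟩
      have hzero : θ (u j - u j) / θ (u j - u i) = 0 := by
        rw [sub_self, hθ0', zero_div]
      rw [Finset.prod_eq_zero hjmem hzero, mul_zero]
  have hFiff1 : ∀ x : ℂ, F (x + 1) = 0 ↔ F x = 0 := by
    intro x
    rw [hF1 x]
    constructor
    · intro h
      rcases mul_eq_zero.mp h with h' | h'
      · exact absurd h' (pow_ne_zero _ (neg_ne_zero.mpr one_ne_zero))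
      · exact h'
    · intro h; rw [h, mul_zero]
  have hFiffτ : ∀ x : ℂ, F (x + τ) = 0 ↔ F x = 0 := by
    intro x
    rw [hFτ x]
    constructor
    · intro h
      rcases mul_eq_zero.mp h with h' | h'
      · exfalso
        rcases mul_eq_zero.mp h' with h'' | h''
        · rcases mul_eq_zero.mp h'' with h3 | h3
          · exact (pow_ne_zero _ (neg_ne_zero.mpr one_ne_zero)) h3
          · exact (Complex.exp_ne_zero _) h3
        · exact (Complex.exp_ne_zero _) h''
      · exact h'
    · intro h; rw [h, mul_zero]
  have hFvanΓ : ∀ (k : Fin n) (z : ℂ), u k - z ∈ latticeGamma τ → F z = 0 := by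
    intro k z ⟨a, b, hab⟩
    have h1 := EllipticInterpAux.zshift F 1 hFiff1 a z
    have h2 := EllipticInterpAux.zshift F τ hFiffτ b (z + (a : ℂ) * 1)
    have e : z + (a : ℂ) * 1 + (b : ℂ) * τ = u k := by
      have : u k - z = (a : ℂ) + (b : ℂ) * τ := hab
      linear_combination -this
    rw [e] at h2
    rw [← h1, ← h2]
    exact hF0 k
  -- divide out the theta factors
  have hderivsub : ∀ w z : ℂ, deriv (fun z => θ (w - z)) z = -deriv θ (w - z) := by
    intro w z
    have h1 : HasDerivAt (fun z : ℂ => w - z) (-1) z := (hasDerivAt_id z).const_sub w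
    have h2 : HasDerivAt θ (deriv θ (w - z)) (w - z) := (hθdiff (w - z)).hasDerivAt
    have h3 := h2.comp z h1
    have h4 : HasDerivAt (fun z : ℂ => θ (w - z)) (deriv θ (w - z) * (-1)) z := h3
    rw [h4.deriv]
    ring
  obtain ⟨G, hGd, hFDG⟩ := EllipticInterpAux.div_entire_finset Finset.univ
    (fun k z => θ (u k - z)) F hFd (fun k => hθdiff.comp (by fun_prop))
    (by
      intro k _ z hz
      have : deriv (fun z => θ (u k - z)) z = -deriv θ (u k - z) := hderivsub (u k) z
      rw [this]
      exact neg_ne_zero.mpr (hθsimple _ ((hθzero _).mp hz)))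
    (fun k _ z hz => hFvanΓ k z ((hθzero _).mp hz))
    (by
      intro i _ j _ hij z hzi hzj
      have h1 : u i - z ∈ latticeGamma τ := (hθzero _).mp hzi
      have h2 : u j - z ∈ latticeGamma τ := (hθzero _).mp hzj
      have h3 := EllipticInterpAux.lg_sub h1 h2
      have e : u i - z - (u j - z) = u i - u j := by ring
      rw [e] at h3
      exact hu i j hij h3)
  have hFD : ∀ z : ℂ, F z = D z * G z := fun z => hFDG z
  -- dense set where D does not vanish
  set Bad : Set ℂ := ⋃ k : Fin n, (fun γ => u k - γ) '' latticeGamma τ with hBad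
  have hBadc : Bad.Countable :=
    Set.countable_iUnion (fun k => EllipticInterpAux.lg_countable.image _)
  have hdense : Dense Badᶜ := hBadc.dense_compl ℂ
  have hDne : ∀ x ∈ Badᶜ, D x ≠ 0 := by
    intro x hx hD0
    rw [hD] at hD0
    simp only at hD0
    obtain ⟨k, -, hθk⟩ := Finset.prod_eq_zero_iff.mp hD0
    exact hx (Set.mem_iUnion.mpr ⟨k, ⟨u k - x, (hθzero _).mp hθk, by ring⟩⟩)
  have hneg1 : ((-1 : ℂ) ^ n) ≠ 0 := pow_ne_zero _ (neg_ne_zero.mpr one_ne_zero)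
  -- periodicity of G
  have hG1 : ∀ x : ℂ, G (x + 1) = G x := by
    have hfun : (fun x => G (x + 1)) = G := by
      apply Continuous.ext_on hdense
        ((hGd.comp (differentiable_id.add_const 1)).continuous) hGd.continuous
      intro x hx
      have hDx := hDne x hx
      have h1 : F (x + 1) = D (x + 1) * G (x + 1) := hFD (x + 1)
      rw [hD1 x, hF1 x, hFD x] at h1
      have key : ((-1 : ℂ) ^ n * D x) * G (x + 1) = ((-1 : ℂ) ^ n * D x) * G x := by
        linear_combination -h1
      exact mul_left_cancel₀ (mul_ne_zero hneg1 hDx) key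
    exact fun x => congrFun hfun x
  set cβ : ℂ := Complex.exp (2 * π' * I * (α - S)) with hcβ
  have hGτ : ∀ x : ℂ, G (x + τ) = cβ * G x := by
    have hfun : (fun x => G (x + τ)) = fun x => cβ * G x := by
      apply Continuous.ext_on hdense
        ((hGd.comp (differentiable_id.add_const τ)).continuous)
        (continuous_const.mul hGd.continuous)
      intro x hx
      have hDx := hDne x hx
      have h1 : F (x + τ) = D (x + τ) * G (x + τ) := hFD (x + τ)
      rw [hDτ x, hFτ x, hFD x] at h1
      have hexpc : Complex.exp (2 * π' * I * α) *
          Complex.exp (-(2 * π' * I * (n : ℂ) * x) - π' * I * (n : ℂ) * τ)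
          = cβ * Complex.exp (2 * π' * I * S - 2 * π' * I * (n : ℂ) * x - π' * I * (n : ℂ) * τ) := by
        rw [hcβ, ← Complex.exp_add, ← Complex.exp_add]
        congr 1
        ring
      have hne : ((-1 : ℂ) ^ n *
          Complex.exp (2 * π' * I * S - 2 * π' * I * (n : ℂ) * x - π' * I * (n : ℂ) * τ) * D x) ≠ 0 :=
        mul_ne_zero (mul_ne_zero hneg1 (Complex.exp_ne_zero _)) hDx
      show G (x + τ) = cβ * G x
      apply mul_left_cancel₀ hne
      calc ((-1 : ℂ) ^ n *
            Complex.exp (2 * π' * I * S - 2 * π' * I * (n : ℂ) * x - π' * I * (n : ℂ) * τ) * D x) *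
             G (x + τ)
          = (-1 : ℂ) ^ n * Complex.exp (2 * π' * I * α) *
              Complex.exp (-(2 * π' * I * (n : ℂ) * x) - π' * I * (n : ℂ) * τ) * (D x * G x) := by
            linear_combination -h1
        _ = _ := by
            linear_combination ((-1 : ℂ) ^ n * D x * G x) * hexpc
    exact fun x => congrFun hfun x
  -- Now show G vanishes identically
  have hcβ0 : cβ ≠ 0 := Complex.exp_ne_zero _
  have hGiff1 : ∀ x : ℂ, G (x + 1) = 0 ↔ G x = 0 := fun x => by rw [hG1 x]
  have hGiffτ : ∀ x : ℂ, G (x + τ) = 0 ↔ G x = 0 := by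
    intro x
    rw [hGτ x]
    constructor
    · intro h; exact (mul_eq_zero.mp h).resolve_left hcβ0
    · intro h; rw [h, mul_zero]
  have hGzero : ∀ z : ℂ, G z = 0 := by
    by_cases hex : ∃ z₀, G z₀ = 0
    · obtain ⟨z₀, hz₀⟩ := hex
      have hGvan : ∀ z : ℂ, z - z₀ ∈ latticeGamma τ → G z = 0 := by
        intro z ⟨a, b, hab⟩
        have h1 := EllipticInterpAux.zshift G 1 hGiff1 a z₀
        have h2 := EllipticInterpAux.zshift G τ hGiffτ b (z₀ + (a : ℂ) * 1)
        have e : z₀ + (a : ℂ) * 1 + (b : ℂ) * τ = z := by linear_combination -hab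
        rw [e] at h2
        rw [← h1, ← h2] at hz₀
        exact hz₀
      have hdsub : ∀ z : ℂ, deriv (fun z => θ (z - z₀)) z = deriv θ (z - z₀) := by
        intro z
        have h1 : HasDerivAt (fun z : ℂ => z - z₀) 1 z := (hasDerivAt_id z).sub_const z₀
        have h2 : HasDerivAt θ (deriv θ (z - z₀)) (z - z₀) := (hθdiff (z - z₀)).hasDerivAt
        have h3 : HasDerivAt (fun z : ℂ => θ (z - z₀)) (deriv θ (z - z₀) * 1) z := h2.comp z h1
        rw [h3.deriv]
        ring
      have hgd : Differentiable ℂ (fun z : ℂ => θ (z - z₀)) :=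
        hθdiff.comp (differentiable_id.sub_const z₀)
      obtain ⟨H, hHd, hGH⟩ := EllipticInterpAux.div_entire hGd hgd
        (fun z hz => hGvan z ((hθzero _).mp hz))
        (fun z hz => by
          rw [hdsub z]
          exact hθsimple _ ((hθzero _).mp hz))
      -- dense complement of z₀ + Γ
      have hBad1c : ((fun γ : ℂ => z₀ + γ) '' latticeGamma τ).Countable :=
        EllipticInterpAux.lg_countable.image _
      have hdense1 : Dense ((fun γ : ℂ => z₀ + γ) '' latticeGamma τ)ᶜ := hBad1c.dense_compl ℂ
      have hθz₀ : ∀ x ∈ ((fun γ : ℂ => z₀ + γ) '' latticeGamma τ)ᶜ, θ (x - z₀) ≠ 0 := by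
        intro x hx h
        exact hx ⟨x - z₀, (hθzero _).mp h, by ring⟩
      have hH1 : ∀ x : ℂ, H (x + 1) = -H x := by
        have hfun : (fun x => H (x + 1)) = fun x => -H x := by
          apply Continuous.ext_on hdense1
            ((hHd.comp (differentiable_id.add_const 1)).continuous) hHd.continuous.neg
          intro x hx
          have hθx := hθz₀ x hx
          have e1 : G (x + 1) = θ (x + 1 - z₀) * H (x + 1) := hGH (x + 1)
          have e2 : x + 1 - z₀ = (x - z₀) + 1 := by ring
          rw [e2, hθ1, hG1 x, hGH x] at e1
          show H (x + 1) = -H x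
          have key : θ (x - z₀) * H (x + 1) = θ (x - z₀) * (-H x) := by
            linear_combination e1
          exact mul_left_cancel₀ hθx key
        exact fun x => congrFun hfun x
      have hHτ : ∀ x : ℂ, H (x + τ) =
          -cβ * Complex.exp (2 * π' * I * (x - z₀) + π' * I * τ) * H x := by
        have hfun : (fun x => H (x + τ)) =
            fun x => -cβ * Complex.exp (2 * π' * I * (x - z₀) + π' * I * τ) * H x := by
          apply Continuous.ext_on hdense1
            ((hHd.comp (differentiable_id.add_const τ)).continuous)
          · apply Continuous.mul _ hHd.continuous
            apply Continuous.mul continuous_const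
            apply Complex.continuous_exp.comp
            fun_prop
          intro x hx
          have hθx := hθz₀ x hx
          have e1 : G (x + τ) = θ (x + τ - z₀) * H (x + τ) := hGH (x + τ)
          have e2 : x + τ - z₀ = (x - z₀) + τ := by ring
          rw [e2, hθτ, hGτ x, hGH x] at e1
          show H (x + τ) = -cβ * Complex.exp (2 * π' * I * (x - z₀) + π' * I * τ) * H x
          have hexpne : Complex.exp (-(2 * π' * I * (x - z₀)) - π' * I * τ) ≠ 0 :=
            Complex.exp_ne_zero _
          have key : (Complex.exp (-(2 * π' * I * (x - z₀)) - π' * I * τ) * θ (x - z₀)) * H (x + τ)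
              = (Complex.exp (-(2 * π' * I * (x - z₀)) - π' * I * τ) * θ (x - z₀)) *
                (-cβ * Complex.exp (2 * π' * I * (x - z₀) + π' * I * τ) * H x) := by
            have hee : Complex.exp (-(2 * π' * I * (x - z₀)) - π' * I * τ) *
                Complex.exp (2 * π' * I * (x - z₀) + π' * I * τ) = 1 := by
              rw [← Complex.exp_add]
              rw [show -(2 * π' * I * (x - z₀)) - π' * I * τ +
                (2 * π' * I * (x - z₀) + π' * I * τ) = 0 by ring]
              exact Complex.exp_zero
            calc (Complex.exp (-(2 * π' * I * (x - z₀)) - π' * I * τ) * θ (x - z₀)) * H (x + τ)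
                = -(cβ * θ (x - z₀) * H x) := by linear_combination e1
              _ = -(Complex.exp (-(2 * π' * I * (x - z₀)) - π' * I * τ) *
                    Complex.exp (2 * π' * I * (x - z₀) + π' * I * τ)) *
                    (cβ * θ (x - z₀) * H x) := by rw [hee]; ring
              _ = _ := by ring
          exact mul_left_cancel₀ (mul_ne_zero hexpne hθx) key
        exact fun x => congrFun hfun x
      set K : ℂ → ℂ := fun x => H x * θ (x - z₀ + (α - S)) with hKdef
      have hKd : Differentiable ℂ K :=
        hHd.mul (hθdiff.comp (by fun_prop))
      have hK1 : ∀ x : ℂ, K (x + 1) = K x := by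
        intro x
        rw [hKdef]
        simp only
        rw [hH1 x, show x + 1 - z₀ + (α - S) = (x - z₀ + (α - S)) + 1 by ring, hθ1]
        ring
      have hKτ : ∀ x : ℂ, K (x + τ) = K x := by
        intro x
        rw [hKdef]
        simp only
        rw [hHτ x, show x + τ - z₀ + (α - S) = (x - z₀ + (α - S)) + τ by ring, hθτ]
        have hee : cβ * (Complex.exp (2 * π' * I * (x - z₀) + π' * I * τ) *
            Complex.exp (-(2 * π' * I * (x - z₀ + (α - S))) - π' * I * τ)) = 1 := by
          rw [hcβ, ← Complex.exp_add, ← Complex.exp_add]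
          rw [show 2 * π' * I * (α - S) + (2 * π' * I * (x - z₀) + π' * I * τ +
            (-(2 * π' * I * (x - z₀ + (α - S))) - π' * I * τ)) = 0 by ring]
          exact Complex.exp_zero
        calc -cβ * Complex.exp (2 * π' * I * (x - z₀) + π' * I * τ) * H x *
              (-Complex.exp (-(2 * π' * I * (x - z₀ + (α - S))) - π' * I * τ) *
                θ (x - z₀ + (α - S)))
            = (cβ * (Complex.exp (2 * π' * I * (x - z₀) + π' * I * τ) *
                Complex.exp (-(2 * π' * I * (x - z₀ + (α - S))) - π' * I * τ))) *
                (H x * θ (x - z₀ + (α - S))) := by ring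
          _ = H x * θ (x - z₀ + (α - S)) := by rw [hee]; ring
      have hKconst := EllipticInterpAux.elliptic_const hτ hKd hK1 hKτ
      have hKzero : ∀ x : ℂ, K x = 0 := by
        intro x
        have h := hKconst x (z₀ - (α - S))
        rw [h, hKdef]
        simp only
        rw [show z₀ - (α - S) - z₀ + (α - S) = 0 by ring, hθ0', mul_zero]
      have hBad2c : ((fun γ : ℂ => z₀ - (α - S) + γ) '' latticeGamma τ).Countable :=
        EllipticInterpAux.lg_countable.image _
      have hdense2 : Dense ((fun γ : ℂ => z₀ - (α - S) + γ) '' latticeGamma τ)ᶜ :=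
        hBad2c.dense_compl ℂ
      have hH0 : ∀ x : ℂ, H x = 0 := by
        have hfun : H = fun _ => (0 : ℂ) := by
          apply Continuous.ext_on hdense2 hHd.continuous continuous_const
          intro x hx
          have hθx : θ (x - z₀ + (α - S)) ≠ 0 := by
            intro h
            exact hx ⟨x - z₀ + (α - S), (hθzero _).mp h, by ring⟩
          have h := hKzero x
          rw [hKdef] at h
          simp only at h
          exact (mul_eq_zero.mp h).resolve_right hθx
        exact fun x => congrFun hfun x
      intro z
      rw [hGH z, hH0 z, mul_zero]
    · push_neg at hex
      exfalso
      -- G is nowhere zero: it must be an exponential, contradicting α - S ∉ Γ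
      have hGan : ∀ x : ℂ, AnalyticAt ℂ G x := fun x => hGd.analyticAt x
      have hGnhd : AnalyticOnNhd ℂ G Set.univ := fun x _ => hGan x
      have hG'd : Differentiable ℂ (deriv G) :=
        fun x => (hGnhd.deriv x (Set.mem_univ x)).differentiableAt
      have hG'1 : ∀ x : ℂ, deriv G (x + 1) = deriv G x := by
        intro x
        have hfe : (fun x => G (x + 1)) = G := funext hG1
        calc deriv G (x + 1) = deriv (fun x => G (x + 1)) x := (deriv_comp_add_const G 1 x).symm
          _ = deriv G x := by rw [hfe]
      have hG'τ : ∀ x : ℂ, deriv G (x + τ) = cβ * deriv G x := by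
        intro x
        have hfe : (fun x => G (x + τ)) = fun x => cβ * G x := funext hGτ
        calc deriv G (x + τ) = deriv (fun x => G (x + τ)) x := (deriv_comp_add_const G τ x).symm
          _ = deriv (fun x => cβ * G x) x := by rw [hfe]
          _ = cβ * deriv G x := by rw [deriv_const_mul cβ (hGd x)]
      set L : ℂ → ℂ := fun x => deriv G x / G x with hL
      have hLd : Differentiable ℂ L := hG'd.div hGd hex
      have hL1 : ∀ x : ℂ, L (x + 1) = L x := by
        intro x; rw [hL]; simp only; rw [hG'1 x, hG1 x]
      have hLτ : ∀ x : ℂ, L (x + τ) = L x := by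
        intro x; rw [hL]; simp only; rw [hG'τ x, hGτ x, mul_div_mul_left _ _ hcβ0]
      have hLconst := EllipticInterpAux.elliptic_const hτ hLd hL1 hLτ
      set a : ℂ := L 0 with ha
      have hG' : ∀ x : ℂ, deriv G x = a * G x := by
        intro x
        have h2 : deriv G x / G x = a := hLconst x 0
        exact (div_eq_iff (hex x)).mp h2
      set ψ : ℂ → ℂ := fun x => G x * Complex.exp (-(a * x)) with hψdef
      have hψderiv : ∀ x : ℂ, HasDerivAt ψ 0 x := by
        intro x
        have h1 : HasDerivAt G (a * G x) x := by
          rw [← hG' x]; exact (hGd x).hasDerivAt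
        have h2 : HasDerivAt (fun x : ℂ => -(a * x)) (-a) x := by
          simpa using ((hasDerivAt_id x).const_mul a).fun_neg
        have h3 := h2.cexp
        have h4 : HasDerivAt (fun y => G y * Complex.exp (-(a * y)))
            (a * G x * Complex.exp (-(a * x)) + G x * (Complex.exp (-(a * x)) * -a)) x := h1.mul h3
        convert h4 using 1
        ring
      have hψd : Differentiable ℂ ψ := fun x => (hψderiv x).differentiableAt
      have hψconst : ∀ x : ℂ, ψ x = ψ 0 := fun x =>
        is_const_of_deriv_eq_zero hψd (fun y => (hψderiv y).deriv) x 0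
      have hGform : ∀ x : ℂ, G x = G 0 * Complex.exp (a * x) := by
        intro x
        have h := hψconst x
        rw [hψdef] at h
        simp only at h
        rw [mul_zero, neg_zero, Complex.exp_zero, mul_one] at h
        calc G x = G x * Complex.exp (-(a * x)) * Complex.exp (a * x) := by
              rw [mul_assoc, ← Complex.exp_add]
              simp
          _ = G 0 * Complex.exp (a * x) := by rw [h]
      have hexpa : Complex.exp a = 1 := by
        have h := hG1 0
        rw [zero_add, hGform 1, hGform 0, mul_one, mul_zero, Complex.exp_zero, mul_one] at h
        exact mul_left_cancel₀ (hex 0) (h.trans (mul_one (G 0)).symm)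
      obtain ⟨l, hl⟩ := Complex.exp_eq_one_iff.mp hexpa
      have hexpaτ : Complex.exp (a * τ) = cβ := by
        have h := hGτ 0
        rw [zero_add, hGform τ, hGform 0, mul_zero, Complex.exp_zero, mul_one] at h
        exact mul_left_cancel₀ (hex 0) (by linear_combination h)
      have hexp3 : Complex.exp (a * τ - 2 * π' * I * (α - S)) = 1 := by
        rw [Complex.exp_sub, hexpaτ, hcβ, div_self (Complex.exp_ne_zero _)]
      obtain ⟨m, hm⟩ := Complex.exp_eq_one_iff.mp hexp3
      apply hβ
      refine ⟨-m, l, ?_⟩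
      have h2πI : (2 : ℂ) * π' * I ≠ 0 := by
        apply mul_ne_zero (mul_ne_zero two_ne_zero _) Complex.I_ne_zero
        rw [hπ']
        exact_mod_cast Real.pi_ne_zero
      have hfin : (2 * π' * I) * ((α - S) - (((-m : ℤ) : ℂ) + (l : ℂ) * τ)) = 0 := by
        push_cast
        linear_combination τ * hl - hm
      have h4 := (mul_eq_zero.mp hfin).resolve_left h2πI
      linear_combination h4
  intro x
  have h := hFD x
  rw [hGzero x, mul_zero] at h
  have h2 : P x - R x = 0 := h
  linear_combination h2

end
end

section
/- Theta-function addition formula: for λ ∈ ℂ ∖ Γ define G_λ(x) = θ(x+λ)/(θ(x)θ(λ)). Let n ≥ 1, λ_1,…,λ_n ∈ ℂ with λ_i ∉ Γ for all i and λ_0 := Σ_{i=1}^n λ_i ∉ Γ, and let u_1,…,u_n, v ∈ ℂ with u_i − u_j ∉ Γ for all i ≠ j and u_i − v ∉ Γ for all i. Then ∏_{i=1}^n G_{λ_i}(u_i − v) = Σ_{i=1}^n ( ∏_{j≠i} G_{λ_j}(u_j − u_i) ) · G_{λ_0}(u_i − v). -/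
open Complex BigOperators Topology

noncomputable section

/-- `G_λ(x) = θ(x + λ)/(θ(x)·θ(λ))`. -/
def Gfun (θ : ℂ → ℂ) (lam x : ℂ) : ℂ := θ (x + lam) / (θ x * θ lam)

namespace ThetaAux

lemma lat_sub {τ x y : ℂ} (hx : x ∈ latticeGamma τ) (hy : y ∈ latticeGamma τ) :
    x - y ∈ latticeGamma τ := by
  obtain ⟨a, b, rfl⟩ := hx
  obtain ⟨c, d, rfl⟩ := hy
  exact ⟨a - c, b - d, by push_cast; ring⟩

lemma elliptic_const {τ : ℂ} (hτ : 0 < τ.im) {F : ℂ → ℂ} (hF : Differentiable ℂ F)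
    (h1 : ∀ w, F (w + 1) = F w) (h2 : ∀ w, F (w + τ) = F w) : ∀ z w, F z = F w := by
  have hp1 : Function.Periodic F 1 := h1
  have hpτ : Function.Periodic F τ := h2
  set g : ℝ × ℝ → ℂ := fun p => (p.1 : ℂ) + (p.2 : ℂ) * τ with hg
  have hgc : Continuous g := by fun_prop
  set K : Set ℂ := g '' (Set.Icc (0:ℝ) 1 ×ˢ Set.Icc (0:ℝ) 1) with hK
  have hKcomp : IsCompact K := (isCompact_Icc.prod isCompact_Icc).image hgc
  have hrange : Set.range F ⊆ F '' K := by
    rintro y ⟨z, rfl⟩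
    set b : ℝ := z.im / τ.im with hb
    set a : ℝ := z.re - b * τ.re with ha
    have hz : z = (a : ℂ) + (b : ℂ) * τ := by
      apply Complex.ext
      · simp [ha]
      · simp [hb, div_mul_cancel₀ _ (ne_of_gt hτ)]
    refine ⟨g (Int.fract a, Int.fract b), ⟨(Int.fract a, Int.fract b),
      ⟨⟨Int.fract_nonneg a, (Int.fract_lt_one a).le⟩,
       ⟨Int.fract_nonneg b, (Int.fract_lt_one b).le⟩⟩, rfl⟩, ?_⟩
    have key : z = (g (Int.fract a, Int.fract b) + (⌊a⌋ : ℤ) * (1:ℂ)) + (⌊b⌋ : ℤ) * τ := by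
      rw [hz, hg]
      have ha' : (a : ℂ) = ((⌊a⌋ : ℝ) : ℂ) + ((Int.fract a : ℝ) : ℂ) := by
        rw [← Complex.ofReal_add, Int.floor_add_fract]
      have hb' : (b : ℂ) = ((⌊b⌋ : ℝ) : ℂ) + ((Int.fract b : ℝ) : ℂ) := by
        rw [← Complex.ofReal_add, Int.floor_add_fract]
      rw [ha', hb']
      push_cast
      ring
    rw [key, hpτ.int_mul ⌊b⌋ _, hp1.int_mul ⌊a⌋ _]
  have hbd : Bornology.IsBounded (Set.range F) :=
    ((hKcomp.image hF.continuous).isBounded).subset hrange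
  exact fun z w => hF.apply_eq_apply_of_bounded hbd z w


lemma quasi_zero {τ lam0 : ℂ} (hτ : 0 < τ.im) (hlam0 : lam0 ∉ latticeGamma τ)
    {F : ℂ → ℂ} (hF : Differentiable ℂ F)
    (h1 : ∀ w, F (w + 1) = F w)
    (h2 : ∀ w, F (w + τ) = Complex.exp (2 * (Real.pi : ℂ) * Complex.I * lam0) * F w) :
    ∀ w, F w = 0 := by
  set c : ℂ := Complex.exp (2 * (Real.pi : ℂ) * Complex.I * lam0) with hc
  have hcne : c ≠ 0 := Complex.exp_ne_zero _
  have h1' : ∀ w, F (w - 1) = F w := by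
    intro w; have := h1 (w - 1); rw [sub_add_cancel] at this; exact this.symm
  have h2' : ∀ w, F (w - τ) = c⁻¹ * F w := by
    intro w; have := h2 (w - τ); rw [sub_add_cancel] at this
    rw [this]; field_simp
  by_cases hz : ∃ w0, F w0 = 0
  · obtain ⟨w0, hw0⟩ := hz
    intro w
    set g : ℂ → ℂ := fun z => F z * F (2 * w - z) with hgdef
    have hgd : Differentiable ℂ g :=
      hF.mul (hF.comp ((differentiable_const (2*w)).sub differentiable_id))
    have hg1 : ∀ z, g (z + 1) = g z := by
      intro z
      have : 2 * w - (z + 1) = (2 * w - z) - 1 := by ring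
      simp only [hgdef, this, h1, h1']
    have hgτ : ∀ z, g (z + τ) = g z := by
      intro z
      have e : 2 * w - (z + τ) = (2 * w - z) - τ := by ring
      simp only [hgdef, e, h2, h2']
      field_simp
    have := elliptic_const hτ hgd hg1 hgτ w w0
    have hgw : F w * F w = 0 := by
      have e : 2 * w - w = w := by ring
      simpa [hgdef, e, hw0] using this
    exact mul_self_eq_zero.mp hgw
  · push_neg at hz
    exfalso
    have hFan : AnalyticOnNhd ℂ F Set.univ := analyticOnNhd_univ_iff_differentiable.mpr hF
    have hF' : Differentiable ℂ (deriv F) :=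
      analyticOnNhd_univ_iff_differentiable.mp hFan.deriv
    have hd1 : ∀ z, deriv F (z + 1) = deriv F z := by
      intro z
      have hfun : (fun z => F (z + 1)) = F := funext h1
      rw [← deriv_comp_add_const F 1 z, hfun]
    have hdτ : ∀ z, deriv F (z + τ) = c * deriv F z := by
      intro z
      have hfun : (fun z => F (z + τ)) = fun z => c * F z := funext h2
      rw [← deriv_comp_add_const F τ z, hfun, deriv_const_mul _ (hF z)]
    set G : ℂ → ℂ := fun z => deriv F z / F z with hGdef
    have hGd : Differentiable ℂ G := hF'.div hF hz
    have hG1 : ∀ z, G (z + 1) = G z := fun z => by simp only [hGdef, hd1, h1]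
    have hGτ : ∀ z, G (z + τ) = G z := fun z => by
      simp only [hGdef, hdτ, h2]; rw [mul_div_mul_left _ _ hcne]
    set k : ℂ := G 0 with hk
    have hFk : ∀ z, deriv F z = k * F z := by
      intro z
      have := elliptic_const hτ hGd hG1 hGτ z 0
      rw [hGdef] at this
      simp only at this
      rw [div_eq_iff (hz z)] at this
      have hkk : k = deriv F 0 / F 0 := rfl
      rw [hkk]; exact this
    set φ : ℂ → ℂ := fun z => F z * Complex.exp (-(k * z)) with hφdef
    have hφd : Differentiable ℂ φ :=
      hF.mul (((differentiable_id.const_mul k).neg).cexp)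
    have hφ' : ∀ z, deriv φ z = 0 := by
      intro z
      have hinner : HasDerivAt (fun z : ℂ => -(k * z)) (-k) z := by
        exact (((hasDerivAt_id z).const_mul k).neg).congr_deriv (by simp)
      have hexp : HasDerivAt (fun z : ℂ => Complex.exp (-(k * z)))
          (Complex.exp (-(k * z)) * (-k)) z := hinner.cexp
      have hmul := ((hF z).hasDerivAt).mul hexp
      have key : deriv F z * Complex.exp (-(k * z)) + F z * (Complex.exp (-(k * z)) * (-k)) = 0 := by
        rw [hFk z]; ring
      rw [key] at hmul
      exact hmul.deriv
    have hconst : ∀ z, φ z = φ 0 := fun z => is_const_of_deriv_eq_zero hφd hφ' z 0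
    have hFform : ∀ z, F z = F 0 * Complex.exp (k * z) := by
      intro z
      have h := hconst z
      simp only [hφdef, mul_zero, neg_zero, Complex.exp_zero, mul_one] at h
      calc F z = F z * (Complex.exp (-(k * z)) * Complex.exp (k * z)) := by
            rw [← Complex.exp_add]; simp
        _ = F 0 * Complex.exp (k * z) := by rw [← mul_assoc, h]
    have hexpk : Complex.exp k = 1 := by
      have := h1 0
      rw [zero_add] at this
      rw [hFform 1, hFform 0] at this
      simp only [mul_one, mul_zero, Complex.exp_zero] at this
      exact mul_left_cancel₀ (hz 0) (by simpa using this)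
    have hexpkτ : Complex.exp (k * τ) = c := by
      have := h2 0
      rw [zero_add] at this
      rw [hFform τ, hFform 0] at this
      simp only [mul_zero, Complex.exp_zero, mul_one] at this
      exact mul_left_cancel₀ (hz 0) (by rw [this]; ring)
    obtain ⟨m, hm⟩ := Complex.exp_eq_one_iff.mp hexpk
    have hdiv : Complex.exp (k * τ - 2 * (Real.pi:ℂ) * Complex.I * lam0) = 1 := by
      rw [Complex.exp_sub, hexpkτ, hc, div_self hcne]
    obtain ⟨j, hj⟩ := Complex.exp_eq_one_iff.mp hdiv
    apply hlam0
    refine ⟨-j, m, ?_⟩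
    have h2pi : (2 * (Real.pi:ℂ) * Complex.I) ≠ 0 := Complex.two_pi_I_ne_zero
    apply mul_left_cancel₀ h2pi
    rw [hm] at hj
    push_cast
    linear_combination -hj

lemma exists_entire_quotient {D P : ℂ → ℂ} (hD : Differentiable ℂ D) (hP : Differentiable ℂ P)
    (hzero : ∀ p, P p = 0 → D p = 0) (hsimple : ∀ p, P p = 0 → deriv P p ≠ 0) :
    ∃ F : ℂ → ℂ, Differentiable ℂ F ∧ ∀ v, P v ≠ 0 → F v = D v / P v := by
  classical
  refine ⟨fun v => if P v = 0 then deriv D v / deriv P v else D v / P v, ?_, ?_⟩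
  · intro p
    by_cases hp : P p = 0
    · set g : ℂ → ℂ := fun v => dslope D p v / dslope P p v with hgdef
      have hDsl : DifferentiableAt ℂ (dslope D p) p := by
        obtain ⟨q, hq⟩ := (analyticOnNhd_univ_iff_differentiable.mpr hD) p (Set.mem_univ p)
        exact (HasFPowerSeriesAt.has_fpower_series_dslope_fslope hq).analyticAt.differentiableAt
      have hPsl : DifferentiableAt ℂ (dslope P p) p := by
        obtain ⟨q, hq⟩ := (analyticOnNhd_univ_iff_differentiable.mpr hP) p (Set.mem_univ p)
        exact (HasFPowerSeriesAt.has_fpower_series_dslope_fslope hq).analyticAt.differentiableAt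
      have hPpne : dslope P p p ≠ 0 := by rw [dslope_same]; exact hsimple p hp
      have hgd : DifferentiableAt ℂ g p := hDsl.div hPsl hPpne
      have hcont : ContinuousAt (dslope P p) p := continuousAt_dslope_same.mpr (hP p)
      have hev0 : ∀ᶠ v in 𝓝 p, dslope P p v ≠ 0 := hcont.eventually_ne hPpne
      have hev : (fun v => if P v = 0 then deriv D v / deriv P v else D v / P v) =ᶠ[𝓝 p] g := by
        filter_upwards [hev0] with v hv
        by_cases hvp : v = p
        · subst hvp
          simp only [if_pos hp, hgdef, dslope_same]
        · have hPv : P v ≠ 0 := by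
            have := sub_smul_dslope P p v
            rw [hp, sub_zero] at this
            rw [← this]
            simp only [smul_eq_mul]
            exact mul_ne_zero (sub_ne_zero.mpr hvp) hv
          simp only [if_neg hPv, hgdef]
          rw [dslope_of_ne D hvp, dslope_of_ne P hvp]
          simp only [slope_def_field, hzero p hp, hp, sub_zero]
          have hne : v - p ≠ 0 := sub_ne_zero.mpr hvp
          field_simp
      exact (hev.differentiableAt_iff).mpr hgd
    · have hev : (fun v => if P v = 0 then deriv D v / deriv P v else D v / P v)
          =ᶠ[𝓝 p] fun v => D v / P v := by
        filter_upwards [(hP.continuous.continuousAt).eventually_ne hp] with v hv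
        simp [if_neg hv]
      exact (hev.differentiableAt_iff).mpr ((hD p).div (hP p) hp)
  · intro v hv
    simp [if_neg hv]


lemma prod_theta_shift_one {θ : ℂ → ℂ} (hm1 : ∀ x, θ (x - 1) = -θ x)
    {m : ℕ} (s : Finset (Fin m)) (x : Fin m → ℂ) :
    ∏ j ∈ s, θ (x j - 1) = (-1) ^ s.card * ∏ j ∈ s, θ (x j) := by
  have h : ∀ j ∈ s, θ (x j - 1) = (-1) * θ (x j) := fun j _ => by rw [hm1]; ring
  rw [Finset.prod_congr rfl h, Finset.prod_mul_distrib, Finset.prod_const]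


lemma prod_theta_shift_tau {θ : ℂ → ℂ} {τ : ℂ}
    (hmτ : ∀ x, θ (x - τ) =
      -Complex.exp (2 * (Real.pi : ℂ) * Complex.I * x - (Real.pi : ℂ) * Complex.I * τ) * θ x)
    {m : ℕ} (s : Finset (Fin m)) (x : Fin m → ℂ) :
    ∏ j ∈ s, θ (x j - τ) =
      (-1) ^ s.card *
        Complex.exp (∑ j ∈ s, (2 * (Real.pi : ℂ) * Complex.I * (x j)
          - (Real.pi : ℂ) * Complex.I * τ)) * ∏ j ∈ s, θ (x j) := by
  have h : ∀ j ∈ s, θ (x j - τ) = (-1) * (Complex.exp (2 * (Real.pi : ℂ) * Complex.I * (x j)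
      - (Real.pi : ℂ) * Complex.I * τ) * θ (x j)) := fun j _ => by rw [hmτ]; ring
  rw [Finset.prod_congr rfl h, Finset.prod_mul_distrib, Finset.prod_mul_distrib,
    Finset.prod_const, Complex.exp_sum]
  ring


end ThetaAux

open ThetaAux

/-- theta-function addition formula
`∏_i G_{λ_i}(u_i - v) = Σ_i (∏_{j≠i} G_{λ_j}(u_j - u_i)) · G_{λ_0}(u_i - v)`,
where `λ_0 = Σ_i λ_i`. -/

theorem theta_addition_formula
    (τ : ℂ) (hτ : 0 < τ.im)
    (θ : ℂ → ℂ) (hθdiff : Differentiable ℂ θ)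
    (hθ1 : ∀ x : ℂ, θ (x + 1) = -θ x)
    (hθτ : ∀ x : ℂ, θ (x + τ) =
      -Complex.exp (-(2 * (Real.pi : ℂ) * Complex.I * x) - (Real.pi : ℂ) * Complex.I * τ) * θ x)
    (hθ0 : deriv θ 0 = 1)
    (hθzero : ∀ x : ℂ, θ x = 0 ↔ x ∈ latticeGamma τ)
    (hθsimple : ∀ x ∈ latticeGamma τ, deriv θ x ≠ 0)
    (n : ℕ) (hn : 1 ≤ n) (lam : Fin n → ℂ)
    (hlam : ∀ i, lam i ∉ latticeGamma τ)
    (hlam0 : (∑ i, lam i) ∉ latticeGamma τ)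
    (u : Fin n → ℂ) (v : ℂ)
    (hu : ∀ i j : Fin n, i ≠ j → u i - u j ∉ latticeGamma τ)
    (huv : ∀ i, u i - v ∉ latticeGamma τ) :
    (∏ i : Fin n, Gfun θ (lam i) (u i - v)) =
      ∑ i : Fin n, (∏ j ∈ Finset.univ.erase i, Gfun θ (lam j) (u j - u i)) *
        Gfun θ (∑ k, lam k) (u i - v) := by
  classical
  -- basic θ facts
  have hθne : ∀ x : ℂ, x ∉ latticeGamma τ → θ x ≠ 0 := fun x hx h => hx ((hθzero x).mp h)
  have hθ00 : θ 0 = 0 := (hθzero 0).mpr ⟨0, 0, by simp⟩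
  have hm1 : ∀ x : ℂ, θ (x - 1) = -θ x := by
    intro x
    have h := hθ1 (x - 1)
    rw [sub_add_cancel] at h
    linear_combination h
  have hmτ : ∀ x : ℂ, θ (x - τ) =
      -Complex.exp (2 * (Real.pi : ℂ) * Complex.I * x - (Real.pi : ℂ) * Complex.I * τ) * θ x := by
    intro x
    have h := hθτ (x - τ)
    rw [sub_add_cancel] at h
    have hE : Complex.exp (-(2 * (Real.pi : ℂ) * Complex.I * (x - τ))
        - (Real.pi : ℂ) * Complex.I * τ) ≠ 0 := Complex.exp_ne_zero _
    have h2 : θ (x - τ) = -(Complex.exp (-(2 * (Real.pi : ℂ) * Complex.I * (x - τ))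
        - (Real.pi : ℂ) * Complex.I * τ))⁻¹ * θ x := by
      rw [h]; field_simp
    rw [h2, ← Complex.exp_neg]
    congr 2
    ring
  -- abbreviations
  set lam0 : ℂ := ∑ k, lam k with hlam0def
  have hθlam0 : θ lam0 ≠ 0 := hθne _ hlam0
  have hθlam : ∀ i, θ (lam i) ≠ 0 := fun i => hθne _ (hlam i)
  have hθuv : ∀ i, θ (u i - v) ≠ 0 := fun i => hθne _ (huv i)
  have hθuu : ∀ i j, i ≠ j → θ (u i - u j) ≠ 0 := fun i j h => hθne _ (hu i j h)
  set Q : ℂ := ∏ i, θ (lam i) with hQdef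
  have hQne : Q ≠ 0 := Finset.prod_ne_zero_iff.mpr fun i _ => hθlam i
  set A : Fin n → ℂ := fun i => ∏ j ∈ Finset.univ.erase i, Gfun θ (lam j) (u j - u i) with hAdef
  set B : Fin n → ℂ := fun i => A i * Q / θ lam0 with hBdef
  set L : ℂ → ℂ := fun w => ∏ i, θ (u i - w + lam i) with hLdef
  set Pf : ℂ → ℂ := fun w => ∏ i, θ (u i - w) with hPdef
  set R : ℂ → ℂ := fun w => ∑ i, B i * θ (u i - w + lam0) *
    ∏ j ∈ Finset.univ.erase i, θ (u j - w) with hRdef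
  set Df : ℂ → ℂ := fun w => L w - R w with hDdef
  set U : ℂ := ∑ i, u i with hUdef
  set N : ℂ → ℂ := fun w => (-1) ^ n *
    Complex.exp (2 * (Real.pi : ℂ) * Complex.I * (U + lam0 - n * w)
      - n * ((Real.pi : ℂ) * Complex.I * τ) - 2 * (Real.pi : ℂ) * Complex.I * lam0) with hNdef
  set c : ℂ := Complex.exp (2 * (Real.pi : ℂ) * Complex.I * lam0) with hcdef
  have hcne : c ≠ 0 := Complex.exp_ne_zero _
  have hsgn : ((-1 : ℂ)) ^ n ≠ 0 := pow_ne_zero _ (by norm_num)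
  have hNne : ∀ w, N w ≠ 0 := fun w => mul_ne_zero hsgn (Complex.exp_ne_zero _)
  have hcard : (Finset.univ : Finset (Fin n)).card = n := by simp
  have hcarde : ∀ i : Fin n, ((Finset.univ : Finset (Fin n)).erase i).card = n - 1 := by
    intro i; rw [Finset.card_erase_of_mem (Finset.mem_univ i)]; simp
  have hsign : ((-1 : ℂ)) * (-1) ^ (n - 1) = (-1) ^ n := by
    rw [← pow_succ']; congr 1; omega
  -- differentiability
  have hθA : ∀ a b : ℂ, Differentiable ℂ (fun w : ℂ => θ (a - w + b)) := fun a b =>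
    hθdiff.comp (((differentiable_const a).sub differentiable_id).add_const b)
  have hθS : ∀ a : ℂ, Differentiable ℂ (fun w : ℂ => θ (a - w)) := fun a =>
    hθdiff.comp ((differentiable_const a).sub differentiable_id)
  have hLdiff : Differentiable ℂ L := by
    rw [hLdef]; intro w
    exact DifferentiableAt.fun_finsetProd fun i _ => (hθA (u i) (lam i)).differentiableAt
  have hPfdiff : Differentiable ℂ Pf := by
    rw [hPdef]; intro w
    exact DifferentiableAt.fun_finsetProd fun i _ => (hθS (u i)).differentiableAt
  have hRdiff : Differentiable ℂ R := by
    rw [hRdef]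
    apply Differentiable.fun_sum
    intro i _
    exact ((differentiable_const (B i)).mul (hθA (u i) lam0)).mul
      (fun w => DifferentiableAt.fun_finsetProd fun j _ => (hθS (u j)).differentiableAt)
  have hDfdiff : Differentiable ℂ Df := hLdiff.sub hRdiff
  -- shift identities
  have hL1 : ∀ w, L (w + 1) = (-1) ^ n * L w := by
    intro w
    simp only [hLdef]
    calc ∏ i, θ (u i - (w + 1) + lam i) = ∏ i, θ ((u i - w + lam i) - 1) := by
          apply Finset.prod_congr rfl; intro i _; congr 1; ring
      _ = (-1) ^ (Finset.univ : Finset (Fin n)).card * ∏ i, θ (u i - w + lam i) :=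
          prod_theta_shift_one hm1 _ _
      _ = (-1) ^ n * ∏ i, θ (u i - w + lam i) := by rw [hcard]
  have hP1 : ∀ w, Pf (w + 1) = (-1) ^ n * Pf w := by
    intro w
    simp only [hPdef]
    calc ∏ i, θ (u i - (w + 1)) = ∏ i, θ ((u i - w) - 1) := by
          apply Finset.prod_congr rfl; intro i _; congr 1; ring
      _ = (-1) ^ (Finset.univ : Finset (Fin n)).card * ∏ i, θ (u i - w) :=
          prod_theta_shift_one hm1 _ _
      _ = (-1) ^ n * ∏ i, θ (u i - w) := by rw [hcard]
  have hR1 : ∀ w, R (w + 1) = (-1) ^ n * R w := by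
    intro w
    simp only [hRdef]
    rw [Finset.mul_sum]
    apply Finset.sum_congr rfl
    intro i _
    have e1 : u i - (w + 1) + lam0 = (u i - w + lam0) - 1 := by ring
    have e2 : ∏ j ∈ Finset.univ.erase i, θ (u j - (w + 1)) =
        ∏ j ∈ Finset.univ.erase i, θ ((u j - w) - 1) := by
      apply Finset.prod_congr rfl; intro j _; congr 1; ring
    rw [e1, hm1, e2, prod_theta_shift_one hm1, hcarde i]
    rw [← hsign]; ring
  have hLτ : ∀ w, L (w + τ) = c * N w * L w := by
    intro w
    simp only [hLdef]
    have hs : ∑ i, (2 * (Real.pi : ℂ) * I * (u i - w + lam i) - (Real.pi : ℂ) * I * τ)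
        = 2 * (Real.pi : ℂ) * I * (U + lam0 - n * w) - n * ((Real.pi : ℂ) * I * τ) := by
      rw [Finset.sum_sub_distrib, Finset.sum_const, hcard, ← Finset.mul_sum]
      have h1 : ∑ i, (u i - w + lam i) = U + lam0 - n * w := by
        rw [Finset.sum_add_distrib, Finset.sum_sub_distrib, Finset.sum_const, hcard,
          ← hUdef, ← hlam0def]
        simp only [nsmul_eq_mul]; ring
      rw [h1]
      all_goals simp only [nsmul_eq_mul]
      all_goals ring
    calc ∏ i, θ (u i - (w + τ) + lam i) = ∏ i, θ ((u i - w + lam i) - τ) := by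
          apply Finset.prod_congr rfl; intro i _; congr 1; ring
      _ = (-1) ^ (Finset.univ : Finset (Fin n)).card *
            Complex.exp (∑ i, (2 * (Real.pi : ℂ) * I * (u i - w + lam i)
              - (Real.pi : ℂ) * I * τ)) * ∏ i, θ (u i - w + lam i) :=
          prod_theta_shift_tau hmτ _ _
      _ = c * N w * ∏ i, θ (u i - w + lam i) := by
          rw [hcard, hs]
          simp only [hNdef, hcdef]
          have hexp : Complex.exp (2 * (Real.pi : ℂ) * I * lam0) *
              Complex.exp (2 * (Real.pi : ℂ) * I * (U + lam0 - n * w)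
                - n * ((Real.pi : ℂ) * I * τ) - 2 * (Real.pi : ℂ) * I * lam0)
              = Complex.exp (2 * (Real.pi : ℂ) * I * (U + lam0 - n * w)
                - n * ((Real.pi : ℂ) * I * τ)) := by
            rw [← Complex.exp_add]; congr 1; ring
          linear_combination (-((-1 : ℂ) ^ n) * ∏ i, θ (u i - w + lam i)) * hexp
  have hPτ : ∀ w, Pf (w + τ) = N w * Pf w := by
    intro w
    simp only [hPdef]
    have hs : ∑ i, (2 * (Real.pi : ℂ) * I * (u i - w) - (Real.pi : ℂ) * I * τ)
        = 2 * (Real.pi : ℂ) * I * (U + lam0 - n * w) - n * ((Real.pi : ℂ) * I * τ)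
          - 2 * (Real.pi : ℂ) * I * lam0 := by
      rw [Finset.sum_sub_distrib, Finset.sum_const, hcard, ← Finset.mul_sum]
      have h1 : ∑ i, (u i - w) = U - n * w := by
        rw [Finset.sum_sub_distrib, Finset.sum_const, hcard, ← hUdef]
        simp only [nsmul_eq_mul]
      rw [h1]
      all_goals simp only [nsmul_eq_mul]
      all_goals ring
    calc ∏ i, θ (u i - (w + τ)) = ∏ i, θ ((u i - w) - τ) := by
          apply Finset.prod_congr rfl; intro i _; congr 1; ring
      _ = (-1) ^ (Finset.univ : Finset (Fin n)).card *
            Complex.exp (∑ i, (2 * (Real.pi : ℂ) * I * (u i - w)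
              - (Real.pi : ℂ) * I * τ)) * ∏ i, θ (u i - w) :=
          prod_theta_shift_tau hmτ _ _
      _ = N w * ∏ i, θ (u i - w) := by
          rw [hcard, hs]
          all_goals simp only [hNdef]
  have hncast : ((n - 1 : ℕ) : ℂ) = (n : ℂ) - 1 := by
    have h := Nat.cast_sub (R := ℂ) hn
    simpa using h
  have hRτ : ∀ w, R (w + τ) = c * N w * R w := by
    intro w
    simp only [hRdef]
    rw [Finset.mul_sum]
    apply Finset.sum_congr rfl
    intro i _
    have hUe : ∑ j ∈ Finset.univ.erase i, u j = U - u i := by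
      have h := Finset.add_sum_erase Finset.univ u (Finset.mem_univ i)
      rw [← hUdef] at h
      linear_combination h
    have e1 : u i - (w + τ) + lam0 = (u i - w + lam0) - τ := by ring
    have e2 : ∏ j ∈ Finset.univ.erase i, θ (u j - (w + τ)) =
        ∏ j ∈ Finset.univ.erase i, θ ((u j - w) - τ) := by
      apply Finset.prod_congr rfl; intro j _; congr 1; ring
    have hsum2 : ∑ j ∈ Finset.univ.erase i, (2 * (Real.pi : ℂ) * I * (u j - w)
        - (Real.pi : ℂ) * I * τ)
        = 2 * (Real.pi : ℂ) * I * ((U - u i) - ((n : ℂ) - 1) * w)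
          - ((n : ℂ) - 1) * ((Real.pi : ℂ) * I * τ) := by
      rw [Finset.sum_sub_distrib, Finset.sum_const, hcarde i, ← Finset.mul_sum,
        Finset.sum_sub_distrib, Finset.sum_const, hcarde i, hUe]
      all_goals simp only [nsmul_eq_mul, hncast]
      all_goals ring
    rw [e1, hmτ, e2, prod_theta_shift_tau hmτ, hcarde i, hsum2]
    have hexp : Complex.exp (2 * (Real.pi : ℂ) * I * (u i - w + lam0) - (Real.pi : ℂ) * I * τ) *
        Complex.exp (2 * (Real.pi : ℂ) * I * ((U - u i) - ((n : ℂ) - 1) * w)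
          - ((n : ℂ) - 1) * ((Real.pi : ℂ) * I * τ))
        = Complex.exp (2 * (Real.pi : ℂ) * I * lam0) *
          Complex.exp (2 * (Real.pi : ℂ) * I * (U + lam0 - n * w)
            - n * ((Real.pi : ℂ) * I * τ) - 2 * (Real.pi : ℂ) * I * lam0) := by
      rw [← Complex.exp_add, ← Complex.exp_add]
      congr 1
      ring
    simp only [hNdef, hcdef]
    rw [← hsign]
    linear_combination ((-1 : ℂ) * (-1) ^ (n - 1) * B i * θ (u i - w + lam0) *
      ∏ j ∈ Finset.univ.erase i, θ (u j - w)) * hexp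
  have hD1 : ∀ w, Df (w + 1) = (-1) ^ n * Df w := by
    intro w; simp only [hDdef]; rw [hL1, hR1]; ring
  have hDτ : ∀ w, Df (w + τ) = c * N w * Df w := by
    intro w; simp only [hDdef]; rw [hLτ, hRτ]; ring
  -- zero at the points u k
  have hDuk : ∀ k, Df (u k) = 0 := by
    intro k
    have hRuk : R (u k) = B k * θ lam0 * ∏ j ∈ Finset.univ.erase k, θ (u j - u k) := by
      simp only [hRdef]
      rw [Finset.sum_eq_single k]
      · rw [show u k - u k + lam0 = lam0 from by ring]
      · intro i _ hik
        have hkmem : k ∈ Finset.univ.erase i :=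
          Finset.mem_erase.mpr ⟨Ne.symm hik, Finset.mem_univ k⟩
        rw [Finset.prod_eq_zero hkmem (by rw [sub_self]; exact hθ00)]
        ring
      · intro h; exact absurd (Finset.mem_univ k) h
    have hLuk : L (u k) = θ (lam k) * ∏ j ∈ Finset.univ.erase k, θ (u j - u k + lam j) := by
      simp only [hLdef]
      rw [← Finset.mul_prod_erase _ _ (Finset.mem_univ k)]
      rw [show u k - u k + lam k = lam k from by ring]
    have hQk : Q = θ (lam k) * ∏ j ∈ Finset.univ.erase k, θ (lam j) := by
      simp only [hQdef]
      exact (Finset.mul_prod_erase _ _ (Finset.mem_univ k)).symm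
    have hBk : B k * θ lam0 = A k * Q := by
      simp only [hBdef]
      rw [div_mul_cancel₀ _ hθlam0]
    have key : A k * Q * ∏ j ∈ Finset.univ.erase k, θ (u j - u k)
        = θ (lam k) * ∏ j ∈ Finset.univ.erase k, θ (u j - u k + lam j) := by
      rw [hQk]
      simp only [hAdef]
      have step1 : (∏ j ∈ Finset.univ.erase k, Gfun θ (lam j) (u j - u k)) *
          (θ (lam k) * ∏ j ∈ Finset.univ.erase k, θ (lam j)) *
          ∏ j ∈ Finset.univ.erase k, θ (u j - u k)
          = θ (lam k) * ∏ j ∈ Finset.univ.erase k,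
              (Gfun θ (lam j) (u j - u k) * θ (lam j) * θ (u j - u k)) := by
        rw [Finset.prod_mul_distrib, Finset.prod_mul_distrib]
        ring
      rw [step1]
      congr 1
      apply Finset.prod_congr rfl
      intro j hj
      have hjk : j ≠ k := (Finset.mem_erase.mp hj).1
      have h1 := hθuu j k hjk
      have h2 := hθlam j
      simp only [Gfun]
      field_simp
    show L (u k) - R (u k) = 0
    rw [hRuk, hLuk, hBk, key]
    ring
  -- propagation of zeros over the lattice
  have hDint : ∀ (a : ℤ) (w : ℂ), Df w = 0 → Df (w + a) = 0 := by
    intro a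
    induction a using Int.induction_on with
    | zero => intro w h; simpa using h
    | succ k ih =>
        intro w h
        have h3 : Df ((w + ((k : ℤ) : ℂ)) + 1) = 0 := by rw [hD1, ih w h, mul_zero]
        convert h3 using 2
        push_cast; ring
    | pred k ih =>
        intro w h
        have h2 := hD1 ((w + ((-k : ℤ) : ℂ)) - 1)
        rw [sub_add_cancel, ih w h] at h2
        have h4 : Df ((w + ((-k : ℤ) : ℂ)) - 1) = 0 := by
          rcases mul_eq_zero.mp h2.symm with h' | h'
          · exact absurd h' hsgn
          · exact h'
        convert h4 using 2
        push_cast; ring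
  have hDintτ : ∀ (b : ℤ) (w : ℂ), Df w = 0 → Df (w + b * τ) = 0 := by
    intro b
    induction b using Int.induction_on with
    | zero => intro w h; simpa using h
    | succ k ih =>
        intro w h
        have h3 : Df ((w + ((k : ℤ) : ℂ) * τ) + τ) = 0 := by rw [hDτ, ih w h, mul_zero]
        convert h3 using 2
        push_cast; ring
    | pred k ih =>
        intro w h
        have h2 := hDτ ((w + ((-k : ℤ) : ℂ) * τ) - τ)
        rw [sub_add_cancel, ih w h] at h2
        have h4 : Df ((w + ((-k : ℤ) : ℂ) * τ) - τ) = 0 := by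
          rcases mul_eq_zero.mp h2.symm with h' | h'
          · exact absurd h' (mul_ne_zero hcne (hNne _))
          · exact h'
        convert h4 using 2
        push_cast; ring
  have hDP : ∀ p, Pf p = 0 → Df p = 0 := by
    intro p hp
    obtain ⟨i, -, hi⟩ := Finset.prod_eq_zero_iff.mp hp
    obtain ⟨a, b, hab⟩ := (hθzero _).mp hi
    have hp' : p = u i + ((-a : ℤ) : ℂ) + ((-b : ℤ) : ℂ) * τ := by push_cast; linear_combination -hab
    rw [hp']
    exact hDintτ (-b) _ (hDint (-a) _ (hDuk i))
  have hPsimple : ∀ p, Pf p = 0 → deriv Pf p ≠ 0 := by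
    intro p hp
    rw [hPdef] at hp
    obtain ⟨k, -, hk⟩ := Finset.prod_eq_zero_iff.mp hp
    have hother : ∀ j ∈ Finset.univ.erase k, θ (u j - p) ≠ 0 := by
      intro j hj h0
      have hjk : j ≠ k := (Finset.mem_erase.mp hj).1
      have h1 : u j - p ∈ latticeGamma τ := (hθzero _).mp h0
      have h2 : u k - p ∈ latticeGamma τ := (hθzero _).mp hk
      apply hu j k hjk
      have h3 := lat_sub h1 h2
      have e : u j - p - (u k - p) = u j - u k := by ring
      rwa [e] at h3
    have hhd : ∀ i : Fin n, HasDerivAt (fun w => θ (u i - w)) (-deriv θ (u i - p)) p := by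
      intro i
      have h1 : HasDerivAt (fun w : ℂ => u i - w) (-1) p := (hasDerivAt_id p).const_sub (u i)
      have h2 := (hθdiff (u i - p)).hasDerivAt
      have h3 := h2.comp p h1
      rw [mul_neg_one] at h3
      exact h3
    have hPder : HasDerivAt Pf
        (∑ i, (∏ j ∈ Finset.univ.erase i, θ (u j - p)) • (-deriv θ (u i - p))) p := by
      rw [hPdef]
      exact HasDerivAt.fun_finsetProd fun i _ => hhd i
    rw [hPder.deriv]
    rw [Finset.sum_eq_single k]
    · simp only [smul_eq_mul]
      exact mul_ne_zero (Finset.prod_ne_zero_iff.mpr hother)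
        (neg_ne_zero.mpr (hθsimple _ ((hθzero _).mp hk)))
    · intro i _ hik
      have hkmem : k ∈ Finset.univ.erase i :=
        Finset.mem_erase.mpr ⟨Ne.symm hik, Finset.mem_univ k⟩
      rw [Finset.prod_eq_zero hkmem hk, zero_smul]
    · intro h; exact absurd (Finset.mem_univ k) h
  -- the entire extension of Df / Pf
  obtain ⟨F, hFdiff, hFeq⟩ := ThetaAux.exists_entire_quotient hDfdiff hPfdiff hDP hPsimple
  have hPfv : Pf v ≠ 0 := by
    simp only [hPdef]
    exact Finset.prod_ne_zero_iff.mpr fun i _ => hθuv i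
  have hFan : AnalyticOnNhd ℂ F Set.univ := analyticOnNhd_univ_iff_differentiable.mpr hFdiff
  have hPcont : Continuous Pf := hPfdiff.continuous
  have hF1 : ∀ w, F (w + 1) = F w := by
    intro w
    have hGdiff : Differentiable ℂ (fun z => F (z + 1)) :=
      hFdiff.comp (differentiable_id.add_const 1)
    have hGan : AnalyticOnNhd ℂ (fun z => F (z + 1)) Set.univ :=
      analyticOnNhd_univ_iff_differentiable.mpr hGdiff
    have hPfv1 : Pf (v + 1) ≠ 0 := by rw [hP1 v]; exact mul_ne_zero hsgn hPfv
    have hev : (fun z => F (z + 1)) =ᶠ[𝓝 v] F := by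
      have e1 : ∀ᶠ z in 𝓝 v, Pf z ≠ 0 := hPcont.continuousAt.eventually_ne hPfv
      have e2 : ∀ᶠ z in 𝓝 v, Pf (z + 1) ≠ 0 := by
        have hc2 : ContinuousAt (fun z : ℂ => Pf (z + 1)) v :=
          (hPcont.comp (continuous_id.add continuous_const)).continuousAt
        exact hc2.eventually_ne hPfv1
      filter_upwards [e1, e2] with z h1 h2
      rw [hFeq _ h2, hFeq _ h1, hD1, hP1, mul_div_mul_left _ _ hsgn]
    exact hGan.eqOn_of_preconnected_of_eventuallyEq hFan isPreconnected_univ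
      (Set.mem_univ v) hev (Set.mem_univ w)
  have hFτ : ∀ w, F (w + τ) = c * F w := by
    intro w
    have hGdiff : Differentiable ℂ (fun z => F (z + τ)) :=
      hFdiff.comp (differentiable_id.add_const τ)
    have hGan : AnalyticOnNhd ℂ (fun z => F (z + τ)) Set.univ :=
      analyticOnNhd_univ_iff_differentiable.mpr hGdiff
    have hHan : AnalyticOnNhd ℂ (fun z => c * F z) Set.univ :=
      analyticOnNhd_univ_iff_differentiable.mpr ((differentiable_const c).mul hFdiff)
    have hPfvτ : Pf (v + τ) ≠ 0 := by rw [hPτ v]; exact mul_ne_zero (hNne v) hPfv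
    have hev : (fun z => F (z + τ)) =ᶠ[𝓝 v] (fun z => c * F z) := by
      have e1 : ∀ᶠ z in 𝓝 v, Pf z ≠ 0 := hPcont.continuousAt.eventually_ne hPfv
      have e2 : ∀ᶠ z in 𝓝 v, Pf (z + τ) ≠ 0 := by
        have hc2 : ContinuousAt (fun z : ℂ => Pf (z + τ)) v :=
          (hPcont.comp (continuous_id.add continuous_const)).continuousAt
        exact hc2.eventually_ne hPfvτ
      filter_upwards [e1, e2] with z h1 h2
      rw [hFeq _ h2, hFeq _ h1, hDτ, hPτ]
      rw [show c * N z * Df z = N z * (c * Df z) from by ring,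
        mul_div_mul_left _ _ (hNne z), mul_div_assoc]
    exact hGan.eqOn_of_preconnected_of_eventuallyEq hHan isPreconnected_univ
      (Set.mem_univ v) hev (Set.mem_univ w)
  have hFzero : ∀ w, F w = 0 :=
    ThetaAux.quasi_zero hτ hlam0 hFdiff hF1 (fun w => by rw [hFτ w, hcdef])
  have hDfv : Df v = 0 := by
    have h := hFeq v hPfv
    rw [hFzero v] at h
    rcases div_eq_zero_iff.mp h.symm with h' | h'
    · exact h'
    · exact absurd h' hPfv
  have hLR : L v = R v := by
    have h : L v - R v = 0 := hDfv
    exact sub_eq_zero.mp h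
  -- final algebra
  have hGoalL : ∏ i, Gfun θ (lam i) (u i - v) = L v / (Pf v * Q) := by
    simp only [Gfun, hLdef, hPdef, hQdef]
    rw [Finset.prod_div_distrib, Finset.prod_mul_distrib]
  have hGoalR : ∑ i, A i * Gfun θ lam0 (u i - v) = R v / (Pf v * Q) := by
    simp only [hRdef]
    rw [Finset.sum_div]
    apply Finset.sum_congr rfl
    intro i _
    have hsplit : Pf v = θ (u i - v) * ∏ j ∈ Finset.univ.erase i, θ (u j - v) := by
      simp only [hPdef]
      exact (Finset.mul_prod_erase _ _ (Finset.mem_univ i)).symm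
    have hprodne : (∏ j ∈ Finset.univ.erase i, θ (u j - v)) ≠ 0 :=
      Finset.prod_ne_zero_iff.mpr fun j _ => hθuv j
    simp only [Gfun, hBdef]
    rw [hsplit]
    set X := θ (u i - v + lam0) with hX
    set Y := θ (u i - v) with hY
    set Z := θ lam0 with hZ
    set E := ∏ j ∈ Finset.univ.erase i, θ (u j - v) with hE
    have hYne : Y ≠ 0 := hθuv i
    have hZne : Z ≠ 0 := hθlam0
    have hEne : E ≠ 0 := hprodne
    field_simp
  calc (∏ i, Gfun θ (lam i) (u i - v)) = L v / (Pf v * Q) := hGoalL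
    _ = R v / (Pf v * Q) := by rw [hLR]
    _ = ∑ i, A i * Gfun θ lam0 (u i - v) := hGoalR.symm


end
end
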